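/- arXiv:1909.10647 — 6 statements merged into one kernel-verified Lean document; each statement's English description precedes it below -/
import Mathlib

section
/- If G is ε-far from H-free, then there exists a coloring of the vertices of G with |V(H)| colors such that G contains at least (ε/(|E(H)|·|V(H)|^{|V(H)|}))·|V| pairwise edge-disjoint colored copies of H. -/
open SimpleGraph

section Aux

open Finset

/-- Greedy extraction of edge-disjoint copies of `H` in `G`, as long as the number of
deleted edges stays below `ε |V|`. -/
private lemma stmt2_greedy {V W : Type} [Fintype V] [Fintype W] [DecidableEq V] [DecidableEq W]
    (G : SimpleGraph V) (H : SimpleGraph W) [DecidableRel G.Adj] [DecidableRel H.Adj]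
    (ε : ℝ) (hH : 0 < H.edgeFinset.card)
    (hfar : ∀ F : Finset (Sym2 V), F ⊆ G.edgeFinset →
      (F.card : ℝ) ≤ ε * Fintype.card V →
      ∃ f : W ↪ V, ∀ a b, H.Adj a b → (G.deleteEdges (F : Set (Sym2 V))).Adj (f a) (f b)) :
    ∀ i : ℕ, (∀ j : ℕ, j < i → (j : ℝ) * H.edgeFinset.card ≤ ε * Fintype.card V) →
      ∃ D : Finset (W ↪ V), D.card = i ∧
        (∀ f ∈ D, ∀ a b, H.Adj a b → G.Adj (f a) (f b)) ∧
        (∀ f ∈ D, ∀ g ∈ D, f ≠ g →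
          Disjoint (H.edgeFinset.image (Sym2.map (f : W → V)))
                   (H.edgeFinset.image (Sym2.map (g : W → V)))) := by
  classical
  intro i
  induction i with
  | zero => exact fun _ => ⟨∅, by simp⟩
  | succ i ih =>
    intro hi
    obtain ⟨D, hcard, hgood, hdisj⟩ := ih (fun j hj => hi j (hj.trans (Nat.lt_succ_self i)))
    set F : Finset (Sym2 V) := D.biUnion (fun g => H.edgeFinset.image (Sym2.map (g : W → V))) with hF
    have hFsub : F ⊆ G.edgeFinset := by
      intro x hx
      simp only [hF, Finset.mem_biUnion, Finset.mem_image] at hx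
      obtain ⟨g, hg, y, hy, rfl⟩ := hx
      induction y using Sym2.ind with
      | _ a b =>
        rw [Sym2.map_pair_eq, mem_edgeFinset, mem_edgeSet]
        exact hgood g hg a b (by rwa [mem_edgeFinset, mem_edgeSet] at hy)
    have hFcard : (F.card : ℝ) ≤ ε * Fintype.card V := by
      have h1 : F.card ≤ i * H.edgeFinset.card := by
        calc F.card ≤ ∑ g ∈ D, (H.edgeFinset.image (Sym2.map (g : W → V))).card :=
              Finset.card_biUnion_le
          _ ≤ ∑ _g ∈ D, H.edgeFinset.card := Finset.sum_le_sum (fun g _ => Finset.card_image_le)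
          _ = i * H.edgeFinset.card := by rw [Finset.sum_const, hcard, smul_eq_mul]
      calc (F.card : ℝ) ≤ (i : ℝ) * H.edgeFinset.card := by exact_mod_cast h1
        _ ≤ ε * Fintype.card V := hi i (Nat.lt_succ_self i)
    obtain ⟨f, hf⟩ := hfar F hFsub hFcard
    have hfG : ∀ a b, H.Adj a b → G.Adj (f a) (f b) := by
      intro a b hab
      exact (deleteEdges_adj.1 (hf a b hab)).1
    have hfdisjF : Disjoint (H.edgeFinset.image (Sym2.map (f : W → V))) F := by
      rw [Finset.disjoint_left]
      intro x hx
      simp only [Finset.mem_image] at hx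
      obtain ⟨y, hy, rfl⟩ := hx
      induction y using Sym2.ind with
      | _ a b =>
        rw [Sym2.map_pair_eq]
        have := (deleteEdges_adj.1
          (hf a b (by rwa [mem_edgeFinset, mem_edgeSet] at hy))).2
        simpa using this
    have hfsubF : ∀ g ∈ D, (H.edgeFinset.image (Sym2.map (g : W → V))) ⊆ F := by
      intro g hg
      exact fun x hx => Finset.mem_biUnion.2 ⟨g, hg, hx⟩
    have hne : (H.edgeFinset.image (Sym2.map (f : W → V))).Nonempty :=
      Finset.Nonempty.image (Finset.card_pos.1 hH) _
    have hfD : f ∉ D := by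
      intro hfD
      have := hfdisjF.mono_right (hfsubF f hfD)
      rw [Finset.disjoint_self_iff_empty] at this
      exact hne.ne_empty this
    refine ⟨insert f D, by rw [Finset.card_insert_of_notMem hfD, hcard], ?_, ?_⟩
    · intro g hg
      rcases Finset.mem_insert.1 hg with rfl | hg
      · exact hfG
      · exact hgood g hg
    · intro g₁ hg₁ g₂ hg₂ hne12
      rcases Finset.mem_insert.1 hg₁ with h₁ | h₁ <;>
        rcases Finset.mem_insert.1 hg₂ with h₂ | h₂
      · exact absurd (h₁.trans h₂.symm) hne12
      · rw [h₁]; exact hfdisjF.mono_right (hfsubF g₂ h₂)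
      · rw [h₂]; exact (hfdisjF.mono_right (hfsubF g₁ h₁)).symm
      · exact hdisj g₁ h₁ g₂ h₂ hne12

/-- Counting: the number of colorings of `V` compatible with a given embedding is at least
`k^(n-k)`. -/
private lemma stmt2_count {V W : Type} [Fintype V] [Fintype W] [DecidableEq V] [DecidableEq W]
    (c : W → Fin (Fintype.card W)) (f : W ↪ V) :
    (Fintype.card W) ^ (Fintype.card V - Fintype.card W) ≤
      (Finset.univ.filter (fun χ : V → Fin (Fintype.card W) => ∀ a, χ (f a) = c a)).card := by
  classical
  set Φ : ({v : V // v ∉ Set.range (f : W → V)} → Fin (Fintype.card W)) →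
      (V → Fin (Fintype.card W)) :=
    fun h v => if hv : v ∈ Set.range (f : W → V) then c hv.choose else h ⟨v, hv⟩ with hΦ
  have hmem : ∀ h, Φ h ∈ Finset.univ.filter
      (fun χ : V → Fin (Fintype.card W) => ∀ a, χ (f a) = c a) := by
    intro h
    rw [Finset.mem_filter]
    refine ⟨Finset.mem_univ _, fun a => ?_⟩
    have hv : f a ∈ Set.range (f : W → V) := ⟨a, rfl⟩
    simp only [hΦ, dif_pos hv]
    exact congrArg c (f.injective hv.choose_spec)
  have hinj : Function.Injective Φ := by
    intro h₁ h₂ hEq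
    funext v
    have := congrFun hEq v.1
    simpa only [hΦ, dif_neg v.2] using this
  calc (Fintype.card W) ^ (Fintype.card V - Fintype.card W)
      = Fintype.card ({v : V // v ∉ Set.range (f : W → V)} → Fin (Fintype.card W)) := by
        rw [Fintype.card_fun, Fintype.card_fin]
        congr 1
        rw [Fintype.card_subtype_compl]
        congr 1
        exact Fintype.card_congr (Equiv.ofInjective (f : W → V) f.injective)
    _ ≤ _ := by
        rw [← Finset.card_univ]
        exact Finset.card_le_card_of_injOn Φ (fun h _ => hmem h) (hinj.injOn)

end Aux

/-- If `G` is `ε`-far from `H`-free, then there is a coloring of `V(G)` with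
`|V(H)|` colors such that `G` contains at least `ε|V|/(|E(H)|·|V(H)|^{|V(H)|})` pairwise
edge-disjoint colored copies of `H` (copies via a color-preserving embedding, for a fixed
assignment of distinct colors to the vertices of `H`). -/
theorem stmt2 {V W : Type} [Fintype V] [Fintype W] [DecidableEq V] [DecidableEq W]
    (G : SimpleGraph V) (H : SimpleGraph W) [DecidableRel G.Adj] [DecidableRel H.Adj]
    (ε : ℝ) (hε : 0 < ε) (hH : 0 < H.edgeFinset.card)
    (c : W → Fin (Fintype.card W)) (hc : Function.Injective c)
    (hfar : ∀ F : Finset (Sym2 V), F ⊆ G.edgeFinset →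
      (F.card : ℝ) ≤ ε * Fintype.card V →
      ∃ f : W ↪ V, ∀ a b, H.Adj a b → (G.deleteEdges (F : Set (Sym2 V))).Adj (f a) (f b)) :
    ∃ χ : V → Fin (Fintype.card W), ∃ D : Finset (W ↪ V),
      (∀ f ∈ D, (∀ a b, H.Adj a b → G.Adj (f a) (f b)) ∧ ∀ a, χ (f a) = c a) ∧
      (∀ f ∈ D, ∀ g ∈ D, f ≠ g →
        Disjoint (H.edgeFinset.image (Sym2.map (f : W → V)))
                 (H.edgeFinset.image (Sym2.map (g : W → V)))) ∧
      ε * Fintype.card V /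
          (H.edgeFinset.card * (Fintype.card W : ℝ) ^ (Fintype.card W)) ≤ (D.card : ℝ) := by
  classical
  have he0 : (0 : ℝ) < (H.edgeFinset.card : ℝ) := by exact_mod_cast hH
  have hn0 : (0 : ℝ) ≤ (Fintype.card V : ℝ) := by positivity
  set r : ℝ := ε * Fintype.card V / H.edgeFinset.card with hr
  have hr0 : 0 ≤ r := by positivity
  set N : ℕ := Nat.floor r + 1 with hN
  have hjN : ∀ j : ℕ, j < N → (j : ℝ) * H.edgeFinset.card ≤ ε * Fintype.card V := by
    intro j hj
    have hj' : j ≤ Nat.floor r := Nat.lt_succ_iff.1 hj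
    have : (j : ℝ) ≤ r := le_trans (by exact_mod_cast hj') (Nat.floor_le hr0)
    rw [hr, le_div_iff₀ he0] at this
    exact this
  obtain ⟨D0, hcard0, hgood, hdisj⟩ := stmt2_greedy G H ε hH hfar N hjN
  -- W is nonempty, hence so is Fin (card W)
  have hWne : Nonempty W := by
    obtain ⟨y, hy⟩ := Finset.card_pos.1 hH
    induction y using Sym2.ind with
    | _ a b => exact ⟨a⟩
  have hk0 : 0 < Fintype.card W := Fintype.card_pos
  -- D0 is nonempty, giving an embedding W ↪ V, hence card W ≤ card V
  have hD0ne : D0.Nonempty := Finset.card_pos.1 (by rw [hcard0]; exact Nat.succ_pos _)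
  obtain ⟨f0, hf0⟩ := hD0ne
  have hkn : Fintype.card W ≤ Fintype.card V := Fintype.card_le_of_embedding f0
  -- averaging over colorings
  have hsum : ∑ χ : V → Fin (Fintype.card W),
        (D0.filter (fun f => ∀ a, χ (f a) = c a)).card
      = ∑ f ∈ D0, (Finset.univ.filter
          (fun χ : V → Fin (Fintype.card W) => ∀ a, χ (f a) = c a)).card := by
    simp only [Finset.card_filter]
    exact Finset.sum_comm
  have hlow : N * (Fintype.card W) ^ (Fintype.card V - Fintype.card W)
      ≤ ∑ χ : V → Fin (Fintype.card W), (D0.filter (fun f => ∀ a, χ (f a) = c a)).card := by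
    rw [hsum]
    calc N * (Fintype.card W) ^ (Fintype.card V - Fintype.card W)
        = ∑ _f ∈ D0, (Fintype.card W) ^ (Fintype.card V - Fintype.card W) := by
          rw [Finset.sum_const, hcard0, smul_eq_mul]
      _ ≤ _ := Finset.sum_le_sum (fun f _ => stmt2_count c f)
  have hpow : (Fintype.card W) ^ (Fintype.card V - Fintype.card W) *
      (Fintype.card W) ^ (Fintype.card W) = (Fintype.card W) ^ (Fintype.card V) := by
    rw [← pow_add, Nat.sub_add_cancel hkn]
  -- pigeonhole: some coloring catches at least N / k^k copies
  have hpig : ∃ χ : V → Fin (Fintype.card W),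
      N ≤ (D0.filter (fun f => ∀ a, χ (f a) = c a)).card * (Fintype.card W) ^ (Fintype.card W) := by
    have huniv : (Finset.univ : Finset (V → Fin (Fintype.card W))).Nonempty :=
      Finset.univ_nonempty
    have hsums : ∑ _χ : V → Fin (Fintype.card W), N
        ≤ ∑ χ : V → Fin (Fintype.card W),
            (D0.filter (fun f => ∀ a, χ (f a) = c a)).card * (Fintype.card W) ^ (Fintype.card W) := by
      rw [← Finset.sum_mul, Finset.sum_const, Finset.card_univ, Fintype.card_fun,
        Fintype.card_fin, smul_eq_mul]
      calc (Fintype.card W) ^ (Fintype.card V) * N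
          = (N * (Fintype.card W) ^ (Fintype.card V - Fintype.card W)) *
              (Fintype.card W) ^ (Fintype.card W) := by rw [mul_assoc, hpow]; ring
        _ ≤ _ := Nat.mul_le_mul_right _ hlow
    obtain ⟨χ, _, hχ⟩ := Finset.exists_le_of_sum_le huniv hsums
    exact ⟨χ, hχ⟩
  obtain ⟨χ, hχ⟩ := hpig
  refine ⟨χ, D0.filter (fun f => ∀ a, χ (f a) = c a), ?_, ?_, ?_⟩
  · intro f hf
    rw [Finset.mem_filter] at hf
    exact ⟨hgood f hf.1, hf.2⟩
  · intro f hf g hg hfg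
    rw [Finset.mem_filter] at hf hg
    exact hdisj f hf.1 g hg.1 hfg
  · -- the numeric bound
    have hkk : (0 : ℝ) < (Fintype.card W : ℝ) ^ (Fintype.card W) := by positivity
    have h1 : r < (N : ℝ) := by
      rw [hN]
      push_cast
      exact Nat.lt_floor_add_one r
    have h2 : (N : ℝ) ≤ ((D0.filter (fun f => ∀ a, χ (f a) = c a)).card : ℝ) *
        (Fintype.card W : ℝ) ^ (Fintype.card W) := by exact_mod_cast hχ
    rw [← div_div, ← hr, div_le_iff₀ hkk]
    exact le_trans (le_of_lt h1) h2
end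

section
/- Let G = (V,E) be a simple planar graph and let D be a collection of pairwise edge-disjoint copies of H in G with |D| = α|V| for some α > 0. Then there exists a subset D' ⊆ D with |D'| ≥ (α/2)|V| such that in the graph G[D'] induced by the edges of the copies in D', every vertex v either has degree 0 or has degree greater than (α/12)·deg_G(v). -/
set_option linter.unusedSectionVars false
set_option linter.unusedVariables false
set_option maxHeartbeats 1600000

def GraphIsMinor {V W : Type} (G : SimpleGraph V) (H : SimpleGraph W) : Prop :=
  ∃ B : W → Set V,
    (∀ w, (B w).Nonempty) ∧
    (∀ w, (G.induce (B w)).Connected) ∧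
    (∀ w₁ w₂, w₁ ≠ w₂ → Disjoint (B w₁) (B w₂)) ∧
    (∀ w₁ w₂, H.Adj w₁ w₂ → ∃ u ∈ B w₁, ∃ v ∈ B w₂, G.Adj u v)

def GraphIsPlanar {V : Type} (G : SimpleGraph V) : Prop :=
  ¬ GraphIsMinor G (⊤ : SimpleGraph (Fin 5)) ∧
  ¬ GraphIsMinor G (completeBipartiteGraph (Fin 3) (Fin 3))

open SimpleGraph

section ALL
variable {V : Type} [DecidableEq V]

/-- Reachability within a set, via ambient walks whose support stays in the set. -/
def ReachIn (G : SimpleGraph V) (T : Set V) (x y : V) : Prop :=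
  ∃ w : G.Walk x y, ∀ z ∈ w.support, z ∈ T

lemma reachIn_refl {G : SimpleGraph V} {T : Set V} {x : V} (hx : x ∈ T) :
    ReachIn G T x x := ⟨.nil, by simp [hx]⟩

lemma reachIn_symm {G : SimpleGraph V} {T : Set V} {x y : V}
    (h : ReachIn G T x y) : ReachIn G T y x := by
  obtain ⟨w, hw⟩ := h
  exact ⟨w.reverse, by simpa [SimpleGraph.Walk.support_reverse] using hw⟩

lemma reachIn_trans {G : SimpleGraph V} {T : Set V} {x y z : V}
    (h : ReachIn G T x y) (h' : ReachIn G T y z) : ReachIn G T x z := by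
  obtain ⟨w, hw⟩ := h; obtain ⟨w', hw'⟩ := h'
  refine ⟨w.append w', fun u hu => ?_⟩
  rw [SimpleGraph.Walk.support_append] at hu
  rcases List.mem_append.1 hu with h | h
  · exact hw _ h
  · exact hw' _ (List.mem_of_mem_tail h)

lemma reachIn_single {G : SimpleGraph V} {T : Set V} {x y : V}
    (hx : x ∈ T) (hy : y ∈ T) (h : G.Adj x y) : ReachIn G T x y :=
  ⟨.cons h .nil, by intro z hz; simp at hz; rcases hz with rfl | rfl <;> assumption⟩

lemma reachIn_mem_right {G : SimpleGraph V} {T : Set V} {x y : V}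
    (h : ReachIn G T x y) : y ∈ T := by
  obtain ⟨w, hw⟩ := h; exact hw _ w.end_mem_support

lemma reachIn_transfer {G G' : SimpleGraph V} {T T' : Set V} {x y : V}
    (h : ReachIn G T x y) (hTT : T ⊆ T')
    (hstep : ∀ a b, a ∈ T → b ∈ T → G.Adj a b → ReachIn G' T' a b) :
    ReachIn G' T' x y := by
  obtain ⟨w, hw⟩ := h
  induction w with
  | nil => exact reachIn_refl (hTT (hw _ (by simp)))
  | @cons a b c hab p ih =>
    have ha : a ∈ T := hw _ (by simp)
    have hb : b ∈ T := hw _ (by simp)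
    exact reachIn_trans (hstep a b ha hb hab) (ih (fun z hz => hw z (by simp [hz])))

lemma reachIn_of_induce_reachable {G : SimpleGraph V} {B : Set V} {x y : B}
    (h : (G.induce B).Reachable x y) : ReachIn G B x y := by
  obtain ⟨w⟩ := h
  induction w with
  | nil => exact reachIn_refl (Subtype.coe_prop _)
  | @cons a b c hab p ih =>
    exact reachIn_trans (reachIn_single a.2 b.2 hab) ih

lemma induce_reachable_of_reachIn {G : SimpleGraph V} {B : Set V} {x y : V}
    (h : ReachIn G B x y) : ∃ (hx : x ∈ B) (hy : y ∈ B),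
      (G.induce B).Reachable ⟨x, hx⟩ ⟨y, hy⟩ := by
  obtain ⟨w, hw⟩ := h
  refine ⟨hw _ w.start_mem_support, hw _ w.end_mem_support, ?_⟩
  induction w with
  | nil => exact Reachable.refl _
  | @cons a b c hab p ih =>
    have ha : a ∈ B := hw _ (by simp)
    have hb : b ∈ B := hw _ (by simp)
    have step : (G.induce B).Adj ⟨a, ha⟩ ⟨b, hb⟩ := by simpa using hab
    exact (step.reachable).trans (ih (fun z hz => hw z (by simp [hz])))

lemma induce_connected_of_reachIn {G : SimpleGraph V} {B : Set V}
    (hne : B.Nonempty) (h : ∀ x ∈ B, ∀ y ∈ B, ReachIn G B x y) :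
    (G.induce B).Connected := by
  rw [SimpleGraph.connected_iff]
  refine ⟨fun x y => ?_, ⟨⟨hne.choose, hne.choose_spec⟩⟩⟩
  obtain ⟨_, _, hr⟩ := induce_reachable_of_reachIn (h x x.2 y y.2)
  exact hr

lemma reachIn_of_induce_connected {G : SimpleGraph V} {B : Set V}
    (h : (G.induce B).Connected) {x y : V} (hx : x ∈ B) (hy : y ∈ B) :
    ReachIn G B x y :=
  reachIn_of_induce_reachable (h.preconnected ⟨x, hx⟩ ⟨y, hy⟩)

def MinorOn {W : Type} (G : SimpleGraph V) (K : SimpleGraph W) (S : Set V) : Prop :=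
  ∃ B : W → Set V,
    (∀ w, B w ⊆ S) ∧
    (∀ w, (B w).Nonempty) ∧
    (∀ w, (G.induce (B w)).Connected) ∧
    (∀ w₁ w₂, w₁ ≠ w₂ → Disjoint (B w₁) (B w₂)) ∧
    (∀ w₁ w₂, K.Adj w₁ w₂ → ∃ u ∈ B w₁, ∃ v ∈ B w₂, G.Adj u v)

lemma MinorOn.graphIsMinor {W : Type} {G : SimpleGraph V} {K : SimpleGraph W} {S : Set V}
    (h : MinorOn G K S) : GraphIsMinor G K := by
  obtain ⟨B, _, h1, h2, h3, h4⟩ := h; exact ⟨B, h1, h2, h3, h4⟩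

lemma MinorOn.mono_set {W : Type} {G : SimpleGraph V} {K : SimpleGraph W} {S S' : Set V}
    (hS : S ⊆ S') (h : MinorOn G K S) : MinorOn G K S' := by
  obtain ⟨B, h0, h1, h2, h3, h4⟩ := h
  exact ⟨B, fun w => (h0 w).trans hS, h1, h2, h3, h4⟩

lemma induce_le_induce_of_le {G G' : SimpleGraph V} (h : G ≤ G') (B : Set V) :
    G.induce B ≤ G'.induce B := by
  intro a b hab
  simp only [comap_adj, Function.Embedding.coe_subtype] at hab ⊢
  exact h hab

lemma MinorOn.mono_graph {W : Type} {G G' : SimpleGraph V} {K : SimpleGraph W} {S : Set V}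
    (hG : G ≤ G') (h : MinorOn G K S) : MinorOn G' K S := by
  obtain ⟨B, h0, h1, h2, h3, h4⟩ := h
  refine ⟨B, h0, h1, fun w => (h2 w).mono (induce_le_induce_of_le hG _), h3,
    fun w₁ w₂ hw => ?_⟩
  obtain ⟨u, hu, v, hv, huv⟩ := h4 w₁ w₂ hw
  exact ⟨u, hu, v, hv, hG huv⟩

lemma GraphIsMinor.mono_graph {W : Type} {G G' : SimpleGraph V} {K : SimpleGraph W}
    (hG : G ≤ G') (h : GraphIsMinor G K) : GraphIsMinor G' K := by
  obtain ⟨B, h1, h2, h3, h4⟩ := h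
  refine ⟨B, h1, fun w => (h2 w).mono (induce_le_induce_of_le hG _), h3,
    fun w₁ w₂ hw => ?_⟩
  obtain ⟨u, hu, v, hv, huv⟩ := h4 w₁ w₂ hw
  exact ⟨u, hu, v, hv, hG huv⟩

-- ## graph surgery
/-- the contraction of edge uv, keeping vertex set: v becomes isolated, u absorbs its nbrs -/
def contractE (G : SimpleGraph V) (u v : V) : SimpleGraph V where
  Adj x y := (G.Adj x y ∨ (x = u ∧ G.Adj v y) ∨ (y = u ∧ G.Adj x v)) ∧ x ≠ v ∧ y ≠ v ∧ x ≠ y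
  symm := by
    refine ⟨?_⟩
    intro x y ⟨h, hx, hy, hxy⟩
    refine ⟨?_, hy, hx, hxy.symm⟩
    rcases h with h | ⟨rfl, h⟩ | ⟨rfl, h⟩
    · exact Or.inl h.symm
    · exact Or.inr (Or.inr ⟨rfl, h.symm⟩)
    · exact Or.inr (Or.inl ⟨rfl, h.symm⟩)
  loopless := by refine ⟨?_⟩; intro x ⟨_, _, _, hxx⟩; exact hxx rfl

lemma contractE_not_adj_left {G : SimpleGraph V} {u v x y : V} :
    ¬ (contractE G u v).Adj v y := fun ⟨_, hx, _, _⟩ => hx rfl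

/-- an isolated vertex of G belongs to no branch set of a minor whose pattern has
no isolated vertices. -/
lemma not_mem_branch_of_isolated {W : Type} {G : SimpleGraph V} {K : SimpleGraph W}
    {B : W → Set V} {v : V}
    (hiso : ∀ y, ¬ G.Adj v y)
    (hconn : ∀ w, (G.induce (B w)).Connected)
    (hadj : ∀ w₁ w₂, K.Adj w₁ w₂ → ∃ u ∈ B w₁, ∃ y ∈ B w₂, G.Adj u y)
    (hK : ∀ w, ∃ w', K.Adj w w') :
    ∀ w, v ∉ B w := by
  intro w hv
  have hBw : B w = {v} := by
    apply Set.eq_singleton_iff_unique_mem.2 ⟨hv, ?_⟩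
    intro x hx
    have hr := reachIn_symm (reachIn_of_induce_connected (hconn w) hx hv)
    obtain ⟨wk, hwk⟩ := hr
    cases wk with
    | nil => rfl
    | cons h p => exact absurd h (hiso _)
  obtain ⟨w', hw'⟩ := hK w
  obtain ⟨a, ha, b, hb, hab⟩ := hadj w w' hw'
  rw [hBw] at ha
  rcases ha with rfl
  exact hiso b hab

/-- L2: lifting a minor through an edge contraction. -/
lemma minor_of_contractE {W : Type} {G : SimpleGraph V} {K : SimpleGraph W} {u v : V}
    (huv : G.Adj u v) (hK : ∀ w, ∃ w', K.Adj w w')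
    (h : GraphIsMinor (contractE G u v) K) : GraphIsMinor G K := by
  classical
  obtain ⟨B, h1, h2, h3, h4⟩ := h
  have hvnot : ∀ w, v ∉ B w := by
    refine not_mem_branch_of_isolated (fun y hy => ?_) h2 h4 hK
    exact hy.2.1 rfl
  set G' := contractE G u v with hG'
  -- the step lemma
  have hstep : ∀ (T : Set V), u ∈ T → ∀ a b, a ∈ T → b ∈ T → G'.Adj a b →
      ReachIn G (T ∪ {v}) a b := by
    intro T hu a b ha hb hab
    obtain ⟨hor, hav, hbv, hnab⟩ := hab
    have ha' : a ∈ T ∪ {v} := Or.inl ha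
    have hb' : b ∈ T ∪ {v} := Or.inl hb
    have hvmem : v ∈ T ∪ {v} := Or.inr rfl
    rcases hor with h | ⟨rfl, h⟩ | ⟨rfl, h⟩
    · exact reachIn_single ha' hb' h
    · exact reachIn_trans (reachIn_single ha' hvmem huv) (reachIn_single hvmem hb' h)
    · exact reachIn_trans (reachIn_single ha' hvmem h) (reachIn_single hvmem hb' huv.symm)
  have hstep0 : ∀ (T : Set V), u ∉ T → ∀ a b, a ∈ T → b ∈ T → G'.Adj a b →
      ReachIn G T a b := by
    intro T hu a b ha hb hab
    obtain ⟨hor, hav, hbv, hnab⟩ := hab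
    rcases hor with h | ⟨rfl, h⟩ | ⟨rfl, h⟩
    · exact reachIn_single ha hb h
    · exact absurd ha hu
    · exact absurd hb hu
  refine ⟨fun w => if u ∈ B w then B w ∪ {v} else B w, ?_, ?_, ?_, ?_⟩
  · intro w
    beta_reduce
    by_cases hu : u ∈ B w
    · rw [if_pos hu]; exact (h1 w).mono Set.subset_union_left
    · rw [if_neg hu]; exact h1 w
  · intro w
    beta_reduce
    by_cases hu : u ∈ B w
    · rw [if_pos hu]
      apply induce_connected_of_reachIn ((h1 w).mono Set.subset_union_left)
      have key : ∀ x ∈ B w ∪ {v}, ReachIn G (B w ∪ {v}) x u := by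
        intro x hx
        rcases hx with hx | hx
        · exact reachIn_transfer (reachIn_of_induce_connected (h2 w) hx hu)
            Set.subset_union_left (hstep (B w) hu)
        · rcases hx with rfl
          exact reachIn_single (Or.inr rfl) (Or.inl hu) huv.symm
      intro x hx y hy
      exact reachIn_trans (key x hx) (reachIn_symm (key y hy))
    · rw [if_neg hu]
      apply induce_connected_of_reachIn (h1 w)
      intro x hx y hy
      exact reachIn_transfer (reachIn_of_induce_connected (h2 w) hx hy)
        (le_refl _) (hstep0 (B w) hu)
  · intro w₁ w₂ hne
    beta_reduce
    have hd := h3 w₁ w₂ hne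
    by_cases hu1 : u ∈ B w₁ <;> by_cases hu2 : u ∈ B w₂
    · exact absurd (Set.disjoint_left.1 hd hu1) (by simp [hu2])
    · rw [if_pos hu1, if_neg hu2, Set.disjoint_union_left]
      refine ⟨hd, ?_⟩
      rw [Set.disjoint_left]
      intro z hz
      rcases hz with rfl
      exact hvnot w₂
    · rw [if_neg hu1, if_pos hu2, Set.disjoint_union_right]
      refine ⟨hd, ?_⟩
      rw [Set.disjoint_right]
      intro z hz
      rcases hz with rfl
      exact hvnot w₁
    · rw [if_neg hu1, if_neg hu2]; exact hd
  · intro w₁ w₂ hw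
    obtain ⟨x, hx, y, hy, hxy⟩ := h4 w₁ w₂ hw
    obtain ⟨hor, hxv, hyv, hxy'⟩ := hxy
    have hsub : ∀ w, B w ⊆ (if u ∈ B w then B w ∪ {v} else B w) := by
      intro w
      by_cases hu : u ∈ B w
      · rw [if_pos hu]; exact Set.subset_union_left
      · rw [if_neg hu]
    rcases hor with h | ⟨rfl, h⟩ | ⟨rfl, h⟩
    · exact ⟨x, hsub w₁ hx, y, hsub w₂ hy, h⟩
    · refine ⟨v, ?_, y, hsub w₂ hy, h⟩
      beta_reduce
      rw [if_pos hx]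
      exact Or.inr rfl
    · refine ⟨x, hsub w₁ hx, v, ?_, h⟩
      beta_reduce
      rw [if_pos hy]
      exact Or.inr rfl

/-- L5a: lift a minor through a "suppression" that may use one fake edge s–t,
patchable by a vertex p adjacent to both s and t. -/
lemma minorOn_patch_one {W : Type} {G G' : SimpleGraph V} {K : SimpleGraph W}
    {S' : Set V} {s t p : V}
    (hadj : ∀ x y, G'.Adj x y → G.Adj x y ∨ (x = s ∧ y = t) ∨ (x = t ∧ y = s))
    (hps : G.Adj p s) (hpt : G.Adj p t) (hp : p ∉ S')
    (h : MinorOn G' K S') : MinorOn G K (insert p S') := by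
  classical
  obtain ⟨B, h0, h1, h2, h3, h4⟩ := h
  have hpB : ∀ w, p ∉ B w := fun w hw => hp (h0 w hw)
  by_cases hs : ∃ w, s ∈ B w
  · obtain ⟨w₀, hw₀⟩ := hs
    have hstep : ∀ a b, a ∈ B w₀ → b ∈ B w₀ → G'.Adj a b →
        ReachIn G (insert p (B w₀)) a b := by
      intro a b ha hb hab
      have ha' : a ∈ insert p (B w₀) := Set.mem_insert_of_mem _ ha
      have hb' : b ∈ insert p (B w₀) := Set.mem_insert_of_mem _ hb
      have hpmem : p ∈ insert p (B w₀) := Set.mem_insert _ _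
      rcases hadj _ _ hab with h | ⟨rfl, rfl⟩ | ⟨rfl, rfl⟩
      · exact reachIn_single ha' hb' h
      · exact reachIn_trans (reachIn_single ha' hpmem hps.symm)
          (reachIn_single hpmem hb' hpt)
      · exact reachIn_trans (reachIn_single ha' hpmem hpt.symm)
          (reachIn_single hpmem hb' hps)
    have hstep0 : ∀ (w : W), w ≠ w₀ → ∀ a b, a ∈ B w → b ∈ B w → G'.Adj a b →
        ReachIn G (B w) a b := by
      intro w hw a b ha hb hab
      rcases hadj _ _ hab with h | ⟨rfl, rfl⟩ | ⟨rfl, rfl⟩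
      · exact reachIn_single ha hb h
      · exact absurd (Set.disjoint_left.1 (h3 w w₀ hw) ha) (by simp [hw₀])
      · exact absurd (Set.disjoint_left.1 (h3 w w₀ hw) hb) (by simp [hw₀])
    refine ⟨fun w => if w = w₀ then insert p (B w) else B w, ?_, ?_, ?_, ?_, ?_⟩
    · intro w; beta_reduce
      by_cases hw : w = w₀
      · rw [if_pos hw]
        exact Set.insert_subset_insert (h0 w)
      · rw [if_neg hw]
        exact (h0 w).trans (Set.subset_insert _ _)
    · intro w; beta_reduce
      by_cases hw : w = w₀
      · rw [if_pos hw]; exact (h1 w).mono (Set.subset_insert _ _)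
      · rw [if_neg hw]; exact h1 w
    · intro w; beta_reduce
      by_cases hw : w = w₀
      · subst hw
        rw [if_pos rfl]
        apply induce_connected_of_reachIn ((h1 w).mono (Set.subset_insert _ _))
        have key : ∀ x ∈ insert p (B w), ReachIn G (insert p (B w)) x s := by
          intro x hx
          rcases hx with rfl | hx
          · exact reachIn_single (Set.mem_insert _ _) (Set.mem_insert_of_mem _ hw₀) hps
          · exact reachIn_transfer (reachIn_of_induce_connected (h2 w) hx hw₀)
              (Set.subset_insert _ _) hstep
        intro x hx y hy
        exact reachIn_trans (key x hx) (reachIn_symm (key y hy))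
      · rw [if_neg hw]
        apply induce_connected_of_reachIn (h1 w)
        intro x hx y hy
        exact reachIn_transfer (reachIn_of_induce_connected (h2 w) hx hy)
          (le_refl _) (hstep0 w hw)
    · intro w₁ w₂ hne
      beta_reduce
      have hd := h3 w₁ w₂ hne
      by_cases hw1 : w₁ = w₀ <;> by_cases hw2 : w₂ = w₀
      · exact absurd (hw1.trans hw2.symm) hne
      · rw [if_pos hw1, if_neg hw2, Set.disjoint_left]
        intro z hz
        rcases hz with rfl | hz
        · exact hpB w₂
        · exact Set.disjoint_left.1 hd hz
      · rw [if_neg hw1, if_pos hw2, Set.disjoint_right]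
        intro z hz
        rcases hz with rfl | hz
        · exact hpB w₁
        · exact Set.disjoint_right.1 hd hz
      · rw [if_neg hw1, if_neg hw2]; exact hd
    · intro w₁ w₂ hw
      have hne : w₁ ≠ w₂ := hw.ne
      obtain ⟨x, hx, y, hy, hxy⟩ := h4 w₁ w₂ hw
      have hsub : ∀ w, B w ⊆ (if w = w₀ then insert p (B w) else B w) := by
        intro w
        by_cases hww : w = w₀
        · rw [if_pos hww]; exact Set.subset_insert _ _
        · rw [if_neg hww]
      rcases hadj _ _ hxy with h | ⟨rfl, rfl⟩ | ⟨rfl, rfl⟩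
      · exact ⟨x, hsub w₁ hx, y, hsub w₂ hy, h⟩
      · -- x = s, y = t : s ∈ B w₁ so w₁ = w₀
        have hw1 : w₁ = w₀ := by
          by_contra hcon
          exact absurd (Set.disjoint_left.1 (h3 w₁ w₀ hcon) hx) (by simp [hw₀])
        refine ⟨p, ?_, y, hsub w₂ hy, hpt⟩
        beta_reduce
        rw [if_pos hw1]
        exact Set.mem_insert _ _
      · have hw2 : w₂ = w₀ := by
          by_contra hcon
          exact absurd (Set.disjoint_left.1 (h3 w₂ w₀ hcon) hy) (by simp [hw₀])
        refine ⟨x, hsub w₁ hx, p, ?_, hpt.symm⟩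
        beta_reduce
        rw [if_pos hw2]
        exact Set.mem_insert _ _
  · -- s in no branch set: no fake edge can be used at all
    push_neg at hs
    refine MinorOn.mono_set (Set.subset_insert _ _) ⟨B, h0, h1, ?_, h3, ?_⟩
    · intro w
      apply induce_connected_of_reachIn (h1 w)
      intro x hx y hy
      refine reachIn_transfer (reachIn_of_induce_connected (h2 w) hx hy) (le_refl _) ?_
      intro a b ha hb hab
      rcases hadj _ _ hab with h | ⟨rfl, rfl⟩ | ⟨rfl, rfl⟩
      · exact reachIn_single ha hb h
      · exact absurd ha (hs w)
      · exact absurd hb (hs w)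
    · intro w₁ w₂ hw
      obtain ⟨x, hx, y, hy, hxy⟩ := h4 w₁ w₂ hw
      rcases hadj _ _ hxy with h | ⟨rfl, rfl⟩ | ⟨rfl, rfl⟩
      · exact ⟨x, hx, y, hy, h⟩
      · exact absurd hx (hs w₁)
      · exact absurd hy (hs w₂)

lemma induce_connected_insert_pendant {G : SimpleGraph V} {B : Set V} {p y₀ : V}
    (hconn : (G.induce B).Connected) (hy₀ : y₀ ∈ B) (hpy : G.Adj p y₀) :
    (G.induce (insert p B)).Connected := by
  apply induce_connected_of_reachIn ⟨y₀, Set.mem_insert_of_mem _ hy₀⟩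
  have key : ∀ x ∈ insert p B, ReachIn G (insert p B) x y₀ := by
    intro x hx
    rcases hx with rfl | hx
    · exact reachIn_single (Set.mem_insert _ _) (Set.mem_insert_of_mem _ hy₀) hpy
    · exact reachIn_transfer (reachIn_of_induce_connected hconn hx hy₀)
        (Set.subset_insert _ _)
        (fun a' b' ha' hb' hab' => reachIn_single (Set.mem_insert_of_mem _ ha')
          (Set.mem_insert_of_mem _ hb') hab')
  intro x hx y hy
  exact reachIn_trans (key x hx) (reachIn_symm (key y hy))

lemma four_not_in_three {a b c x1 x2 x3 x4 : V}
    (h12 : x1 ≠ x2) (h13 : x1 ≠ x3) (h14 : x1 ≠ x4) (h23 : x2 ≠ x3) (h24 : x2 ≠ x4)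
    (h34 : x3 ≠ x4)
    (m1 : x1 ∈ ({a, b, c} : Set V)) (m2 : x2 ∈ ({a, b, c} : Set V))
    (m3 : x3 ∈ ({a, b, c} : Set V)) (m4 : x4 ∈ ({a, b, c} : Set V)) : False := by
  have hsub : ({x1, x2, x3, x4} : Finset V) ⊆ {a, b, c} := by
    intro z hz
    simp only [Finset.mem_insert, Finset.mem_singleton] at hz
    rcases hz with rfl | rfl | rfl | rfl <;>
      · simp only [Set.mem_insert_iff, Set.mem_singleton_iff] at m1 m2 m3 m4
        simp only [Finset.mem_insert, Finset.mem_singleton]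
        tauto
  have hcard : ({x1, x2, x3, x4} : Finset V).card = 4 := by
    rw [Finset.card_insert_of_notMem (by simp [h12, h13, h14]),
      Finset.card_insert_of_notMem (by simp [h23, h24]),
      Finset.card_insert_of_notMem (by simp [h34]), Finset.card_singleton]
  have h3' : ({a, b, c} : Finset V).card ≤ 3 :=
    (Finset.card_insert_le _ _).trans (by
      exact Nat.succ_le_succ ((Finset.card_insert_le _ _).trans (by simp)))
  have := Finset.card_le_card hsub
  omega

/-- L5b: lift a minor through the degree-3-vertex gadget (delete v, add triangle abc). -/
lemma minorOn_patch_triangle {W : Type} {G G' : SimpleGraph V} {K : SimpleGraph W}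
    {S' : Set V} {a b c v : V}
    (hab : a ≠ b) (hac : a ≠ c) (hbc : b ≠ c)
    (hadj : ∀ x y, G'.Adj x y → G.Adj x y ∨
      (x ≠ y ∧ x ∈ ({a, b, c} : Set V) ∧ y ∈ ({a, b, c} : Set V)))
    (hva : G.Adj v a) (hvb : G.Adj v b) (hvc : G.Adj v c) (hv : v ∉ S')
    (h : MinorOn G' K S') :
    MinorOn G K (insert v S') ∨
      ∃ (w₁ w₂ w₃ : W) (B : W → Set V),
        w₁ ≠ w₂ ∧ w₁ ≠ w₃ ∧ w₂ ≠ w₃ ∧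
        K.Adj w₁ w₂ ∧ K.Adj w₁ w₃ ∧ K.Adj w₂ w₃ ∧
        (∀ w, B w ⊆ S') ∧ (∀ w, (B w).Nonempty) ∧
        (∀ w, (G.induce (B w)).Connected) ∧
        (∀ wa wb, wa ≠ wb → Disjoint (B wa) (B wb)) ∧
        (∀ wa wb, K.Adj wa wb → (wa ∉ ({w₁, w₂, w₃} : Set W) ∨ wb ∉ ({w₁, w₂, w₃} : Set W)) →
          ∃ x ∈ B wa, ∃ y ∈ B wb, G.Adj x y) ∧
        (∀ w ∈ ({w₁, w₂, w₃} : Set W), ∃ y ∈ B w, G.Adj v y) := by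
  classical
  obtain ⟨B, h0, h1, h2, h3, h4⟩ := h
  have hvB : ∀ w, v ∉ B w := fun w hw => hv (h0 w hw)
  have hvA : ∀ x ∈ ({a, b, c} : Set V), G.Adj v x := by
    intro x hx
    rcases hx with rfl | rfl | rfl
    exacts [hva, hvb, hvc]
  by_cases h2in : ∃ w₀ x y, x ≠ y ∧ (x ∈ B w₀ ∧ x ∈ ({a,b,c} : Set V)) ∧
      (y ∈ B w₀ ∧ y ∈ ({a,b,c} : Set V))
  · left
    obtain ⟨w₀, x₀, y₀, hxy₀, ⟨hx₀B, hx₀A⟩, hy₀B, hy₀A⟩ := h2in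
    have hout : ∀ x y, x ∈ ({a,b,c} : Set V) → y ∈ ({a,b,c} : Set V) → x ≠ y →
        x ∉ B w₀ → y ∉ B w₀ → False := by
      intro x y hxA hyA hxy hxB hyB
      exact four_not_in_three hxy (fun h => hxB (h ▸ hx₀B)) (fun h => hxB (h ▸ hy₀B))
        (fun h => hyB (h ▸ hx₀B)) (fun h => hyB (h ▸ hy₀B)) hxy₀ hxA hyA hx₀A hy₀A
    have hstep : ∀ p q, p ∈ B w₀ → q ∈ B w₀ → G'.Adj p q →
        ReachIn G (insert v (B w₀)) p q := by
      intro p q hp hq hpq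
      have hp' : p ∈ insert v (B w₀) := Set.mem_insert_of_mem _ hp
      have hq' : q ∈ insert v (B w₀) := Set.mem_insert_of_mem _ hq
      have hv' : v ∈ insert v (B w₀) := Set.mem_insert _ _
      rcases hadj _ _ hpq with hg | ⟨hne, hpA, hqA⟩
      · exact reachIn_single hp' hq' hg
      · exact reachIn_trans (reachIn_single hp' hv' (hvA p hpA).symm)
          (reachIn_single hv' hq' (hvA q hqA))
    have hstep0 : ∀ (w : W), w ≠ w₀ → ∀ p q, p ∈ B w → q ∈ B w → G'.Adj p q →
        ReachIn G (B w) p q := by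
      intro w hw p q hp hq hpq
      rcases hadj _ _ hpq with hg | ⟨hne, hpA, hqA⟩
      · exact reachIn_single hp hq hg
      · exact absurd (hout p q hpA hqA hne (Set.disjoint_left.1 (h3 w w₀ hw) hp)
          (Set.disjoint_left.1 (h3 w w₀ hw) hq)) (by simp)
    refine ⟨fun w => if w = w₀ then insert v (B w) else B w, ?_, ?_, ?_, ?_, ?_⟩
    · intro w; beta_reduce
      by_cases hw : w = w₀
      · rw [if_pos hw]; exact Set.insert_subset_insert (h0 w)
      · rw [if_neg hw]; exact (h0 w).trans (Set.subset_insert _ _)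
    · intro w; beta_reduce
      by_cases hw : w = w₀
      · rw [if_pos hw]; exact (h1 w).mono (Set.subset_insert _ _)
      · rw [if_neg hw]; exact h1 w
    · intro w; beta_reduce
      by_cases hw : w = w₀
      · subst hw
        rw [if_pos rfl]
        apply induce_connected_of_reachIn ((h1 w).mono (Set.subset_insert _ _))
        have key : ∀ x ∈ insert v (B w), ReachIn G (insert v (B w)) x x₀ := by
          intro x hx
          rcases hx with rfl | hx
          · exact reachIn_single (Set.mem_insert _ _) (Set.mem_insert_of_mem _ hx₀B)
              (hvA _ hx₀A)
          · exact reachIn_transfer (reachIn_of_induce_connected (h2 w) hx hx₀B)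
              (Set.subset_insert _ _) hstep
        intro x hx y hy
        exact reachIn_trans (key x hx) (reachIn_symm (key y hy))
      · rw [if_neg hw]
        apply induce_connected_of_reachIn (h1 w)
        intro x hx y hy
        exact reachIn_transfer (reachIn_of_induce_connected (h2 w) hx hy)
          (le_refl _) (hstep0 w hw)
    · intro w₁ w₂ hne
      beta_reduce
      have hd := h3 w₁ w₂ hne
      by_cases hw1 : w₁ = w₀ <;> by_cases hw2 : w₂ = w₀
      · exact absurd (hw1.trans hw2.symm) hne
      · rw [if_pos hw1, if_neg hw2, Set.disjoint_left]
        intro z hz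
        rcases hz with rfl | hz
        · exact hvB w₂
        · exact Set.disjoint_left.1 hd hz
      · rw [if_neg hw1, if_pos hw2, Set.disjoint_right]
        intro z hz
        rcases hz with rfl | hz
        · exact hvB w₁
        · exact Set.disjoint_right.1 hd hz
      · rw [if_neg hw1, if_neg hw2]; exact hd
    · intro w₁ w₂ hw
      have hne : w₁ ≠ w₂ := hw.ne
      obtain ⟨x, hx, y, hy, hxy⟩ := h4 w₁ w₂ hw
      have hsub : ∀ w, B w ⊆ (if w = w₀ then insert v (B w) else B w) := by
        intro w
        by_cases hww : w = w₀
        · rw [if_pos hww]; exact Set.subset_insert _ _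
        · rw [if_neg hww]
      rcases hadj _ _ hxy with hg | ⟨hxyne, hxA, hyA⟩
      · exact ⟨x, hsub w₁ hx, y, hsub w₂ hy, hg⟩
      · by_cases hw1 : w₁ = w₀
        · refine ⟨v, ?_, y, hsub w₂ hy, hvA y hyA⟩
          beta_reduce; rw [if_pos hw1]; exact Set.mem_insert _ _
        · by_cases hw2 : w₂ = w₀
          · refine ⟨x, hsub w₁ hx, v, ?_, (hvA x hxA).symm⟩
            beta_reduce; rw [if_pos hw2]; exact Set.mem_insert _ _
          · exact absurd (hout x y hxA hyA hxyne
              (Set.disjoint_left.1 (h3 w₁ w₀ hw1) hx)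
              (Set.disjoint_left.1 (h3 w₂ w₀ hw2) hy)) (by simp)
  · -- every branch set contains at most one of a, b, c
    have h1in : ∀ w x y, x ∈ B w → y ∈ B w → x ∈ ({a,b,c} : Set V) →
        y ∈ ({a,b,c} : Set V) → x = y := by
      intro w x y hxB hyB hxA hyA
      by_contra hne
      exact h2in ⟨w, x, y, hne, ⟨hxB, hxA⟩, hyB, hyA⟩
    have hconnG : ∀ w, (G.induce (B w)).Connected := by
      intro w
      apply induce_connected_of_reachIn (h1 w)
      intro x hx y hy
      refine reachIn_transfer (reachIn_of_induce_connected (h2 w) hx hy) (le_refl _) ?_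
      intro p q hp hq hpq
      rcases hadj _ _ hpq with hg | ⟨hne, hpA, hqA⟩
      · exact reachIn_single hp hq hg
      · exact absurd (h1in w p q hp hq hpA hqA) hne
    set Bad : W → W → Prop :=
      fun w w' => K.Adj w w' ∧ ¬(∃ x ∈ B w, ∃ y ∈ B w', G.Adj x y) with hBadDef
    have hBadData : ∀ w w', Bad w w' →
        ∃ x, x ∈ B w ∧ x ∈ ({a,b,c} : Set V) ∧
          ∃ y, y ∈ B w' ∧ y ∈ ({a,b,c} : Set V) := by
      intro w w' ⟨hK', hng⟩
      obtain ⟨x, hx, y, hy, hxy⟩ := h4 w w' hK'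
      rcases hadj _ _ hxy with hg | ⟨hne, hxA, hyA⟩
      · exact absurd ⟨x, hx, y, hy, hg⟩ hng
      · exact ⟨x, hx, hxA, y, hy, hyA⟩
    have hBadSymm : ∀ w w', Bad w w' → Bad w' w := by
      intro w w' ⟨hK', hng⟩
      refine ⟨hK'.symm, fun ⟨x, hx, y, hy, hxy⟩ => hng ⟨y, hy, x, hx, hxy.symm⟩⟩
    have hElt : ∀ w w', Bad w w' → (∃ x, x ∈ B w ∧ x ∈ ({a,b,c} : Set V)) ∧
        (∃ y, y ∈ B w' ∧ y ∈ ({a,b,c} : Set V)) := by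
      intro w w' hB'
      obtain ⟨x, hx1, hx2, y, hy1, hy2⟩ := hBadData w w' hB'
      exact ⟨⟨x, hx1, hx2⟩, ⟨y, hy1, hy2⟩⟩
    have hinj4 : ∀ t1 t2 t3 t4 : W, t1 ≠ t2 → t1 ≠ t3 → t1 ≠ t4 → t2 ≠ t3 → t2 ≠ t4 →
        t3 ≠ t4 → (∃ x, x ∈ B t1 ∧ x ∈ ({a,b,c} : Set V)) →
        (∃ x, x ∈ B t2 ∧ x ∈ ({a,b,c} : Set V)) →
        (∃ x, x ∈ B t3 ∧ x ∈ ({a,b,c} : Set V)) →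
        (∃ x, x ∈ B t4 ∧ x ∈ ({a,b,c} : Set V)) → False := by
      intro t1 t2 t3 t4 d12 d13 d14 d23 d24 d34 ⟨x1, hx1, hA1⟩ ⟨x2, hx2, hA2⟩
        ⟨x3, hx3, hA3⟩ ⟨x4, hx4, hA4⟩
      have ne' : ∀ (s t : W) (xs xt : V), s ≠ t → xs ∈ B s → xt ∈ B t → xs ≠ xt := by
        intro s t xs xt hst hxs hxt heq
        exact absurd hxt (heq ▸ Set.disjoint_left.1 (h3 s t hst) hxs)
      exact four_not_in_three (ne' _ _ _ _ d12 hx1 hx2) (ne' _ _ _ _ d13 hx1 hx3)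
        (ne' _ _ _ _ d14 hx1 hx4) (ne' _ _ _ _ d23 hx2 hx3) (ne' _ _ _ _ d24 hx2 hx4)
        (ne' _ _ _ _ d34 hx3 hx4) hA1 hA2 hA3 hA4
    -- the basic patch: add v to a single branch set w† touching all bad pairs
    have patch : ∀ (wt : W) (xt : V), xt ∈ B wt → xt ∈ ({a,b,c} : Set V) →
        (∀ w w', Bad w w' → w = wt ∨ w' = wt) → MinorOn G K (insert v S') := by
      intro wt xt hxtB hxtA hall
      refine ⟨fun w => if w = wt then insert v (B w) else B w, ?_, ?_, ?_, ?_, ?_⟩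
      · intro w; beta_reduce
        by_cases hw : w = wt
        · rw [if_pos hw]; exact Set.insert_subset_insert (h0 w)
        · rw [if_neg hw]; exact (h0 w).trans (Set.subset_insert _ _)
      · intro w; beta_reduce
        by_cases hw : w = wt
        · rw [if_pos hw]; exact (h1 w).mono (Set.subset_insert _ _)
        · rw [if_neg hw]; exact h1 w
      · intro w; beta_reduce
        by_cases hw : w = wt
        · subst hw
          rw [if_pos rfl]
          exact induce_connected_insert_pendant (hconnG w) hxtB (hvA _ hxtA)
        · rw [if_neg hw]; exact hconnG w
      · intro w₁ w₂ hne
        beta_reduce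
        have hd := h3 w₁ w₂ hne
        by_cases hw1 : w₁ = wt <;> by_cases hw2 : w₂ = wt
        · exact absurd (hw1.trans hw2.symm) hne
        · rw [if_pos hw1, if_neg hw2, Set.disjoint_left]
          intro z hz
          rcases hz with rfl | hz
          · exact hvB w₂
          · exact Set.disjoint_left.1 hd hz
        · rw [if_neg hw1, if_pos hw2, Set.disjoint_right]
          intro z hz
          rcases hz with rfl | hz
          · exact hvB w₁
          · exact Set.disjoint_right.1 hd hz
        · rw [if_neg hw1, if_neg hw2]; exact hd
      · intro w₁ w₂ hw
        have hne : w₁ ≠ w₂ := hw.ne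
        have hsub : ∀ w, B w ⊆ (if w = wt then insert v (B w) else B w) := by
          intro w
          by_cases hww : w = wt
          · rw [if_pos hww]; exact Set.subset_insert _ _
          · rw [if_neg hww]
        by_cases hbad : Bad w₁ w₂
        · rcases hall w₁ w₂ hbad with rfl | rfl
          · obtain ⟨x, hx1, hx2, y, hy1, hy2⟩ := hBadData w₁ w₂ hbad
            refine ⟨v, ?_, y, hsub w₂ hy1, hvA y hy2⟩
            beta_reduce; rw [if_pos rfl]; exact Set.mem_insert _ _
          · obtain ⟨x, hx1, hx2, y, hy1, hy2⟩ := hBadData w₁ w₂ hbad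
            refine ⟨x, hsub w₁ hx1, v, ?_, (hvA x hx2).symm⟩
            beta_reduce; rw [if_pos rfl]; exact Set.mem_insert _ _
        · have hg : ∃ x ∈ B w₁, ∃ y ∈ B w₂, G.Adj x y := by
            by_contra hng
            exact hbad ⟨hw, hng⟩
          obtain ⟨x, hx, y, hy, hxy⟩ := hg
          exact ⟨x, hsub w₁ hx, y, hsub w₂ hy, hxy⟩
    by_cases hBadEx : ∃ w w', Bad w w'
    · obtain ⟨w₁, w₂, hB12⟩ := hBadEx
      have hne12 : w₁ ≠ w₂ := hB12.1.ne
      by_cases hall1 : ∀ w w', Bad w w' → w = w₁ ∨ w' = w₁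
      · obtain ⟨x, hx1, hx2, -⟩ := hBadData w₁ w₂ hB12
        exact Or.inl (patch w₁ x hx1 hx2 hall1)
      · push_neg at hall1
        obtain ⟨w₃, w₄, hB34, hw31, hw41⟩ := hall1
        have hne34 : w₃ ≠ w₄ := hB34.1.ne
        by_cases hall2 : ∀ w w', Bad w w' → w = w₂ ∨ w' = w₂
        · obtain ⟨-, y, hy1, hy2⟩ := hElt w₁ w₂ hB12
          exact Or.inl (patch w₂ y hy1 hy2 hall2)
        · push_neg at hall2
          obtain ⟨w₅, w₆, hB56, hw52, hw62⟩ := hall2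
          have hne56 : w₅ ≠ w₆ := hB56.1.ne
          -- step 1: find z with Bad w₂ z, z ≠ w₁, z ≠ w₂
          have hz : ∃ z, Bad w₂ z ∧ z ≠ w₁ ∧ z ≠ w₂ := by
            by_cases h32 : w₃ = w₂
            · refine ⟨w₄, h32 ▸ hB34, hw41, ?_⟩
              rw [← h32]; exact hne34.symm
            · by_cases h42 : w₄ = w₂
              · exact ⟨w₃, hBadSymm _ _ (h42 ▸ hB34), hw31, fun hh => h32 hh⟩
              · exfalso
                exact hinj4 w₁ w₂ w₃ w₄ hne12 (Ne.symm hw31) (Ne.symm hw41)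
                  (Ne.symm h32) (Ne.symm h42) hne34
                  (hElt _ _ hB12).1 (hElt _ _ hB12).2 (hElt _ _ hB34).1 (hElt _ _ hB34).2
          obtain ⟨z, hBz, hz1, hz2⟩ := hz
          -- step 2: find z' with Bad w₁ z', z' ≠ w₁, z' ≠ w₂
          have hz' : ∃ z', Bad w₁ z' ∧ z' ≠ w₁ ∧ z' ≠ w₂ := by
            by_cases h51 : w₅ = w₁
            · exact ⟨w₆, h51 ▸ hB56, (h51 ▸ hne56).symm, hw62⟩
            · by_cases h61 : w₆ = w₁
              · exact ⟨w₅, hBadSymm _ _ (h61 ▸ hB56), fun hh => h51 hh, hw52⟩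
              · exfalso
                exact hinj4 w₁ w₂ w₅ w₆ hne12 (Ne.symm h51) (Ne.symm h61)
                  (Ne.symm hw52) (Ne.symm hw62) hne56
                  (hElt _ _ hB12).1 (hElt _ _ hB12).2 (hElt _ _ hB56).1 (hElt _ _ hB56).2
          obtain ⟨z', hBz', hz'1, hz'2⟩ := hz'
          -- step 3: z' = z
          have hzz : z' = z := by
            by_contra hzz
            exact hinj4 w₁ w₂ z z' hne12 (Ne.symm hz1) (Ne.symm hz'1)
              (Ne.symm hz2) (Ne.symm hz'2) (Ne.symm hzz)
              (hElt _ _ hB12).1 (hElt _ _ hB12).2 (hElt _ _ hBz).2 (hElt _ _ hBz').2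
          subst hzz
          -- triangle w₁ w₂ z' with all pairs Bad; produce fallback data
          right
          refine ⟨w₁, w₂, z', B, ?_, ?_, ?_, hB12.1, hBz'.1, hBz.1, h0, h1, hconnG, h3, ?_, ?_⟩
          · exact hne12
          · exact Ne.symm hz'1
          · exact Ne.symm hz'2
          · -- genuine adjacency off the triangle
            intro wa wb hKab hout
            by_contra hng
            have hbad : Bad wa wb := ⟨hKab, fun hgg => hng (by
              obtain ⟨x, hx, y, hy, hxy⟩ := hgg
              exact ⟨x, hx, y, hy, hxy⟩)⟩
            rcases hout with hout | hout
            · have : wa ≠ w₁ ∧ wa ≠ w₂ ∧ wa ≠ z' := by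
                refine ⟨?_, ?_, ?_⟩ <;> intro hh <;> exact hout (by simp [hh])
              exact hinj4 wa w₁ w₂ z' this.1 this.2.1 this.2.2 hne12 (Ne.symm hz'1)
                (Ne.symm hz'2) (hElt _ _ hbad).1 (hElt _ _ hB12).1 (hElt _ _ hB12).2
                (hElt _ _ hBz).2
            · have : wb ≠ w₁ ∧ wb ≠ w₂ ∧ wb ≠ z' := by
                refine ⟨?_, ?_, ?_⟩ <;> intro hh <;> exact hout (by simp [hh])
              exact hinj4 wb w₁ w₂ z' this.1 this.2.1 this.2.2 hne12 (Ne.symm hz'1)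
                (Ne.symm hz'2) (hElt _ _ (hBadSymm _ _ hbad)).1 (hElt _ _ hB12).1
                (hElt _ _ hB12).2 (hElt _ _ hBz).2
          · -- v is adjacent into each triangle branch set
            intro w hw
            rcases hw with rfl | rfl | rfl
            · obtain ⟨⟨x, hx1, hx2⟩, -⟩ := hElt _ _ hB12
              exact ⟨x, hx1, hvA x hx2⟩
            · obtain ⟨-, ⟨y, hy1, hy2⟩⟩ := hElt _ _ hB12
              exact ⟨y, hy1, hvA y hy2⟩
            · obtain ⟨-, ⟨y, hy1, hy2⟩⟩ := hElt _ _ hBz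
              exact ⟨y, hy1, hvA y hy2⟩
    · -- no bad pair: the witness works in G directly
      refine Or.inl (MinorOn.mono_set (Set.subset_insert _ _) ⟨B, h0, h1, hconnG, h3, ?_⟩)
      push_neg at hBadEx
      intro w₁ w₂ hw
      by_contra hng
      exact hBadEx w₁ w₂ ⟨hw, hng⟩

abbrev K4 : SimpleGraph (Fin 4) := ⊤
abbrev K23 : SimpleGraph (Fin 2 ⊕ Fin 3) := completeBipartiteGraph (Fin 2) (Fin 3)
abbrev K5 : SimpleGraph (Fin 5) := ⊤
abbrev K33 : SimpleGraph (Fin 3 ⊕ Fin 3) := completeBipartiteGraph (Fin 3) (Fin 3)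

lemma induce_connected_singleton' (G : SimpleGraph V) (v : V) :
    (G.induce ({v} : Set V)).Connected := by
  apply induce_connected_of_reachIn (B := ({v} : Set V)) ⟨v, Set.mem_singleton v⟩
  intro x hx y hy
  rcases hx with rfl
  rcases hy with rfl
  exact reachIn_refl (Set.mem_singleton _)

/-- from the K4-fallback data, build a K23 minor using v and the fourth branch set. -/
lemma minorOn_K23_of_fallback {G : SimpleGraph V} {S' : Set V} {v : V} (hv : v ∉ S')
    (h : ∃ (w₁ w₂ w₃ : Fin 4) (B : Fin 4 → Set V),
        w₁ ≠ w₂ ∧ w₁ ≠ w₃ ∧ w₂ ≠ w₃ ∧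
        K4.Adj w₁ w₂ ∧ K4.Adj w₁ w₃ ∧ K4.Adj w₂ w₃ ∧
        (∀ w, B w ⊆ S') ∧ (∀ w, (B w).Nonempty) ∧
        (∀ w, (G.induce (B w)).Connected) ∧
        (∀ wa wb, wa ≠ wb → Disjoint (B wa) (B wb)) ∧
        (∀ wa wb, K4.Adj wa wb →
          (wa ∉ ({w₁, w₂, w₃} : Set (Fin 4)) ∨ wb ∉ ({w₁, w₂, w₃} : Set (Fin 4))) →
          ∃ x ∈ B wa, ∃ y ∈ B wb, G.Adj x y) ∧
        (∀ w ∈ ({w₁, w₂, w₃} : Set (Fin 4)), ∃ y ∈ B w, G.Adj v y)) :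
    MinorOn G K23 (insert v S') := by
  classical
  obtain ⟨w₁, w₂, w₃, B, h12, h13, h23, -, -, -, h0, h1, h2, h3, hgen, hvadj⟩ := h
  have hvB : ∀ w, v ∉ B w := fun w hw => hv (h0 w hw)
  have hw4 : ∃ w₄ : Fin 4, w₄ ≠ w₁ ∧ w₄ ≠ w₂ ∧ w₄ ≠ w₃ := by
    have hne : (Finset.univ \ {w₁, w₂, w₃} : Finset (Fin 4)).Nonempty := by
      rw [← Finset.card_pos]
      have hsub : ({w₁, w₂, w₃} : Finset (Fin 4)).card = 3 := by
        rw [Finset.card_insert_of_notMem (by simp [h12, h13]),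
          Finset.card_insert_of_notMem (by simp [h23]), Finset.card_singleton]
      rw [Finset.card_sdiff_of_subset (Finset.subset_univ _)]
      simp [hsub]
    obtain ⟨w₄, hw₄⟩ := hne
    simp only [Finset.mem_sdiff, Finset.mem_insert, Finset.mem_singleton] at hw₄
    push_neg at hw₄
    exact ⟨w₄, hw₄.2⟩
  obtain ⟨w₄, h41, h42, h43⟩ := hw4
  have dv : ∀ s : Fin 4, Disjoint ({v} : Set V) (B s) := by
    intro s
    rw [Set.disjoint_left]
    intro z hz
    rcases hz with rfl
    exact hvB s
  have hm1 : w₁ ∈ ({w₁, w₂, w₃} : Set (Fin 4)) := by simp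
  have hm2 : w₂ ∈ ({w₁, w₂, w₃} : Set (Fin 4)) := by simp
  have hm3 : w₃ ∈ ({w₁, w₂, w₃} : Set (Fin 4)) := by simp
  have hm4 : w₄ ∉ ({w₁, w₂, w₃} : Set (Fin 4)) := by simp [h41, h42, h43]
  refine ⟨Sum.elim (![{v}, B w₄]) (![B w₁, B w₂, B w₃]), ?_, ?_, ?_, ?_, ?_⟩
  · rintro (i | j) x hx
    · fin_cases i
      · exact Set.mem_insert_iff.2 (Or.inl hx)
      · exact Set.mem_insert_of_mem _ (h0 w₄ hx)
    · fin_cases j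
      · exact Set.mem_insert_of_mem _ (h0 w₁ hx)
      · exact Set.mem_insert_of_mem _ (h0 w₂ hx)
      · exact Set.mem_insert_of_mem _ (h0 w₃ hx)
  · rintro (i | j)
    · fin_cases i
      · exact ⟨v, rfl⟩
      · exact h1 w₄
    · fin_cases j
      · exact h1 w₁
      · exact h1 w₂
      · exact h1 w₃
  · rintro (i | j)
    · fin_cases i
      · exact induce_connected_singleton' G v
      · exact h2 w₄
    · fin_cases j
      · exact h2 w₁
      · exact h2 w₂
      · exact h2 w₃
  · rintro (i | j) (i' | j') hne
    · fin_cases i <;> fin_cases i'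
      · exact absurd rfl hne
      · exact dv w₄
      · exact (dv w₄).symm
      · exact absurd rfl hne
    · fin_cases i <;> fin_cases j'
      · exact dv w₁
      · exact dv w₂
      · exact dv w₃
      · exact h3 w₄ w₁ h41
      · exact h3 w₄ w₂ h42
      · exact h3 w₄ w₃ h43
    · fin_cases j <;> fin_cases i'
      · exact (dv w₁).symm
      · exact h3 w₁ w₄ h41.symm
      · exact (dv w₂).symm
      · exact h3 w₂ w₄ h42.symm
      · exact (dv w₃).symm
      · exact h3 w₃ w₄ h43.symm
    · fin_cases j <;> fin_cases j'
      · exact absurd rfl hne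
      · exact h3 w₁ w₂ h12
      · exact h3 w₁ w₃ h13
      · exact h3 w₂ w₁ h12.symm
      · exact absurd rfl hne
      · exact h3 w₂ w₃ h23
      · exact h3 w₃ w₁ h13.symm
      · exact h3 w₃ w₂ h23.symm
      · exact absurd rfl hne
  · have hgen4 : ∀ s : Fin 4, s ∈ ({w₁, w₂, w₃} : Set (Fin 4)) →
        ∃ x ∈ B w₄, ∃ y ∈ B s, G.Adj x y := by
      intro s hs
      have hK : K4.Adj w₄ s := by
        simp only [top_adj]
        rcases hs with rfl | rfl | rfl
        exacts [h41, h42, h43]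
      exact hgen w₄ s hK (Or.inl hm4)
    rintro (i | j) (i' | j') hadj
    · simp at hadj
    · fin_cases i
      · fin_cases j'
        · obtain ⟨y, hy, hvy⟩ := hvadj w₁ hm1
          exact ⟨v, rfl, y, hy, hvy⟩
        · obtain ⟨y, hy, hvy⟩ := hvadj w₂ hm2
          exact ⟨v, rfl, y, hy, hvy⟩
        · obtain ⟨y, hy, hvy⟩ := hvadj w₃ hm3
          exact ⟨v, rfl, y, hy, hvy⟩
      · fin_cases j'
        · exact hgen4 w₁ hm1
        · exact hgen4 w₂ hm2
        · exact hgen4 w₃ hm3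
    · fin_cases i'
      · fin_cases j
        · obtain ⟨y, hy, hvy⟩ := hvadj w₁ hm1
          exact ⟨y, hy, v, rfl, hvy.symm⟩
        · obtain ⟨y, hy, hvy⟩ := hvadj w₂ hm2
          exact ⟨y, hy, v, rfl, hvy.symm⟩
        · obtain ⟨y, hy, hvy⟩ := hvadj w₃ hm3
          exact ⟨y, hy, v, rfl, hvy.symm⟩
      · fin_cases j
        · obtain ⟨x, hx, y, hy, hxy⟩ := hgen4 w₁ hm1
          exact ⟨y, hy, x, hx, hxy.symm⟩
        · obtain ⟨x, hx, y, hy, hxy⟩ := hgen4 w₂ hm2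
          exact ⟨y, hy, x, hx, hxy.symm⟩
        · obtain ⟨x, hx, y, hy, hxy⟩ := hgen4 w₃ hm3
          exact ⟨y, hy, x, hx, hxy.symm⟩
    · simp at hadj

/-- apex: K4 minor inside the neighborhood S of v gives a K5 minor. -/
lemma graphIsMinor_K5_of_K4 {G : SimpleGraph V} {S : Set V} {v : V} (hv : v ∉ S)
    (hall : ∀ u ∈ S, G.Adj v u) (h : MinorOn G K4 S) : GraphIsMinor G K5 := by
  classical
  obtain ⟨B, h0, h1, h2, h3, h4⟩ := h
  have hvB : ∀ w, v ∉ B w := fun w hw => hv (h0 w hw)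
  have dv : ∀ s : Fin 4, Disjoint ({v} : Set V) (B s) := by
    intro s
    rw [Set.disjoint_left]
    intro z hz
    rcases hz with rfl
    exact hvB s
  have hva : ∀ s : Fin 4, ∃ x ∈ ({v} : Set V), ∃ y ∈ B s, G.Adj x y := by
    intro s
    obtain ⟨x, hx⟩ := h1 s
    exact ⟨v, rfl, x, hx, hall x (h0 s hx)⟩
  have hva' : ∀ s : Fin 4, ∃ x ∈ B s, ∃ y ∈ ({v} : Set V), G.Adj x y := by
    intro s
    obtain ⟨x, hx⟩ := h1 s
    exact ⟨x, hx, v, rfl, (hall x (h0 s hx)).symm⟩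
  refine ⟨![B 0, B 1, B 2, B 3, {v}], ?_, ?_, ?_, ?_⟩
  · intro i
    fin_cases i
    · exact h1 0
    · exact h1 1
    · exact h1 2
    · exact h1 3
    · exact ⟨v, rfl⟩
  · intro i
    fin_cases i
    · exact h2 0
    · exact h2 1
    · exact h2 2
    · exact h2 3
    · exact induce_connected_singleton' G v
  · intro i j hne
    fin_cases i <;> fin_cases j <;>
      first
      | exact absurd rfl hne
      | exact h3 _ _ (by decide)
      | exact dv _
      | exact (dv _).symm
  · intro i j hadj
    rw [top_adj] at hadj
    fin_cases i <;> fin_cases j <;>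
      first
      | exact absurd rfl hadj
      | exact h4 _ _ (by decide)
      | exact hva _
      | exact hva' _
/-- apex: K23 minor inside the neighborhood S of v gives a K33 minor. -/
lemma graphIsMinor_K33_of_K23 {G : SimpleGraph V} {S : Set V} {v : V} (hv : v ∉ S)
    (hall : ∀ u ∈ S, G.Adj v u) (h : MinorOn G K23 S) : GraphIsMinor G K33 := by
  classical
  obtain ⟨B, h0, h1, h2, h3, h4⟩ := h
  have hvB : ∀ w, v ∉ B w := fun w hw => hv (h0 w hw)
  have dv : ∀ s, Disjoint ({v} : Set V) (B s) := by
    intro s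
    rw [Set.disjoint_left]
    intro z hz
    rcases hz with rfl
    exact hvB s
  have hva : ∀ s, ∃ x ∈ ({v} : Set V), ∃ y ∈ B s, G.Adj x y := by
    intro s
    obtain ⟨x, hx⟩ := h1 s
    exact ⟨v, rfl, x, hx, hall x (h0 s hx)⟩
  have hva' : ∀ s, ∃ x ∈ B s, ∃ y ∈ ({v} : Set V), G.Adj x y := by
    intro s
    obtain ⟨x, hx⟩ := h1 s
    exact ⟨x, hx, v, rfl, (hall x (h0 s hx)).symm⟩
  refine ⟨Sum.elim (![B (Sum.inl 0), B (Sum.inl 1), {v}])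
      (![B (Sum.inr 0), B (Sum.inr 1), B (Sum.inr 2)]), ?_, ?_, ?_, ?_⟩
  · rintro (i | j)
    · fin_cases i
      · exact h1 _
      · exact h1 _
      · exact ⟨v, rfl⟩
    · fin_cases j <;> exact h1 _
  · rintro (i | j)
    · fin_cases i
      · exact h2 _
      · exact h2 _
      · exact induce_connected_singleton' G v
    · fin_cases j <;> exact h2 _
  · rintro (i | j) (i' | j') hne
    · fin_cases i <;> fin_cases i' <;>
        first
        | exact absurd rfl hne
        | exact h3 _ _ (by simp)
        | exact dv _
        | exact (dv _).symm
    · fin_cases i <;> fin_cases j' <;>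
        first
        | exact h3 _ _ (by simp)
        | exact dv _
    · fin_cases j <;> fin_cases i' <;>
        first
        | exact h3 _ _ (by simp)
        | exact (dv _).symm
    · fin_cases j <;> fin_cases j' <;>
        first
        | exact absurd rfl hne
        | exact h3 _ _ (by simp)
  · rintro (i | j) (i' | j') hadj
    · simp at hadj
    · fin_cases i <;> fin_cases j' <;>
        first
        | exact h4 _ _ (by simp)
        | exact hva _
    · fin_cases j <;> fin_cases i' <;>
        first
        | exact h4 _ _ (by simp)
        | exact hva' _
    · simp at hadj

open scoped Classical in
noncomputable def nbrS (G : SimpleGraph V) (S : Finset V) (x : V) : Finset V :=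
  S.filter (fun y => G.Adj x y)

lemma mem_nbrS {G : SimpleGraph V} {S : Finset V} {x y : V} :
    y ∈ nbrS G S x ↔ y ∈ S ∧ G.Adj x y := by
  simp [nbrS]

lemma nbrS_subset {G : SimpleGraph V} {S : Finset V} {x : V} : nbrS G S x ⊆ S :=
  fun y hy => (mem_nbrS.1 hy).1

lemma nbrS_mono_graph {G G' : SimpleGraph V} (h : G' ≤ G) (S : Finset V) (x : V) :
    nbrS G' S x ⊆ nbrS G S x := by
  intro y hy
  rw [mem_nbrS] at hy ⊢
  exact ⟨hy.1, h hy.2⟩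

lemma nbrS_mono_set {G : SimpleGraph V} {S S' : Finset V} (h : S' ⊆ S) (x : V) :
    nbrS G S' x ⊆ nbrS G S x := by
  intro y hy
  rw [mem_nbrS] at hy ⊢
  exact ⟨h hy.1, hy.2⟩

section Fin
variable [Fintype V]

noncomputable def degSum (G : SimpleGraph V) (S : Finset V) : ℕ :=
  ∑ x ∈ S, (nbrS G S x).card

noncomputable def mu (G : SimpleGraph V) (S : Finset V) : ℕ :=
  S.card * ((Fintype.card V) ^ 2 + 1) + degSum G S

lemma degSum_le (G : SimpleGraph V) (S : Finset V) : degSum G S ≤ (Fintype.card V) ^ 2 := by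
  have h1 : ∀ x ∈ S, (nbrS G S x).card ≤ Fintype.card V := by
    intro x _
    exact (Finset.card_le_card nbrS_subset).trans
      (Finset.card_le_card (Finset.subset_univ _))
  calc degSum G S ≤ S.card * Fintype.card V := by
        apply Finset.sum_le_card_nsmul _ _ _ h1
    _ ≤ Fintype.card V * Fintype.card V :=
        Nat.mul_le_mul_right _ (Finset.card_le_card (Finset.subset_univ _)) |>.trans
          (le_of_eq rfl)
    _ = (Fintype.card V) ^ 2 := (sq (Fintype.card V)).symm

lemma mu_lt_of_card_lt {G G' : SimpleGraph V} {S S' : Finset V}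
    (h : S'.card < S.card) : mu G' S' < mu G S := by
  have h2 := degSum_le G' S'
  have h3 : S'.card * ((Fintype.card V) ^ 2 + 1) + (Fintype.card V) ^ 2 <
      S.card * ((Fintype.card V) ^ 2 + 1) := by nlinarith
  unfold mu
  omega

lemma mu_lt_of_degSum_lt {G G' : SimpleGraph V} {S : Finset V}
    (h : degSum G' S < degSum G S) : mu G' S < mu G S := by
  unfold mu; omega

end Fin

/-- delete all edges at v -/
def isolate (G : SimpleGraph V) (v : V) : SimpleGraph V where
  Adj x y := G.Adj x y ∧ x ≠ v ∧ y ≠ v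
  symm := ⟨fun x y ⟨h, hx, hy⟩ => ⟨h.symm, hy, hx⟩⟩
  loopless := ⟨fun x ⟨h, _, _⟩ => G.loopless.irrefl x h⟩

lemma isolate_le (G : SimpleGraph V) (v : V) : isolate G v ≤ G := fun _ _ h => h.1

/-- add one edge -/
def addE (G : SimpleGraph V) (s t : V) : SimpleGraph V where
  Adj x y := G.Adj x y ∨ (x ≠ y ∧ ((x = s ∧ y = t) ∨ (x = t ∧ y = s)))
  symm := by
    refine ⟨?_⟩
    rintro x y (h | ⟨hne, h⟩)
    · exact Or.inl h.symm
    · exact Or.inr ⟨hne.symm, h.symm.imp (fun ⟨h1, h2⟩ => ⟨h2, h1⟩) (fun ⟨h1, h2⟩ => ⟨h2, h1⟩)⟩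
  loopless := by
    refine ⟨?_⟩
    rintro x (h | ⟨hne, _⟩)
    · exact G.loopless.irrefl x h
    · exact hne rfl

/-- delete one edge -/
def delE (G : SimpleGraph V) (s t : V) : SimpleGraph V where
  Adj x y := G.Adj x y ∧ ¬(x = s ∧ y = t) ∧ ¬(x = t ∧ y = s)
  symm := by
    refine ⟨?_⟩
    rintro x y ⟨h, h1, h2⟩
    exact ⟨h.symm, fun ⟨a, b⟩ => h2 ⟨b, a⟩, fun ⟨a, b⟩ => h1 ⟨b, a⟩⟩
  loopless := ⟨fun x ⟨h, _, _⟩ => G.loopless.irrefl x h⟩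

lemma delE_le (G : SimpleGraph V) (s t : V) : delE G s t ≤ G := fun _ _ h => h.1

lemma reachIn_prefix_closed {G : SimpleGraph V} {T : Set V} {b x : V}
    (h : ReachIn G T b x) :
    ReachIn G {z | ReachIn G T b z} b x := by
  obtain ⟨w, hw⟩ := h
  refine ⟨w, fun z hz => ?_⟩
  exact ⟨w.takeUntil z hz, fun u hu => hw u (SimpleGraph.Walk.support_takeUntil_subset _ hz hu)⟩

/-- Split off the last vertex of a path: a connected piece containing b,
not containing c, with an edge into c. -/
lemma reachIn_split {G : SimpleGraph V} {T : Set V} {b c : V}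
    (h : ReachIn G T b c) (hbc : b ≠ c) :
    ∃ B3 : Set V, B3 ⊆ T ∧ b ∈ B3 ∧ c ∉ B3 ∧ (G.induce B3).Connected ∧
      ∃ x ∈ B3, G.Adj x c := by
  classical
  set B3 : Set V := {z | ReachIn G (T \ {c}) b z} with hB3
  have hbT : b ∈ T := reachIn_mem_right (reachIn_symm h)
  have hbB : b ∈ B3 := reachIn_refl ⟨hbT, hbc⟩
  have hsub : B3 ⊆ T := fun z hz => (reachIn_mem_right hz).1
  have hcB : c ∉ B3 := fun hc => (reachIn_mem_right hc).2 rfl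
  have hconn : (G.induce B3).Connected := by
    apply induce_connected_of_reachIn ⟨b, hbB⟩
    have key : ∀ x ∈ B3, ReachIn G B3 b x := by
      intro x hx
      exact (reachIn_prefix_closed hx)
    intro x hx y hy
    exact reachIn_trans (reachIn_symm (key x hx)) (key y hy)
  -- find the last edge
  obtain ⟨w, hw⟩ := h
  set p := w.bypass with hpdef
  have hpath : p.IsPath := SimpleGraph.Walk.bypass_isPath w
  have hpsup : ∀ z ∈ p.support, z ∈ T := by
    intro z hz
    exact hw z (SimpleGraph.Walk.support_bypass_subset _ hz)
  have hrev : (p.reverse).IsPath := hpath.reverse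
  obtain ⟨x', hadj, q, hq⟩ := SimpleGraph.Walk.exists_eq_cons_of_ne hbc.symm p.reverse
  have hnodup : (p.reverse).support.Nodup := hrev.2
  rw [hq, SimpleGraph.Walk.support_cons] at hnodup
  have hcq : c ∉ q.support := (List.nodup_cons.1 hnodup).1
  have hqsub : ∀ z ∈ q.support, z ∈ T := by
    intro z hz
    have : z ∈ p.reverse.support := by
      rw [hq, SimpleGraph.Walk.support_cons]
      exact List.mem_cons_of_mem _ hz
    rw [SimpleGraph.Walk.support_reverse] at this
    exact hpsup z (List.mem_reverse.1 this)
  have hx'B : x' ∈ B3 := by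
    show ReachIn G (T \ {c}) b x'
    refine ⟨q.reverse, ?_⟩
    intro z hz
    rw [SimpleGraph.Walk.support_reverse] at hz
    have hz' := List.mem_reverse.1 hz
    exact ⟨hqsub z hz', fun hzc => hcq (hzc ▸ hz')⟩
  exact ⟨B3, hsub, hbB, hcB, hconn, x', hx'B, hadj.symm⟩

/-- build a K4 minor from four sets. -/
lemma minorOn_K4_mk {G : SimpleGraph V} {S : Set V} {B0 B1 B2 B3 : Set V}
    (hsub : B0 ⊆ S ∧ B1 ⊆ S ∧ B2 ⊆ S ∧ B3 ⊆ S)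
    (hne : B0.Nonempty ∧ B1.Nonempty ∧ B2.Nonempty ∧ B3.Nonempty)
    (hconn : (G.induce B0).Connected ∧ (G.induce B1).Connected ∧
      (G.induce B2).Connected ∧ (G.induce B3).Connected)
    (hd01 : Disjoint B0 B1) (hd02 : Disjoint B0 B2) (hd03 : Disjoint B0 B3)
    (hd12 : Disjoint B1 B2) (hd13 : Disjoint B1 B3) (hd23 : Disjoint B2 B3)
    (e01 : ∃ x ∈ B0, ∃ y ∈ B1, G.Adj x y) (e02 : ∃ x ∈ B0, ∃ y ∈ B2, G.Adj x y)
    (e03 : ∃ x ∈ B0, ∃ y ∈ B3, G.Adj x y) (e12 : ∃ x ∈ B1, ∃ y ∈ B2, G.Adj x y)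
    (e13 : ∃ x ∈ B1, ∃ y ∈ B3, G.Adj x y) (e23 : ∃ x ∈ B2, ∃ y ∈ B3, G.Adj x y) :
    MinorOn G K4 S := by
  have esymm : ∀ {A B : Set V}, (∃ x ∈ A, ∃ y ∈ B, G.Adj x y) →
      (∃ x ∈ B, ∃ y ∈ A, G.Adj x y) := by
    rintro A B ⟨x, hx, y, hy, hxy⟩
    exact ⟨y, hy, x, hx, hxy.symm⟩
  refine ⟨![B0, B1, B2, B3], ?_, ?_, ?_, ?_, ?_⟩
  · intro w
    fin_cases w
    · exact hsub.1
    · exact hsub.2.1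
    · exact hsub.2.2.1
    · exact hsub.2.2.2
  · intro w
    fin_cases w
    · exact hne.1
    · exact hne.2.1
    · exact hne.2.2.1
    · exact hne.2.2.2
  · intro w
    fin_cases w
    · exact hconn.1
    · exact hconn.2.1
    · exact hconn.2.2.1
    · exact hconn.2.2.2
  · intro w₁ w₂ hw
    fin_cases w₁ <;> fin_cases w₂ <;>
      first
      | exact absurd rfl hw
      | exact hd01 | exact hd02 | exact hd03 | exact hd12 | exact hd13 | exact hd23
      | exact hd01.symm | exact hd02.symm | exact hd03.symm | exact hd12.symm
      | exact hd13.symm | exact hd23.symm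
  · intro w₁ w₂ hw
    rw [top_adj] at hw
    fin_cases w₁ <;> fin_cases w₂ <;>
      first
      | exact absurd rfl hw
      | exact e01 | exact e02 | exact e03 | exact e12 | exact e13 | exact e23
      | exact esymm e01 | exact esymm e02 | exact esymm e03 | exact esymm e12
      | exact esymm e13 | exact esymm e23

lemma nbrS_erase {G : SimpleGraph V} {S : Finset V} {w x : V} :
    nbrS G (S.erase w) x = (nbrS G S x).erase w := by
  ext y
  simp only [mem_nbrS, Finset.mem_erase]
  tauto

lemma adj_of_mem_nbrS {G : SimpleGraph V} {S : Finset V} {x y : V}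
    (h : y ∈ nbrS G S x) : G.Adj x y := (mem_nbrS.1 h).2

lemma K23_no_triangle {w₁ w₂ w₃ : Fin 2 ⊕ Fin 3}
    (h12 : K23.Adj w₁ w₂) (h13 : K23.Adj w₁ w₃) (h23 : K23.Adj w₂ w₃) : False := by
  rcases w₁ with i | i <;> rcases w₂ with j | j <;> rcases w₃ with k | k <;> simp_all

/-- neighbours in a filtered-down vertex set (for the component argument) -/
lemma card_nbrS_ge_of_subset {G G' : SimpleGraph V} {S S' : Finset V} {x : V}
    (h : nbrS G S x ⊆ nbrS G' S' x) : (nbrS G S x).card ≤ (nbrS G' S' x).card :=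
  Finset.card_le_card h

lemma minorOn_K4_clique {G : SimpleGraph V} {S : Set V} {p q r s : V}
    (hp : p ∈ S) (hq : q ∈ S) (hr : r ∈ S) (hs : s ∈ S)
    (hpq : G.Adj p q) (hpr : G.Adj p r) (hps : G.Adj p s)
    (hqr : G.Adj q r) (hqs : G.Adj q s) (hrs : G.Adj r s) :
    MinorOn G K4 S := by
  have sing : ∀ x : V, x ∈ S → ({x} : Set V) ⊆ S := by
    intro x hx y hy
    rcases hy with rfl
    exact hx
  have dsing : ∀ x y : V, x ≠ y → Disjoint ({x} : Set V) ({y} : Set V) := by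
    intro x y hxy
    rw [Set.disjoint_left]
    intro z hz
    rcases hz with rfl
    simpa using hxy
  have esing : ∀ x y : V, G.Adj x y → ∃ u ∈ ({x} : Set V), ∃ w ∈ ({y} : Set V), G.Adj u w :=
    fun x y h => ⟨x, rfl, y, rfl, h⟩
  exact minorOn_K4_mk (B0 := {p}) (B1 := {q}) (B2 := {r}) (B3 := {s})
    ⟨sing p hp, sing q hq, sing r hr, sing s hs⟩
    ⟨⟨p, rfl⟩, ⟨q, rfl⟩, ⟨r, rfl⟩, ⟨s, rfl⟩⟩
    ⟨induce_connected_singleton' G p, induce_connected_singleton' G q,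
      induce_connected_singleton' G r, induce_connected_singleton' G s⟩
    (dsing _ _ hpq.ne) (dsing _ _ hpr.ne) (dsing _ _ hps.ne)
    (dsing _ _ hqr.ne) (dsing _ _ hqs.ne) (dsing _ _ hrs.ne)
    (esing _ _ hpq) (esing _ _ hpr) (esing _ _ hps)
    (esing _ _ hqr) (esing _ _ hqs) (esing _ _ hrs)

section BIG
variable [Fintype V]

lemma twin_case {G : SimpleGraph V} {S : Finset V} {v a b c : V}
    (IH : ∀ (G₂ : SimpleGraph V) (S₂ : Finset V) (u₂ : V), mu G₂ S₂ < mu G S → u₂ ∈ S₂ →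
      (∀ x ∈ S₂.erase u₂, 3 ≤ (nbrS G₂ S₂ x).card) → (S₂.erase u₂).Nonempty →
      MinorOn G₂ K4 (↑S₂ : Set V) ∨ MinorOn G₂ K23 (↑S₂ : Set V))
    (hvS : v ∈ S)
    (halldeg : ∀ x ∈ S, 3 ≤ (nbrS G S x).card)
    (hNv : nbrS G S v = {a, b, c})
    (hne_ab : a ≠ b) (hne_ac : a ≠ c) (hne_bc : b ≠ c)
    (hab : G.Adj a b) (hac : G.Adj a c) (hadeg : (nbrS G S a).card ≤ 3) :
    MinorOn G K4 (↑S : Set V) ∨ MinorOn G K23 (↑S : Set V) := by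
  classical
  have hmemv : ∀ x, x ∈ nbrS G S v ↔ (x ∈ S ∧ G.Adj v x) := fun x => mem_nbrS
  have haN : a ∈ nbrS G S v := by rw [hNv]; simp
  have hbN : b ∈ nbrS G S v := by rw [hNv]; simp
  have hcN : c ∈ nbrS G S v := by rw [hNv]; simp
  have haS : a ∈ S := ((hmemv a).1 haN).1
  have hbS : b ∈ S := ((hmemv b).1 hbN).1
  have hcS : c ∈ S := ((hmemv c).1 hcN).1
  have hva : G.Adj v a := ((hmemv a).1 haN).2
  have hvb : G.Adj v b := ((hmemv b).1 hbN).2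
  have hvc : G.Adj v c := ((hmemv c).1 hcN).2
  -- the neighbourhood of a is exactly {v, b, c}
  have hNa : nbrS G S a = {v, b, c} := by
    have hsub : ({v, b, c} : Finset V) ⊆ nbrS G S a := by
      intro x hx
      simp only [Finset.mem_insert, Finset.mem_singleton] at hx
      rcases hx with rfl | rfl | rfl
      · exact mem_nbrS.2 ⟨hvS, hva.symm⟩
      · exact mem_nbrS.2 ⟨hbS, hab⟩
      · exact mem_nbrS.2 ⟨hcS, hac⟩
    have hcard3 : ({v, b, c} : Finset V).card = 3 := by
      rw [Finset.card_insert_of_notMem (by simp [hvb.ne, hvc.ne]),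
        Finset.card_insert_of_notMem (by simp [hne_bc]), Finset.card_singleton]
    exact (Finset.eq_of_subset_of_card_le hsub (by omega)).symm
  by_cases hbc : G.Adj b c
  · exact Or.inl (minorOn_K4_clique hvS haS hbS hcS hva hvb hvc hab hac hbc)
  · set T : Finset V := (S.erase v).erase a with hT
    have hTsubS : T ⊆ S := (Finset.erase_subset _ _).trans (Finset.erase_subset _ _)
    have hbT : b ∈ T := by
      rw [hT]
      exact Finset.mem_erase.2 ⟨hab.ne', Finset.mem_erase.2 ⟨hvb.ne', hbS⟩⟩
    have hcT : c ∈ T := by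
      rw [hT]
      exact Finset.mem_erase.2 ⟨hac.ne', Finset.mem_erase.2 ⟨hvc.ne', hcS⟩⟩
    have hvT : v ∉ T := by
      rw [hT]
      simp
    have haT : a ∉ T := by
      rw [hT]
      simp
    by_cases hreach : ReachIn G (↑T : Set V) b c
    · -- K4 via v, a, component piece of b, and c
      obtain ⟨B3, hB3sub, hbB3, hcB3, hB3conn, x', hx'B3, hx'c⟩ :=
        reachIn_split hreach hne_bc
      have hB3S : B3 ⊆ (↑S : Set V) := hB3sub.trans (by exact_mod_cast Finset.coe_subset.2 hTsubS)
      have hvB3 : v ∉ B3 := fun h => hvT (by exact_mod_cast hB3sub h)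
      have haB3 : a ∉ B3 := fun h => haT (by exact_mod_cast hB3sub h)
      refine Or.inl (minorOn_K4_mk (B0 := {v}) (B1 := {a}) (B2 := B3) (B3 := {c})
        ⟨?_, ?_, hB3S, ?_⟩ ⟨⟨v, rfl⟩, ⟨a, rfl⟩, ⟨b, hbB3⟩, ⟨c, rfl⟩⟩
        ⟨induce_connected_singleton' G v, induce_connected_singleton' G a, hB3conn,
          induce_connected_singleton' G c⟩
        ?_ ?_ ?_ ?_ ?_ ?_
        ⟨v, rfl, a, rfl, hva⟩ ⟨v, rfl, b, hbB3, hvb⟩ ⟨v, rfl, c, rfl, hvc⟩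
        ⟨a, rfl, b, hbB3, hab⟩ ⟨a, rfl, c, rfl, hac⟩ ⟨x', hx'B3, c, rfl, hx'c⟩)
      · intro x hx; rcases hx with rfl; exact hvS
      · intro x hx; rcases hx with rfl; exact haS
      · intro x hx; rcases hx with rfl; exact hcS
      · rw [Set.disjoint_left]; intro z hz; rcases hz with rfl; simpa using hva.ne
      · rw [Set.disjoint_left]; intro z hz; rcases hz with rfl; exact hvB3
      · rw [Set.disjoint_left]; intro z hz; rcases hz with rfl; simpa using hvc.ne
      · rw [Set.disjoint_left]; intro z hz; rcases hz with rfl; exact haB3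
      · rw [Set.disjoint_left]; intro z hz; rcases hz with rfl; simpa using hac.ne
      · rw [Set.disjoint_right]; intro z hz; rcases hz with rfl; exact hcB3
    · -- component reduction
      set S' : Finset V := T.filter (fun z => ReachIn G (↑T : Set V) b z) with hS'
      have hS'subT : S' ⊆ T := Finset.filter_subset _ _
      have hS'mem : ∀ z, z ∈ S' ↔ z ∈ T ∧ ReachIn G (↑T : Set V) b z := by
        intro z
        rw [hS', Finset.mem_filter]
      have hbS' : b ∈ S' := (hS'mem b).2 ⟨hbT, reachIn_refl (by exact_mod_cast hbT)⟩
      have hcS' : c ∉ S' := fun h => hreach ((hS'mem c).1 h).2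
      -- closure of S' under neighbourhoods (away from b)
      have hclosure : ∀ z ∈ S', z ≠ b → nbrS G S z ⊆ S' := by
        intro z hz hzb w hw
        obtain ⟨hzT, hzreach⟩ := (hS'mem z).1 hz
        obtain ⟨hwS, hzw⟩ := mem_nbrS.1 hw
        have hzS : z ∈ S := hTsubS hzT
        have hznea : z ≠ a := (Finset.mem_erase.1 hzT).1
        have hznev : z ≠ v := (Finset.mem_erase.1 (Finset.mem_erase.1 hzT).2).1
        have hwv : w ≠ v := by
          intro hwv
          rw [hwv] at hzw
          have : z ∈ nbrS G S v := mem_nbrS.2 ⟨hzS, hzw.symm⟩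
          rw [hNv] at this
          simp only [Finset.mem_insert, Finset.mem_singleton] at this
          rcases this with rfl | rfl | rfl
          · exact hznea rfl
          · exact hzb rfl
          · exact hreach hzreach
        have hwa : w ≠ a := by
          intro hwa
          rw [hwa] at hzw
          have : z ∈ nbrS G S a := mem_nbrS.2 ⟨hzS, hzw.symm⟩
          rw [hNa] at this
          simp only [Finset.mem_insert, Finset.mem_singleton] at this
          rcases this with rfl | rfl | rfl
          · exact hznev rfl
          · exact hzb rfl
          · exact hreach hzreach
        have hwT : w ∈ T := by
          rw [hT]
          exact Finset.mem_erase.2 ⟨hwa, Finset.mem_erase.2 ⟨hwv, hwS⟩⟩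
        refine (hS'mem w).2 ⟨hwT, reachIn_trans hzreach
          (reachIn_single (by exact_mod_cast hzT) (by exact_mod_cast hwT) hzw)⟩
      have hdeg' : ∀ x ∈ S'.erase b, 3 ≤ (nbrS G S' x).card := by
        intro x hx
        obtain ⟨hxb, hxS'⟩ := Finset.mem_erase.1 hx
        have hsub : nbrS G S x ⊆ nbrS G S' x := by
          intro w hw
          exact mem_nbrS.2 ⟨hclosure x hxS' hxb hw, (mem_nbrS.1 hw).2⟩
        exact le_trans (halldeg x (hTsubS (hS'subT hxS'))) (Finset.card_le_card hsub)
      have hne' : (S'.erase b).Nonempty := by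
        have hvmem : v ∈ nbrS G S b := mem_nbrS.2 ⟨hvS, hvb.symm⟩
        have hamem : a ∈ (nbrS G S b).erase v := by
          refine Finset.mem_erase.2 ⟨hva.ne', mem_nbrS.2 ⟨haS, hab.symm⟩⟩
        have hc1 : 1 ≤ (((nbrS G S b).erase v).erase a).card := by
          have h1 := Finset.card_erase_of_mem hvmem
          have h2 := Finset.card_erase_of_mem hamem
          have h3 := halldeg b hbS
          omega
        obtain ⟨w, hw⟩ := Finset.card_pos.1 hc1
        obtain ⟨hwa, hw2⟩ := Finset.mem_erase.1 hw
        obtain ⟨hwv, hw3⟩ := Finset.mem_erase.1 hw2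
        obtain ⟨hwS, hbw⟩ := mem_nbrS.1 hw3
        have hwT : w ∈ T := by
          rw [hT]
          exact Finset.mem_erase.2 ⟨hwa, Finset.mem_erase.2 ⟨hwv, hwS⟩⟩
        have hwS' : w ∈ S' := (hS'mem w).2 ⟨hwT, reachIn_single
          (by exact_mod_cast hbT) (by exact_mod_cast hwT) hbw⟩
        exact ⟨w, Finset.mem_erase.2 ⟨hbw.ne', hwS'⟩⟩
      have hcard : S'.card < S.card := by
        have h1 : S'.card ≤ T.card := Finset.card_le_card hS'subT
        have h2 : T.card ≤ (S.erase v).card := Finset.card_le_card (Finset.erase_subset _ _)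
        have h3 : (S.erase v).card = S.card - 1 := Finset.card_erase_of_mem hvS
        have h4 : 1 ≤ S.card := Finset.card_pos.2 ⟨v, hvS⟩
        omega
      have := IH G S' b (mu_lt_of_card_lt hcard) hbS' hdeg' hne'
      have hS'S : (↑S' : Set V) ⊆ (↑S : Set V) := by
        exact_mod_cast Finset.coe_subset.2 (hS'subT.trans hTsubS)
      exact this.imp (MinorOn.mono_set hS'S) (MinorOn.mono_set hS'S)

lemma gadget_case {G : SimpleGraph V} {S : Finset V} {v a b c : V}
    (IH : ∀ (G₂ : SimpleGraph V) (S₂ : Finset V) (u₂ : V), mu G₂ S₂ < mu G S → u₂ ∈ S₂ →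
      (∀ x ∈ S₂.erase u₂, 3 ≤ (nbrS G₂ S₂ x).card) → (S₂.erase u₂).Nonempty →
      MinorOn G₂ K4 (↑S₂ : Set V) ∨ MinorOn G₂ K23 (↑S₂ : Set V))
    (hvS : v ∈ S)
    (halldeg : ∀ x ∈ S, 3 ≤ (nbrS G S x).card)
    (hNv : nbrS G S v = {a, b, c})
    (hne_ab : a ≠ b) (hne_ac : a ≠ c) (hne_bc : b ≠ c)
    (hnb : G.Adj b a → G.Adj b c → 4 ≤ (nbrS G S b).card)
    (hnc : G.Adj c a → G.Adj c b → 4 ≤ (nbrS G S c).card) :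
    MinorOn G K4 (↑S : Set V) ∨ MinorOn G K23 (↑S : Set V) := by
  classical
  have haN : a ∈ nbrS G S v := by rw [hNv]; simp
  have hbN : b ∈ nbrS G S v := by rw [hNv]; simp
  have hcN : c ∈ nbrS G S v := by rw [hNv]; simp
  have haS : a ∈ S := (mem_nbrS.1 haN).1
  have hbS : b ∈ S := (mem_nbrS.1 hbN).1
  have hcS : c ∈ S := (mem_nbrS.1 hcN).1
  have hva : G.Adj v a := (mem_nbrS.1 haN).2
  have hvb : G.Adj v b := (mem_nbrS.1 hbN).2
  have hvc : G.Adj v c := (mem_nbrS.1 hcN).2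
  set G' : SimpleGraph V := addE (addE (addE (isolate G v) a b) a c) b c with hG'
  set S' : Finset V := S.erase v with hS'
  have hadjdir : ∀ x y, G'.Adj x y → G.Adj x y ∨
      (x ≠ y ∧ x ∈ ({a, b, c} : Set V) ∧ y ∈ ({a, b, c} : Set V)) := by
    intro x y hxy
    rw [hG'] at hxy
    simp only [addE, isolate] at hxy
    rcases hxy with ((⟨⟨h, _, _⟩ | ⟨hne, h⟩⟩ | ⟨hne, h⟩) | ⟨hne, h⟩)
    · exact Or.inl h
    · refine Or.inr ⟨hne, ?_⟩
      rcases h with ⟨rfl, rfl⟩ | ⟨rfl, rfl⟩ <;> simp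
    · refine Or.inr ⟨hne, ?_⟩
      rcases h with ⟨rfl, rfl⟩ | ⟨rfl, rfl⟩ <;> simp
    · refine Or.inr ⟨hne, ?_⟩
      rcases h with ⟨rfl, rfl⟩ | ⟨rfl, rfl⟩ <;> simp
  have hG'genuine : ∀ x y, G.Adj x y → x ≠ v → y ≠ v → G'.Adj x y := by
    intro x y h hx hy
    rw [hG']
    exact Or.inl (Or.inl (Or.inl ⟨h, hx, hy⟩))
  have hG'ab : G'.Adj a b := by
    rw [hG']
    exact Or.inl (Or.inl (Or.inr ⟨hne_ab, Or.inl ⟨rfl, rfl⟩⟩))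
  have hG'ac : G'.Adj a c := by
    rw [hG']
    exact Or.inl (Or.inr ⟨hne_ac, Or.inl ⟨rfl, rfl⟩⟩)
  have hG'bc : G'.Adj b c := by
    rw [hG']
    exact Or.inr ⟨hne_bc, Or.inl ⟨rfl, rfl⟩⟩
  have hadjv : ∀ z, z ∈ S → G.Adj z v → z = a ∨ z = b ∨ z = c := by
    intro z hz hadj
    have : z ∈ nbrS G S v := mem_nbrS.2 ⟨hz, hadj.symm⟩
    rw [hNv] at this
    simpa using this
  have hgeneric : ∀ z, z ∈ S' → z ≠ a → z ≠ b → z ≠ c →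
      nbrS G S z ⊆ nbrS G' S' z := by
    intro z hzS' hza hzb hzc w hw
    obtain ⟨hwS, hzw⟩ := mem_nbrS.1 hw
    have hzv : z ≠ v := (Finset.mem_erase.1 hzS').1
    have hwv : w ≠ v := by
      intro hwv
      rw [hwv] at hzw
      rcases hadjv z (Finset.mem_erase.1 hzS').2 hzw with rfl | rfl | rfl
      · exact hza rfl
      · exact hzb rfl
      · exact hzc rfl
    exact mem_nbrS.2 ⟨Finset.mem_erase.2 ⟨hwv, hwS⟩, hG'genuine z w hzw hzv hwv⟩
  -- degree of b (and symmetrically c) after the surgery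
  have hdegb : ∀ z o : V, z ∈ S → o ∈ S → z ≠ v → o ≠ v → z ≠ a → z ≠ o →
      G'.Adj z a → G'.Adj z o → (G.Adj z a → G.Adj z o → 4 ≤ (nbrS G S z).card) →
      3 ≤ (nbrS G' S' z).card := by
    intro z o hzS hoS hzv hov hza hzo hG'za hG'zo hbig
    have hbase : (nbrS G S z).erase v ⊆ nbrS G' S' z := by
      intro w hw
      obtain ⟨hwv, hw'⟩ := Finset.mem_erase.1 hw
      obtain ⟨hwS, hzw⟩ := mem_nbrS.1 hw'
      exact mem_nbrS.2 ⟨Finset.mem_erase.2 ⟨hwv, hwS⟩, hG'genuine z w hzw hzv hwv⟩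
    by_cases ha' : G.Adj z a
    · by_cases ho' : G.Adj z o
      · -- degree at least 4
        have h4 := hbig ha' ho'
        have := Finset.pred_card_le_card_erase (s := nbrS G S z) (a := v)
        have := Finset.card_le_card hbase
        omega
      · -- o is a new neighbour
        have hoin : insert o ((nbrS G S z).erase v) ⊆ nbrS G' S' z := by
          intro w hw
          rcases Finset.mem_insert.1 hw with rfl | hw'
          · exact mem_nbrS.2 ⟨Finset.mem_erase.2 ⟨hov, hoS⟩, hG'zo⟩
          · exact hbase hw'
        have honotin : o ∉ (nbrS G S z).erase v := by
          intro hmem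
          exact ho' (mem_nbrS.1 (Finset.mem_of_mem_erase hmem)).2
        have h1 : (insert o ((nbrS G S z).erase v)).card =
            ((nbrS G S z).erase v).card + 1 := Finset.card_insert_of_notMem honotin
        have := Finset.pred_card_le_card_erase (s := nbrS G S z) (a := v)
        have := Finset.card_le_card hoin
        have := halldeg z hzS
        omega
    · -- a is a new neighbour
      have hain : insert a ((nbrS G S z).erase v) ⊆ nbrS G' S' z := by
        intro w hw
        rcases Finset.mem_insert.1 hw with rfl | hw'
        · exact mem_nbrS.2 ⟨Finset.mem_erase.2 ⟨hva.ne', haS⟩, hG'za⟩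
        · exact hbase hw'
      have hanotin : a ∉ (nbrS G S z).erase v := by
        intro hmem
        exact ha' (mem_nbrS.1 (Finset.mem_of_mem_erase hmem)).2
      have h1 : (insert a ((nbrS G S z).erase v)).card =
          ((nbrS G S z).erase v).card + 1 := Finset.card_insert_of_notMem hanotin
      have := Finset.pred_card_le_card_erase (s := nbrS G S z) (a := v)
      have := Finset.card_le_card hain
      have := halldeg z hzS
      omega
  have hdeg' : ∀ x ∈ S'.erase a, 3 ≤ (nbrS G' S' x).card := by
    intro x hx
    obtain ⟨hxa, hxS'⟩ := Finset.mem_erase.1 hx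
    have hxS : x ∈ S := Finset.mem_of_mem_erase hxS'
    have hxv : x ≠ v := (Finset.mem_erase.1 hxS').1
    by_cases hxb : x = b
    · subst hxb
      exact hdegb x c hxS hcS hxv hvc.ne' hxa hne_bc hG'ab.symm hG'bc
        (fun h1 h2 => hnb h1 h2)
    · by_cases hxc : x = c
      · subst hxc
        exact hdegb x b hxS hbS hxv hvb.ne' hxa (Ne.symm hne_bc) hG'ac.symm hG'bc.symm
          (fun h1 h2 => hnc h1 h2)
      · exact le_trans (halldeg x hxS) (Finset.card_le_card (hgeneric x hxS' hxa hxb hxc))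
  have haS' : a ∈ S' := Finset.mem_erase.2 ⟨hva.ne', haS⟩
  have hne' : (S'.erase a).Nonempty :=
    ⟨b, Finset.mem_erase.2 ⟨Ne.symm hne_ab, Finset.mem_erase.2 ⟨hvb.ne', hbS⟩⟩⟩
  have hcard : S'.card < S.card := by
    rw [hS', Finset.card_erase_of_mem hvS]
    have : 1 ≤ S.card := Finset.card_pos.2 ⟨v, hvS⟩
    omega
  have hrec := IH G' S' a (mu_lt_of_card_lt hcard) haS' hdeg' hne'
  have hvS' : v ∉ (↑S' : Set V) := by
    rw [hS']
    simp
  have hins : insert v (↑S' : Set V) ⊆ (↑S : Set V) := by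
    rw [Set.insert_subset_iff]
    constructor
    · exact_mod_cast hvS
    · exact_mod_cast Finset.coe_subset.2 (Finset.erase_subset _ _)
  rcases hrec with h4' | h23'
  · rcases minorOn_patch_triangle hne_ab hne_ac hne_bc hadjdir hva hvb hvc hvS' h4' with
      hgood | hfall
    · exact Or.inl (MinorOn.mono_set hins hgood)
    · exact Or.inr (MinorOn.mono_set hins (minorOn_K23_of_fallback hvS' hfall))
  · rcases minorOn_patch_triangle hne_ab hne_ac hne_bc hadjdir hva hvb hvc hvS' h23' with
      hgood | hfall
    · exact Or.inr (MinorOn.mono_set hins hgood)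
    · obtain ⟨w₁, w₂, w₃, B, -, -, -, k12, k13, k23, -⟩ := hfall
      exact absurd (K23_no_triangle k12 k13 k23) (by simp)

theorem Bplus : ∀ (N : ℕ) (G : SimpleGraph V) (S : Finset V) (u0 : V),
    mu G S ≤ N → u0 ∈ S →
    (∀ x ∈ S.erase u0, 3 ≤ (nbrS G S x).card) →
    (S.erase u0).Nonempty →
    MinorOn G K4 (↑S : Set V) ∨ MinorOn G K23 (↑S : Set V) := by
  intro N
  induction N using Nat.strong_induction_on with
  | _ N IHN =>
  intro G S u0 hmu hu0 hdeg hne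
  classical
  have IH : ∀ (G₂ : SimpleGraph V) (S₂ : Finset V) (u₂ : V), mu G₂ S₂ < mu G S → u₂ ∈ S₂ →
      (∀ x ∈ S₂.erase u₂, 3 ≤ (nbrS G₂ S₂ x).card) → (S₂.erase u₂).Nonempty →
      MinorOn G₂ K4 (↑S₂ : Set V) ∨ MinorOn G₂ K23 (↑S₂ : Set V) := by
    intro G₂ S₂ u₂ hlt h1 h2 h3
    exact IHN (mu G₂ S₂) (lt_of_lt_of_le hlt hmu) G₂ S₂ u₂ le_rfl h1 h2 h3
  by_cases hd01 : (nbrS G S u0).card ≤ 1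
  · -- deficient of degree ≤ 1 : delete u0
    obtain ⟨c0, hc0S, hc0prop⟩ : ∃ c0 ∈ S.erase u0, ∀ x, x ∈ nbrS G S u0 → x = c0 := by
      rcases Finset.eq_empty_or_nonempty (nbrS G S u0) with hemp | ⟨s, hs⟩
      · obtain ⟨x0, hx0⟩ := hne
        exact ⟨x0, hx0, by simp [hemp]⟩
      · obtain ⟨hsS, hadj⟩ := mem_nbrS.1 hs
        refine ⟨s, Finset.mem_erase.2 ⟨hadj.ne', hsS⟩, ?_⟩
        intro x hx
        exact Finset.card_le_one.1 hd01 x hx s hs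
    set S' := S.erase u0 with hS'
    have hu0nbr : ∀ x, x ∈ S' → x ≠ c0 → u0 ∉ nbrS G S x := by
      intro x hxS' hxc0 hmem
      obtain ⟨-, hadj⟩ := mem_nbrS.1 hmem
      have : x ∈ nbrS G S u0 :=
        mem_nbrS.2 ⟨Finset.mem_of_mem_erase hxS', hadj.symm⟩
      exact hxc0 (hc0prop x this)
    have hdeg' : ∀ x ∈ S'.erase c0, 3 ≤ (nbrS G S' x).card := by
      intro x hx
      obtain ⟨hxc0, hxS'⟩ := Finset.mem_erase.1 hx
      rw [hS', nbrS_erase, Finset.erase_eq_of_notMem (hu0nbr x hxS' hxc0)]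
      exact hdeg x hxS'
    have hne' : (S'.erase c0).Nonempty := by
      have h3 := hdeg c0 hc0S
      have hc0self : c0 ∉ nbrS G S c0 := fun h => (adj_of_mem_nbrS h).ne rfl
      have hcard : 1 ≤ ((nbrS G S c0).erase u0).card := by
        have := Finset.pred_card_le_card_erase (s := nbrS G S c0) (a := u0)
        omega
      obtain ⟨w, hw⟩ := Finset.card_pos.1 hcard
      obtain ⟨hwu0, hw'⟩ := Finset.mem_erase.1 hw
      obtain ⟨hwS, hadj⟩ := mem_nbrS.1 hw'
      refine ⟨w, Finset.mem_erase.2 ⟨hadj.ne', Finset.mem_erase.2 ⟨hwu0, hwS⟩⟩⟩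
    have hcard : S'.card < S.card := by
      rw [hS', Finset.card_erase_of_mem hu0]
      have : 1 ≤ S.card := Finset.card_pos.2 ⟨u0, hu0⟩
      omega
    have := IH G S' c0 (mu_lt_of_card_lt hcard) hc0S hdeg' hne'
    have hsub : (↑S' : Set V) ⊆ (↑S : Set V) := by
      exact_mod_cast Finset.coe_subset.2 (Finset.erase_subset _ _)
    exact this.imp (MinorOn.mono_set hsub) (MinorOn.mono_set hsub)
  · by_cases hd2 : (nbrS G S u0).card ≤ 2
    · -- deficient of degree exactly 2
      have hd2' : (nbrS G S u0).card = 2 := by omega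
      obtain ⟨s, t, hstne, hN0⟩ := Finset.card_eq_two.1 hd2'
      have hsN : s ∈ nbrS G S u0 := by rw [hN0]; simp
      have htN : t ∈ nbrS G S u0 := by rw [hN0]; simp
      have hsS : s ∈ S := (mem_nbrS.1 hsN).1
      have htS : t ∈ S := (mem_nbrS.1 htN).1
      have hu0s : G.Adj u0 s := (mem_nbrS.1 hsN).2
      have hu0t : G.Adj u0 t := (mem_nbrS.1 htN).2
      have hsu0 : s ≠ u0 := hu0s.ne'
      have htu0 : t ≠ u0 := hu0t.ne'
      have hadjpair : ∀ z, z ∈ S → G.Adj z u0 → z = s ∨ z = t := by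
        intro z hz ha
        have : z ∈ nbrS G S u0 := mem_nbrS.2 ⟨hz, ha.symm⟩
        rw [hN0] at this
        simpa using this
      -- helper: delete u0 when one of s,t has degree ≥ 4
      have del1 : ∀ s' t' : V, s' ∈ S → t' ∈ S → s' ≠ t' → s' ≠ u0 → t' ≠ u0 →
          (∀ z, z ∈ S → G.Adj z u0 → z = s' ∨ z = t') →
          4 ≤ (nbrS G S s').card →
          MinorOn G K4 (↑S : Set V) ∨ MinorOn G K23 (↑S : Set V) := by
        intro s' t' hs'S ht'S hst' hs'u0 ht'u0 hpair h4
        set S2 := S.erase u0 with hS2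
        have hdeg2 : ∀ x ∈ S2.erase t', 3 ≤ (nbrS G S2 x).card := by
          intro x hx
          obtain ⟨hxt', hxS2⟩ := Finset.mem_erase.1 hx
          have hxu0 : x ≠ u0 := (Finset.mem_erase.1 hxS2).1
          rw [hS2, nbrS_erase]
          by_cases hxs : x = s'
          · subst hxs
            have := Finset.pred_card_le_card_erase (s := nbrS G S x) (a := u0)
            omega
          · have hu0not : u0 ∉ nbrS G S x := by
              intro hmem
              rcases hpair x (Finset.mem_of_mem_erase hxS2) (adj_of_mem_nbrS hmem) with
                rfl | rfl
              · exact hxs rfl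
              · exact hxt' rfl
            rw [Finset.erase_eq_of_notMem hu0not]
            exact hdeg x hxS2
        have hne2 : (S2.erase t').Nonempty :=
          ⟨s', Finset.mem_erase.2 ⟨hst', Finset.mem_erase.2 ⟨hs'u0, hs'S⟩⟩⟩
        have hcard2 : S2.card < S.card := by
          rw [hS2, Finset.card_erase_of_mem hu0]
          have : 1 ≤ S.card := Finset.card_pos.2 ⟨u0, hu0⟩
          omega
        have ht'S2 : t' ∈ S2 := Finset.mem_erase.2 ⟨ht'u0, ht'S⟩
        have := IH G S2 t' (mu_lt_of_card_lt hcard2) ht'S2 hdeg2 hne2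
        have hsub : (↑S2 : Set V) ⊆ (↑S : Set V) := by
          exact_mod_cast Finset.coe_subset.2 (Finset.erase_subset _ _)
        exact this.imp (MinorOn.mono_set hsub) (MinorOn.mono_set hsub)
      by_cases hst : G.Adj s t
      · by_cases h4s : 4 ≤ (nbrS G S s).card
        · exact del1 s t hsS htS hstne hsu0 htu0 hadjpair h4s
        · by_cases h4t : 4 ≤ (nbrS G S t).card
          · exact del1 t s htS hsS hstne.symm htu0 hsu0
              (fun z hz ha => (hadjpair z hz ha).symm) h4t
          · -- both s and t have degree exactly 3
            have hdegs : (nbrS G S s).card = 3 := by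
              have := hdeg s (Finset.mem_erase.2 ⟨hsu0, hsS⟩)
              omega
            have hdegt : (nbrS G S t).card = 3 := by
              have := hdeg t (Finset.mem_erase.2 ⟨htu0, htS⟩)
              omega
            -- third neighbours x of s and y of t
            have hthird : ∀ z o : V, z ∈ S → o ∈ S → (nbrS G S z).card = 3 →
                G.Adj z u0 → G.Adj z o → o ≠ u0 →
                ∃ x, nbrS G S z = {u0, o, x} ∧ x ≠ u0 ∧ x ≠ o ∧ x ≠ z ∧
                  x ∈ S ∧ G.Adj z x := by
              intro z o hzS hoS hz3 hzu0 hzo hou0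
              have hu0m : u0 ∈ nbrS G S z := mem_nbrS.2 ⟨hu0, hzu0⟩
              have hom : o ∈ (nbrS G S z).erase u0 :=
                Finset.mem_erase.2 ⟨hou0, mem_nbrS.2 ⟨hoS, hzo⟩⟩
              have hcard1 : (((nbrS G S z).erase u0).erase o).card = 1 := by
                rw [Finset.card_erase_of_mem hom, Finset.card_erase_of_mem hu0m, hz3]
              obtain ⟨x, hx⟩ := Finset.card_eq_one.1 hcard1
              have hxmem : x ∈ ((nbrS G S z).erase u0).erase o := by rw [hx]; simp
              obtain ⟨hxo, hx2⟩ := Finset.mem_erase.1 hxmem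
              obtain ⟨hxu0, hx3⟩ := Finset.mem_erase.1 hx2
              obtain ⟨hxS, hzx⟩ := mem_nbrS.1 hx3
              refine ⟨x, ?_, hxu0, hxo, hzx.ne', hxS, hzx⟩
              have hsub : ({u0, o, x} : Finset V) ⊆ nbrS G S z := by
                intro w hw
                simp only [Finset.mem_insert, Finset.mem_singleton] at hw
                rcases hw with rfl | rfl | rfl
                · exact hu0m
                · exact Finset.mem_of_mem_erase hom
                · exact hx3
              have hc3 : ({u0, o, x} : Finset V).card = 3 := by
                rw [Finset.card_insert_of_notMem (by simp [Ne.symm hou0, Ne.symm hxu0]),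
                  Finset.card_insert_of_notMem (by simp [Ne.symm hxo]),
                  Finset.card_singleton]
              exact (Finset.eq_of_subset_of_card_le hsub (by omega)).symm
            obtain ⟨x, hNs, hxu0, hxt, hxs, hxS, hsx⟩ :=
              hthird s t hsS htS hdegs hu0s.symm hst htu0
            obtain ⟨y, hNt, hyu0, hys, hyt, hyS, hty⟩ :=
              hthird t s htS hsS hdegt hu0t.symm hst.symm hsu0
            by_cases hxy : x = y
            · -- cluster case : drop u0, s, t entirely
              subst hxy
              set S2 := ((S.erase u0).erase s).erase t with hS2
              have hxS2 : x ∈ S2 := by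
                rw [hS2]
                exact Finset.mem_erase.2 ⟨hxt,
                  Finset.mem_erase.2 ⟨hxs, Finset.mem_erase.2 ⟨hxu0, hxS⟩⟩⟩
              have hS2sub : S2 ⊆ S :=
                (Finset.erase_subset _ _).trans
                  ((Finset.erase_subset _ _).trans (Finset.erase_subset _ _))
              have hdeg2 : ∀ z ∈ S2.erase x, 3 ≤ (nbrS G S2 z).card := by
                intro z hz
                obtain ⟨hzx, hzS2⟩ := Finset.mem_erase.1 hz
                have hzt : z ≠ t := (Finset.mem_erase.1 hzS2).1
                have hzs : z ≠ s := (Finset.mem_erase.1 (Finset.mem_erase.1 hzS2).2).1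
                have hzu0 : z ≠ u0 :=
                  (Finset.mem_erase.1 (Finset.mem_erase.1
                    (Finset.mem_erase.1 hzS2).2).2).1
                have hzS : z ∈ S := hS2sub hzS2
                rw [hS2, nbrS_erase, nbrS_erase, nbrS_erase]
                have h1 : u0 ∉ nbrS G S z := by
                  intro hm
                  rcases hadjpair z hzS (adj_of_mem_nbrS hm) with rfl | rfl
                  · exact hzs rfl
                  · exact hzt rfl
                have h2 : s ∉ nbrS G S z := by
                  intro hm
                  have : z ∈ nbrS G S s := mem_nbrS.2 ⟨hzS, (adj_of_mem_nbrS hm).symm⟩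
                  rw [hNs] at this
                  simp only [Finset.mem_insert, Finset.mem_singleton] at this
                  rcases this with rfl | rfl | rfl
                  · exact hzu0 rfl
                  · exact hzt rfl
                  · exact hzx rfl
                have h3 : t ∉ nbrS G S z := by
                  intro hm
                  have : z ∈ nbrS G S t := mem_nbrS.2 ⟨hzS, (adj_of_mem_nbrS hm).symm⟩
                  rw [hNt] at this
                  simp only [Finset.mem_insert, Finset.mem_singleton] at this
                  rcases this with rfl | rfl | rfl
                  · exact hzu0 rfl
                  · exact hzs rfl
                  · exact hzx rfl
                rw [Finset.erase_eq_of_notMem h1, Finset.erase_eq_of_notMem h2,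
                  Finset.erase_eq_of_notMem h3]
                exact hdeg z (Finset.mem_erase.2 ⟨hzu0, hzS⟩)
              have hne2 : (S2.erase x).Nonempty := by
                have hx3 := hdeg x (Finset.mem_erase.2 ⟨hxu0, hxS⟩)
                have hsm : s ∈ nbrS G S x := mem_nbrS.2 ⟨hsS, hsx.symm⟩
                have htm : t ∈ (nbrS G S x).erase s :=
                  Finset.mem_erase.2 ⟨Ne.symm hstne, mem_nbrS.2 ⟨htS, hty.symm⟩⟩
                have hc1 : 1 ≤ (((nbrS G S x).erase s).erase t).card := by
                  rw [Finset.card_erase_of_mem htm, Finset.card_erase_of_mem hsm]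
                  omega
                obtain ⟨w, hw⟩ := Finset.card_pos.1 hc1
                obtain ⟨hwt, hw2⟩ := Finset.mem_erase.1 hw
                obtain ⟨hws, hw3⟩ := Finset.mem_erase.1 hw2
                obtain ⟨hwS, hxw⟩ := mem_nbrS.1 hw3
                have hwu0 : w ≠ u0 := by
                  intro hwu0
                  rw [hwu0] at hxw
                  rcases hadjpair x hxS hxw with h' | h'
                  · exact hxs h'
                  · exact hxt h' 
                refine ⟨w, Finset.mem_erase.2 ⟨hxw.ne', Finset.mem_erase.2
                  ⟨hwt, Finset.mem_erase.2 ⟨hws, Finset.mem_erase.2 ⟨hwu0, hwS⟩⟩⟩⟩⟩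
              have hcard2 : S2.card < S.card := by
                have h1 : S2.card ≤ (S.erase u0).card :=
                  Finset.card_le_card ((Finset.erase_subset _ _).trans
                    (Finset.erase_subset _ _))
                rw [Finset.card_erase_of_mem hu0] at h1
                have : 1 ≤ S.card := Finset.card_pos.2 ⟨u0, hu0⟩
                omega
              have := IH G S2 x (mu_lt_of_card_lt hcard2) hxS2 hdeg2 hne2
              have hsub : (↑S2 : Set V) ⊆ (↑S : Set V) := by
                exact_mod_cast Finset.coe_subset.2 hS2sub
              exact this.imp (MinorOn.mono_set hsub) (MinorOn.mono_set hsub)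
            · -- x ≠ y : suppress the triangle path through u0 and t
              set G2 : SimpleGraph V := addE (isolate (isolate G u0) t) s y with hG2
              set S2 : Finset V := (S.erase u0).erase t with hS2
              have hS2sub : S2 ⊆ S :=
                (Finset.erase_subset _ _).trans (Finset.erase_subset _ _)
              have hG2dir : ∀ p q, G2.Adj p q → G.Adj p q ∨ (p = s ∧ q = y) ∨
                  (p = y ∧ q = s) := by
                intro p q hpq
                rw [hG2] at hpq
                rcases hpq with ⟨⟨h, -, -⟩, -, -⟩ | ⟨-, h⟩
                · exact Or.inl h
                · exact Or.inr h
              have hG2genuine : ∀ p q, G.Adj p q → p ≠ u0 → q ≠ u0 → p ≠ t → q ≠ t →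
                  G2.Adj p q := by
                intro p q h h1 h2 h3 h4
                rw [hG2]
                exact Or.inl ⟨⟨h, h1, h2⟩, h3, h4⟩
              have hG2sy : G2.Adj s y := by
                rw [hG2]
                exact Or.inr ⟨hys.symm, Or.inl ⟨rfl, rfl⟩⟩
              have hsS2 : s ∈ S2 :=
                Finset.mem_erase.2 ⟨hstne, Finset.mem_erase.2 ⟨hsu0, hsS⟩⟩
              have hyS2 : y ∈ S2 :=
                Finset.mem_erase.2 ⟨hyt, Finset.mem_erase.2 ⟨hyu0, hyS⟩⟩
              have hdeg2 : ∀ z ∈ S2.erase s, 3 ≤ (nbrS G2 S2 z).card := by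
                intro z hz
                obtain ⟨hzs, hzS2⟩ := Finset.mem_erase.1 hz
                have hzt : z ≠ t := (Finset.mem_erase.1 hzS2).1
                have hzu0 : z ≠ u0 := (Finset.mem_erase.1 (Finset.mem_erase.1 hzS2).2).1
                have hzS : z ∈ S := hS2sub hzS2
                by_cases hzy : z = y
                · subst hzy
                  have hin : insert s (((nbrS G S z).erase u0).erase t) ⊆
                      nbrS G2 S2 z := by
                    intro w hw
                    rcases Finset.mem_insert.1 hw with rfl | hw'
                    · exact mem_nbrS.2 ⟨hsS2, hG2sy.symm⟩
                    · obtain ⟨hwt, hw2⟩ := Finset.mem_erase.1 hw'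
                      obtain ⟨hwu0, hw3⟩ := Finset.mem_erase.1 hw2
                      obtain ⟨hwS, hzw⟩ := mem_nbrS.1 hw3
                      exact mem_nbrS.2 ⟨Finset.mem_erase.2 ⟨hwt,
                        Finset.mem_erase.2 ⟨hwu0, hwS⟩⟩,
                        hG2genuine z w hzw hzu0 hwu0 hzt hwt⟩
                  have hsnot : s ∉ ((nbrS G S z).erase u0).erase t := by
                    intro hm
                    have : z ∈ nbrS G S s := mem_nbrS.2
                      ⟨hzS, (adj_of_mem_nbrS (Finset.mem_of_mem_erase
                        (Finset.mem_of_mem_erase hm))).symm⟩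
                    rw [hNs] at this
                    simp only [Finset.mem_insert, Finset.mem_singleton] at this
                    rcases this with rfl | rfl | rfl
                    · exact hzu0 rfl
                    · exact hzt rfl
                    · exact hxy rfl
                  have hu0not : u0 ∉ nbrS G S z := by
                    intro hm
                    rcases hadjpair z hzS (adj_of_mem_nbrS hm) with rfl | rfl
                    · exact hzs rfl
                    · exact hzt rfl
                  have htmem : t ∈ (nbrS G S z).erase u0 :=
                    Finset.mem_erase.2 ⟨htu0, mem_nbrS.2 ⟨htS, hty.symm⟩⟩
                  have hc := Finset.card_le_card hin
                  rw [Finset.card_insert_of_notMem hsnot,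
                    Finset.card_erase_of_mem htmem,
                    Finset.erase_eq_of_notMem hu0not] at hc
                  have := hdeg z (Finset.mem_erase.2 ⟨hzu0, hzS⟩)
                  omega
                · have hin : nbrS G S z ⊆ nbrS G2 S2 z := by
                    intro w hw
                    obtain ⟨hwS, hzw⟩ := mem_nbrS.1 hw
                    have hwu0 : w ≠ u0 := by
                      intro hwu0
                      rw [hwu0] at hzw
                      rcases hadjpair z hzS hzw with rfl | rfl
                      · exact hzs rfl
                      · exact hzt rfl
                    have hwt : w ≠ t := by
                      intro hwt
                      rw [hwt] at hzw
                      have : z ∈ nbrS G S t := mem_nbrS.2 ⟨hzS, hzw.symm⟩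
                      rw [hNt] at this
                      simp only [Finset.mem_insert, Finset.mem_singleton] at this
                      rcases this with rfl | rfl | rfl
                      · exact hzu0 rfl
                      · exact hzs rfl
                      · exact hzy rfl
                    exact mem_nbrS.2 ⟨Finset.mem_erase.2 ⟨hwt,
                      Finset.mem_erase.2 ⟨hwu0, hwS⟩⟩,
                      hG2genuine z w hzw hzu0 hwu0 hzt hwt⟩
                  exact le_trans (hdeg z (Finset.mem_erase.2 ⟨hzu0, hzS⟩))
                    (Finset.card_le_card hin)
              have hne2 : (S2.erase s).Nonempty :=
                ⟨y, Finset.mem_erase.2 ⟨hys, hyS2⟩⟩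
              have hcard2 : S2.card < S.card := by
                have h1 : S2.card ≤ (S.erase u0).card :=
                  Finset.card_le_card (Finset.erase_subset _ _)
                rw [Finset.card_erase_of_mem hu0] at h1
                have : 1 ≤ S.card := Finset.card_pos.2 ⟨u0, hu0⟩
                omega
              have hrec := IH G2 S2 s (mu_lt_of_card_lt hcard2) hsS2 hdeg2 hne2
              have htS2 : t ∉ (↑S2 : Set V) := by
                rw [hS2]
                simp
              have hins : insert t (↑S2 : Set V) ⊆ (↑S : Set V) := by
                rw [Set.insert_subset_iff]
                constructor
                · exact_mod_cast htS
                · exact_mod_cast Finset.coe_subset.2 hS2sub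
              refine hrec.imp ?_ ?_ <;>
                exact fun hmin => MinorOn.mono_set hins
                  (minorOn_patch_one hG2dir hst.symm hty htS2 hmin)
      · -- s and t not adjacent : suppress u0 adding the edge st
        set G2 : SimpleGraph V := addE (isolate G u0) s t with hG2
        set S2 : Finset V := S.erase u0 with hS2
        have hG2dir : ∀ p q, G2.Adj p q → G.Adj p q ∨ (p = s ∧ q = t) ∨
            (p = t ∧ q = s) := by
          intro p q hpq
          rw [hG2] at hpq
          rcases hpq with ⟨h, -, -⟩ | ⟨-, h⟩
          · exact Or.inl h
          · exact Or.inr h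
        have hG2genuine : ∀ p q, G.Adj p q → p ≠ u0 → q ≠ u0 → G2.Adj p q := by
          intro p q h h1 h2
          rw [hG2]
          exact Or.inl ⟨h, h1, h2⟩
        have hG2st : G2.Adj s t := by
          rw [hG2]
          exact Or.inr ⟨hstne, Or.inl ⟨rfl, rfl⟩⟩
        have hsS2 : s ∈ S2 := Finset.mem_erase.2 ⟨hsu0, hsS⟩
        have htS2 : t ∈ S2 := Finset.mem_erase.2 ⟨htu0, htS⟩
        have hdeg2 : ∀ z ∈ S2.erase s, 3 ≤ (nbrS G2 S2 z).card := by
          intro z hz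
          obtain ⟨hzs, hzS2⟩ := Finset.mem_erase.1 hz
          have hzu0 : z ≠ u0 := (Finset.mem_erase.1 hzS2).1
          have hzS : z ∈ S := Finset.mem_of_mem_erase hzS2
          by_cases hzt : z = t
          · subst hzt
            have hin : insert s ((nbrS G S z).erase u0) ⊆ nbrS G2 S2 z := by
              intro w hw
              rcases Finset.mem_insert.1 hw with rfl | hw'
              · exact mem_nbrS.2 ⟨hsS2, hG2st.symm⟩
              · obtain ⟨hwu0, hw2⟩ := Finset.mem_erase.1 hw'
                obtain ⟨hwS, hzw⟩ := mem_nbrS.1 hw2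
                exact mem_nbrS.2 ⟨Finset.mem_erase.2 ⟨hwu0, hwS⟩,
                  hG2genuine z w hzw hzu0 hwu0⟩
            have hsnot : s ∉ (nbrS G S z).erase u0 := by
              intro hm
              exact hst ((adj_of_mem_nbrS (Finset.mem_of_mem_erase hm)).symm)
            have hu0mem : u0 ∈ nbrS G S z := mem_nbrS.2 ⟨hu0, hu0t.symm⟩
            have hc := Finset.card_le_card hin
            rw [Finset.card_insert_of_notMem hsnot,
              Finset.card_erase_of_mem hu0mem] at hc
            have := hdeg z (Finset.mem_erase.2 ⟨hzu0, hzS⟩)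
            omega
          · have hin : nbrS G S z ⊆ nbrS G2 S2 z := by
              intro w hw
              obtain ⟨hwS, hzw⟩ := mem_nbrS.1 hw
              have hwu0 : w ≠ u0 := by
                intro hwu0
                rw [hwu0] at hzw
                rcases hadjpair z hzS hzw with rfl | rfl
                · exact hzs rfl
                · exact hzt rfl
              exact mem_nbrS.2 ⟨Finset.mem_erase.2 ⟨hwu0, hwS⟩,
                hG2genuine z w hzw hzu0 hwu0⟩
            exact le_trans (hdeg z (Finset.mem_erase.2 ⟨hzu0, hzS⟩))
              (Finset.card_le_card hin)
        have hne2 : (S2.erase s).Nonempty := ⟨t, Finset.mem_erase.2 ⟨Ne.symm hstne, htS2⟩⟩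
        have hcard2 : S2.card < S.card := by
          rw [hS2, Finset.card_erase_of_mem hu0]
          have : 1 ≤ S.card := Finset.card_pos.2 ⟨u0, hu0⟩
          omega
        have hrec := IH G2 S2 s (mu_lt_of_card_lt hcard2) hsS2 hdeg2 hne2
        have hu0S2 : u0 ∉ (↑S2 : Set V) := by
          rw [hS2]
          simp
        have hins : insert u0 (↑S2 : Set V) ⊆ (↑S : Set V) := by
          rw [Set.insert_subset_iff]
          constructor
          · exact_mod_cast hu0
          · exact_mod_cast Finset.coe_subset.2 (Finset.erase_subset _ _)
        refine hrec.imp ?_ ?_ <;>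
          exact fun hmin => MinorOn.mono_set hins
            (minorOn_patch_one hG2dir hu0s hu0t hu0S2 hmin)
    · -- main line : u0 has degree ≥ 3 too
      have halldeg : ∀ x ∈ S, 3 ≤ (nbrS G S x).card := by
        intro x hx
        by_cases hxu0 : x = u0
        · subst hxu0; omega
        · exact hdeg x (Finset.mem_erase.2 ⟨hxu0, hx⟩)
      by_cases hE44 : ∃ p, p ∈ S ∧ ∃ q, q ∈ S ∧ G.Adj p q ∧
          4 ≤ (nbrS G S p).card ∧ 4 ≤ (nbrS G S q).card
      · obtain ⟨p, hpS, q, hqS, hpq, h4p, h4q⟩ := hE44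
        set G2 : SimpleGraph V := delE G p q with hG2
        have hG2le : G2 ≤ G := delE_le G p q
        have hG2genuine : ∀ z w, G.Adj z w → ¬(z = p ∧ w = q) → ¬(z = q ∧ w = p) →
            G2.Adj z w := by
          intro z w h h1 h2
          rw [hG2]
          exact ⟨h, h1, h2⟩
        have hdeg2 : ∀ x ∈ S.erase u0, 3 ≤ (nbrS G2 S x).card := by
          intro x hx
          have hxS : x ∈ S := Finset.mem_of_mem_erase hx
          by_cases hxp : x = p
          · subst hxp
            have hin : (nbrS G S x).erase q ⊆ nbrS G2 S x := by
              intro w hw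
              obtain ⟨hwq, hw'⟩ := Finset.mem_erase.1 hw
              obtain ⟨hwS, hxw⟩ := mem_nbrS.1 hw'
              refine mem_nbrS.2 ⟨hwS, hG2genuine x w hxw (fun ⟨_, h⟩ => hwq h) ?_⟩
              rintro ⟨rfl, -⟩
              exact hpq.ne rfl
            have := Finset.card_le_card hin
            have := Finset.pred_card_le_card_erase (s := nbrS G S x) (a := q)
            omega
          · by_cases hxq : x = q
            · subst hxq
              have hin : (nbrS G S x).erase p ⊆ nbrS G2 S x := by
                intro w hw
                obtain ⟨hwp, hw'⟩ := Finset.mem_erase.1 hw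
                obtain ⟨hwS, hxw⟩ := mem_nbrS.1 hw'
                refine mem_nbrS.2 ⟨hwS, hG2genuine x w hxw ?_ (fun ⟨_, h⟩ => hwp h)⟩
                rintro ⟨rfl, -⟩
                exact hpq.ne rfl
              have := Finset.card_le_card hin
              have := Finset.pred_card_le_card_erase (s := nbrS G S x) (a := p)
              omega
            · have hin : nbrS G S x ⊆ nbrS G2 S x := by
                intro w hw
                obtain ⟨hwS, hxw⟩ := mem_nbrS.1 hw
                exact mem_nbrS.2 ⟨hwS, hG2genuine x w hxw
                  (fun ⟨h, _⟩ => hxp h) (fun ⟨h, _⟩ => hxq h)⟩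
              exact le_trans (halldeg x hxS) (Finset.card_le_card hin)
        have hdegsum : degSum G2 S < degSum G S := by
          apply Finset.sum_lt_sum
          · intro i _
            exact Finset.card_le_card (nbrS_mono_graph hG2le S i)
          · refine ⟨p, hpS, ?_⟩
            apply Finset.card_lt_card
            rw [Finset.ssubset_iff_of_subset (nbrS_mono_graph hG2le S p)]
            refine ⟨q, mem_nbrS.2 ⟨hqS, hpq⟩, ?_⟩
            intro hq2
            have := (mem_nbrS.1 hq2).2
            rw [hG2] at this
            exact this.2.1 ⟨rfl, rfl⟩
        have hrec := IH G2 S u0 (mu_lt_of_degSum_lt hdegsum) hu0 hdeg2 hne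
        exact hrec.imp (MinorOn.mono_graph hG2le) (MinorOn.mono_graph hG2le)
      · -- find a vertex v of degree exactly 3
        push_neg at hd01 hd2
        obtain ⟨v, hvS, hv3⟩ : ∃ v ∈ S, (nbrS G S v).card = 3 := by
          by_cases hu03 : (nbrS G S u0).card ≤ 3
          · exact ⟨u0, hu0, by omega⟩
          · have hpos : 0 < (nbrS G S u0).card := by omega
            obtain ⟨w0, hw0⟩ := Finset.card_pos.1 hpos
            obtain ⟨hw0S, hadj0⟩ := mem_nbrS.1 hw0
            refine ⟨w0, hw0S, ?_⟩
            have hw03 : ¬(4 ≤ (nbrS G S w0).card) := by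
              intro h4
              exact hE44 ⟨u0, hu0, w0, hw0S, hadj0, by omega, h4⟩
            have := halldeg w0 hw0S
            omega
        obtain ⟨a, b, c, hne_ab, hne_ac, hne_bc, hNv⟩ := Finset.card_eq_three.1 hv3
        have haN : a ∈ nbrS G S v := by rw [hNv]; simp
        have hbN : b ∈ nbrS G S v := by rw [hNv]; simp
        have hcN : c ∈ nbrS G S v := by rw [hNv]; simp
        by_cases hbada : G.Adj a b ∧ G.Adj a c ∧ (nbrS G S a).card ≤ 3
        · exact twin_case IH hvS halldeg hNv hne_ab hne_ac hne_bc
            hbada.1 hbada.2.1 hbada.2.2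
        · by_cases hbadb : G.Adj b a ∧ G.Adj b c ∧ (nbrS G S b).card ≤ 3
          · have hNv' : nbrS G S v = {b, a, c} := by
              rw [hNv, Finset.insert_comm]
            exact twin_case IH hvS halldeg hNv' (Ne.symm hne_ab) hne_bc hne_ac
              hbadb.1 hbadb.2.1 hbadb.2.2
          · by_cases hbadc : G.Adj c a ∧ G.Adj c b ∧ (nbrS G S c).card ≤ 3
            · have hNv' : nbrS G S v = {c, a, b} := by
                rw [hNv]
                ext z
                simp only [Finset.mem_insert, Finset.mem_singleton]
                tauto
              exact twin_case IH hvS halldeg hNv' (Ne.symm hne_ac) (Ne.symm hne_bc)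
                hne_ab hbadc.1 hbadc.2.1 hbadc.2.2
            · refine gadget_case IH hvS halldeg hNv hne_ab hne_ac hne_bc ?_ ?_
              · intro h1 h2
                by_contra h4
                exact hbadb ⟨h1, h2, by omega⟩
              · intro h1 h2
                by_contra h4
                exact hbadc ⟨h1, h2, by omega⟩

end BIG

section THMA
variable [Fintype V]

open scoped Classical in
noncomputable def eF (G : SimpleGraph V) : Finset (Sym2 V) :=
  Finset.univ.filter (fun e => e ∈ G.edgeSet)

open scoped Classical in
noncomputable def suppF (G : SimpleGraph V) : Finset V :=
  Finset.univ.filter (fun v => ∃ w, G.Adj v w)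

lemma mem_eF {G : SimpleGraph V} {e : Sym2 V} : e ∈ eF G ↔ e ∈ G.edgeSet := by
  simp [eF]

lemma mem_suppF {G : SimpleGraph V} {v : V} : v ∈ suppF G ↔ ∃ w, G.Adj v w := by
  simp [suppF]

lemma adj_mem_eF {G : SimpleGraph V} {x y : V} (h : G.Adj x y) : s(x, y) ∈ eF G :=
  mem_eF.2 h

/-- the edges at v are in bijection with the neighbours of v -/
lemma card_filter_mem_eF (G : SimpleGraph V) (v : V) :
    ((eF G).filter (fun e => v ∈ e)).card = (nbrS G Finset.univ v).card := by
  classical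
  symm
  apply Finset.card_bij (fun w _ => s(v, w))
  · intro w hw
    rw [Finset.mem_filter]
    obtain ⟨-, hadj⟩ := mem_nbrS.1 hw
    exact ⟨adj_mem_eF hadj, by simp⟩
  · intro w1 hw1 w2 hw2 heq
    have h1 : G.Adj v w1 := (mem_nbrS.1 hw1).2
    rw [Sym2.eq_iff] at heq
    rcases heq with ⟨-, h⟩ | ⟨hvw, hwv⟩
    · exact h
    · exact hwv.trans hvw
  · intro e he
    rw [Finset.mem_filter] at he
    obtain ⟨heE, hve⟩ := he
    induction e with
    | _ x y =>
      rw [mem_eF, SimpleGraph.mem_edgeSet] at heE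
      rw [Sym2.mem_iff] at hve
      rcases hve with rfl | rfl
      · exact ⟨y, mem_nbrS.2 ⟨Finset.mem_univ _, heE⟩, rfl⟩
      · exact ⟨x, mem_nbrS.2 ⟨Finset.mem_univ _, heE.symm⟩, Sym2.eq_swap⟩

lemma eF_isolate (G : SimpleGraph V) (v : V) :
    eF (isolate G v) = (eF G).filter (fun e => v ∉ e) := by
  classical
  ext e
  induction e with
  | _ x y =>
    rw [Finset.mem_filter, mem_eF, mem_eF, SimpleGraph.mem_edgeSet,
      SimpleGraph.mem_edgeSet]
    constructor
    · rintro ⟨h, hx, hy⟩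
      refine ⟨h, ?_⟩
      rw [Sym2.mem_iff]
      rintro (rfl | rfl)
      · exact hx rfl
      · exact hy rfl
    · rintro ⟨h, hv⟩
      rw [Sym2.mem_iff] at hv
      push_neg at hv
      exact ⟨h, fun hh => hv.1 hh.symm, fun hh => hv.2 hh.symm⟩

lemma card_eF_isolate (G : SimpleGraph V) (v : V) :
    (eF (isolate G v)).card = (eF G).card - (nbrS G Finset.univ v).card := by
  classical
  have hsplit := Finset.card_filter_add_card_filter_not
    (s := eF G) (p := fun e => v ∈ e)
  rw [eF_isolate]
  have := card_filter_mem_eF G v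
  have hco : ∀ e : Sym2 V, (¬ v ∈ e) = (v ∉ e) := fun _ => rfl
  omega

lemma suppF_isolate_subset (G : SimpleGraph V) (v : V) :
    suppF (isolate G v) ⊆ (suppF G).erase v := by
  intro x hx
  obtain ⟨w, hw⟩ := mem_suppF.1 hx
  exact Finset.mem_erase.2 ⟨hw.2.1, mem_suppF.2 ⟨w, hw.1⟩⟩

lemma card_eF_isolate' (G : SimpleGraph V) (v : V) :
    (eF (isolate G v)).card + (nbrS G Finset.univ v).card = (eF G).card := by
  classical
  have hsplit := Finset.card_filter_add_card_filter_not
    (s := eF G) (p := fun e => v ∈ e)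
  rw [eF_isolate]
  have h1 := card_filter_mem_eF G v
  omega

lemma card_eF_contractE (G : SimpleGraph V) {u v : V} (huv : G.Adj u v) :
    (eF G).card ≤ (eF (contractE G u v)).card + 1 +
      ((nbrS G Finset.univ u) ∩ (nbrS G Finset.univ v)).card := by
  classical
  set Nu := nbrS G Finset.univ u with hNu
  set Nv := nbrS G Finset.univ v with hNv
  set A := eF (isolate G v) with hA
  set Bsrc := Nv \ (insert u (Nu ∩ Nv)) with hBsrc
  set B := Bsrc.image (fun y => s(u, y)) with hB
  have hmemNv : ∀ y, y ∈ Nv ↔ G.Adj v y := by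
    intro y
    rw [hNv, mem_nbrS]
    simp
  have hmemNu : ∀ y, y ∈ Nu ↔ G.Adj u y := by
    intro y
    rw [hNu, mem_nbrS]
    simp
  have hBsrc_spec : ∀ y ∈ Bsrc, G.Adj v y ∧ y ≠ u ∧ ¬G.Adj u y := by
    intro y hy
    rw [hBsrc, Finset.mem_sdiff, Finset.mem_insert] at hy
    push_neg at hy
    obtain ⟨h1, h2, h3⟩ := hy
    refine ⟨(hmemNv y).1 h1, h2, fun hadj => h3 (Finset.mem_inter.2 ⟨(hmemNu y).2 hadj, h1⟩)⟩
  -- A and B are disjoint subsets of the contracted edge set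
  have hAsub : A ⊆ eF (contractE G u v) := by
    intro e he
    rw [hA, mem_eF] at he
    rw [mem_eF]
    induction e with
    | _ x y =>
      rw [SimpleGraph.mem_edgeSet] at he ⊢
      obtain ⟨h, hx, hy⟩ := he
      exact ⟨Or.inl h, hx, hy, h.ne⟩
  have hBsub : B ⊆ eF (contractE G u v) := by
    intro e he
    rw [hB, Finset.mem_image] at he
    obtain ⟨y, hy, rfl⟩ := he
    obtain ⟨hvy, hyu, hnuy⟩ := hBsrc_spec y hy
    rw [mem_eF, SimpleGraph.mem_edgeSet]
    exact ⟨Or.inr (Or.inl ⟨rfl, hvy⟩), huv.ne, hvy.ne', Ne.symm hyu⟩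
  have hdisj : Disjoint A B := by
    rw [Finset.disjoint_left]
    intro e heA heB
    rw [hB, Finset.mem_image] at heB
    obtain ⟨y, hy, rfl⟩ := heB
    obtain ⟨-, -, hnuy⟩ := hBsrc_spec y hy
    rw [hA, mem_eF, SimpleGraph.mem_edgeSet] at heA
    exact hnuy heA.1
  have hcardB : B.card = Bsrc.card := by
    rw [hB]
    apply Finset.card_image_of_injOn
    intro y1 hy1 y2 hy2 heq
    obtain ⟨-, hy1u, -⟩ := hBsrc_spec y1 hy1
    obtain ⟨-, hy2u, -⟩ := hBsrc_spec y2 hy2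
    rw [Sym2.eq_iff] at heq
    rcases heq with ⟨-, h⟩ | ⟨h1, h2⟩
    · exact h
    · exact absurd h1.symm hy2u
  have hunion : (A ∪ B).card ≤ (eF (contractE G u v)).card :=
    Finset.card_le_card (Finset.union_subset hAsub hBsub)
  rw [Finset.card_union_of_disjoint hdisj] at hunion
  have h1 := card_eF_isolate' G v
  have h2 : Nv.card ≤ Bsrc.card + (insert u (Nu ∩ Nv)).card := by
    rw [hBsrc]
    exact Finset.card_le_card_sdiff_add_card
  have h3 : (insert u (Nu ∩ Nv)).card ≤ (Nu ∩ Nv).card + 1 := by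
    have := Finset.card_insert_le u (Nu ∩ Nv)
    omega
  have hcA : A.card + Nv.card = (eF G).card := h1
  omega

lemma suppF_contract_subset (G : SimpleGraph V) (u v : V) (huv : G.Adj u v) :
    suppF (contractE G u v) ⊆ (suppF G).erase v := by
  intro x hx
  obtain ⟨w, hw⟩ := mem_suppF.1 hx
  obtain ⟨hor, hxv, hwv, hxw⟩ := hw
  refine Finset.mem_erase.2 ⟨hxv, mem_suppF.2 ?_⟩
  rcases hor with h | ⟨rfl, h⟩ | ⟨rfl, h⟩
  · exact ⟨w, h⟩
  · exact ⟨v, huv⟩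
  · exact ⟨v, h⟩

lemma K5_no_isolated : ∀ w : Fin 5, ∃ w', K5.Adj w w' := by decide

lemma K33_no_isolated : ∀ w : Fin 3 ⊕ Fin 3, ∃ w', K33.Adj w w' := by
  rintro (i | i)
  · exact ⟨Sum.inr 0, by simp⟩
  · exact ⟨Sum.inl 0, by simp⟩

theorem thmA : ∀ (N : ℕ) (G : SimpleGraph V), (suppF G).card ≤ N →
    3 * (suppF G).card + 1 ≤ (eF G).card →
    GraphIsMinor G K5 ∨ GraphIsMinor G K33 := by
  intro N
  induction N using Nat.strong_induction_on with
  | _ N IHN =>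
  intro G hsupp hedge
  classical
  by_cases hlow : ∃ w ∈ suppF G, (nbrS G Finset.univ w).card ≤ 3
  · obtain ⟨w, hwsupp, hwdeg⟩ := hlow
    set G' := isolate G w with hG'
    have hdegpos : 1 ≤ (nbrS G Finset.univ w).card := by
      obtain ⟨z, hz⟩ := mem_suppF.1 hwsupp
      exact Finset.card_pos.2 ⟨z, mem_nbrS.2 ⟨Finset.mem_univ _, hz⟩⟩
    have hsupp' : (suppF G').card < (suppF G).card := by
      have h1 := Finset.card_le_card (suppF_isolate_subset G w)
      rw [← hG'] at h1
      rw [Finset.card_erase_of_mem hwsupp] at h1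
      have : 1 ≤ (suppF G).card := Finset.card_pos.2 ⟨w, hwsupp⟩
      omega
    have hiso := card_eF_isolate' G w
    rw [← hG'] at hiso
    have hedge' : 3 * (suppF G').card + 1 ≤ (eF G').card := by
      have h1 := Finset.card_le_card (suppF_isolate_subset G w)
      rw [← hG'] at h1
      rw [Finset.card_erase_of_mem hwsupp] at h1
      omega
    have := IHN (suppF G').card (lt_of_lt_of_le hsupp' hsupp) G' le_rfl hedge'
    exact this.imp (GraphIsMinor.mono_graph (isolate_le G w))
      (GraphIsMinor.mono_graph (isolate_le G w))
  · push_neg at hlow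
    by_cases hE : ∃ p q, G.Adj p q ∧
        ((nbrS G Finset.univ p) ∩ (nbrS G Finset.univ q)).card ≤ 2
    · obtain ⟨p, q, hpq, hc⟩ := hE
      set G' := contractE G p q with hG'
      have hqsupp : q ∈ suppF G := mem_suppF.2 ⟨p, hpq.symm⟩
      have hsupp' : (suppF G').card < (suppF G).card := by
        have h1 := Finset.card_le_card (suppF_contract_subset G p q hpq)
        rw [← hG'] at h1
        rw [Finset.card_erase_of_mem hqsupp] at h1
        have : 1 ≤ (suppF G).card := Finset.card_pos.2 ⟨q, hqsupp⟩
        omega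
      have hcon := card_eF_contractE G hpq
      rw [← hG'] at hcon
      have hedge' : 3 * (suppF G').card + 1 ≤ (eF G').card := by
        have h1 := Finset.card_le_card (suppF_contract_subset G p q hpq)
        rw [← hG'] at h1
        rw [Finset.card_erase_of_mem hqsupp] at h1
        omega
      have := IHN (suppF G').card (lt_of_lt_of_le hsupp' hsupp) G' le_rfl hedge'
      exact this.imp (minor_of_contractE hpq K5_no_isolated)
        (minor_of_contractE hpq K33_no_isolated)
    · push_neg at hE
      -- every edge lies in ≥ 3 triangles and every support vertex has degree ≥ 4
      have hepos : 1 ≤ (eF G).card := by omega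
      obtain ⟨e0, he0⟩ := Finset.card_pos.1 hepos
      obtain ⟨v, y0, hadj⟩ : ∃ v y0, G.Adj v y0 := by
        induction e0 with
        | _ x y =>
          rw [mem_eF, SimpleGraph.mem_edgeSet] at he0
          exact ⟨x, y, he0⟩
      set S := nbrS G Finset.univ v with hS
      have hSadj : ∀ z, z ∈ S ↔ G.Adj v z := by
        intro z
        rw [hS, mem_nbrS]
        simp
      have hSdeg : ∀ w ∈ S, 3 ≤ (nbrS G S w).card := by
        intro w hw
        have hvw : G.Adj w v := ((hSadj w).1 hw).symm
        have hcom := hE w v hvw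
        have hsub : (nbrS G Finset.univ w) ∩ (nbrS G Finset.univ v) ⊆ nbrS G S w := by
          intro z hz
          obtain ⟨hz1, hz2⟩ := Finset.mem_inter.1 hz
          exact mem_nbrS.2 ⟨(hSadj z).2 (adj_of_mem_nbrS hz2), adj_of_mem_nbrS hz1⟩
        exact le_trans hcom (Finset.card_le_card hsub)
      have hy0S : y0 ∈ S := (hSadj y0).2 hadj
      have hdeg' : ∀ x ∈ S.erase y0, 3 ≤ (nbrS G S x).card :=
        fun x hx => hSdeg x (Finset.mem_of_mem_erase hx)
      have hne' : (S.erase y0).Nonempty := by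
        have h3 := hSdeg y0 hy0S
        have hsub : nbrS G S y0 ⊆ S.erase y0 := by
          intro z hz
          exact Finset.mem_erase.2 ⟨(adj_of_mem_nbrS hz).ne', nbrS_subset hz⟩
        have := Finset.card_le_card hsub
        rw [← Finset.card_pos]
        omega
      have hBp := Bplus (mu G S) G S y0 le_rfl hy0S hdeg' hne'
      have hvnotS : v ∉ (↑S : Set V) := by
        intro hv
        exact ((hSadj v).1 (by exact_mod_cast hv)).ne rfl
      have hall : ∀ u ∈ (↑S : Set V), G.Adj v u := by
        intro u hu
        exact (hSadj u).1 (by exact_mod_cast hu)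
      exact hBp.imp (graphIsMinor_K5_of_K4 hvnotS hall) (graphIsMinor_K33_of_K23 hvnotS hall)

end THMA

section PARTC
variable {W : Type} [Fintype V] [Fintype W] [DecidableEq W]
variable (H : SimpleGraph W) [DecidableRel H.Adj]

/-- degree of v in the union of the edge images of the copies in D' -/
def degE (D' : Finset (W ↪ V)) (v : V) : ℕ :=
  ((D'.sup fun f => H.edgeFinset.image (Sym2.map (f : W → V))).filter
    (fun e => v ∈ e)).card

lemma degE_mono {D₁ D₂ : Finset (W ↪ V)} (h : D₁ ⊆ D₂) (v : V) :
    degE H D₁ v ≤ degE H D₂ v := by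
  apply Finset.card_le_card
  intro e he
  rw [Finset.mem_filter] at he ⊢
  refine ⟨?_, he.2⟩
  obtain ⟨f, hf, hef⟩ := Finset.mem_sup.1 he.1
  exact Finset.mem_sup.2 ⟨f, h hf, hef⟩

lemma select (G : SimpleGraph V) [DecidableRel G.Adj] (α : ℝ)
    (D : Finset (W ↪ V))
    (hdisj : ∀ f ∈ D, ∀ g ∈ D, f ≠ g →
      Disjoint (H.edgeFinset.image (Sym2.map (f : W → V)))
               (H.edgeFinset.image (Sym2.map (g : W → V)))) :
    ∀ (n : ℕ) (E : Finset (W ↪ V)), E.card ≤ n → E ⊆ D →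
    ∃ D', D' ⊆ E ∧ ∃ U : Finset V,
      (∀ v, degE H D' v = 0 ∨ α / 12 * G.degree v < (degE H D' v : ℝ)) ∧
      ((E.card : ℝ) ≤ (D'.card : ℝ) + ∑ v ∈ U, α / 12 * (G.degree v : ℝ)) ∧
      (∀ v ∈ U, 0 < degE H E v) := by
  intro n
  induction n with
  | zero =>
    intro E hEcard hED
    have hE : E = ∅ := Finset.card_eq_zero.1 (Nat.le_zero.1 hEcard)
    subst hE
    refine ⟨∅, Finset.Subset.refl _, ∅, ?_, by simp, by simp⟩
    intro v
    left
    simp [degE]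
  | succ n IHn =>
    intro E hEcard hED
    classical
    by_cases hbad : ∃ v, 0 < degE H E v ∧ (degE H E v : ℝ) ≤ α / 12 * G.degree v
    · obtain ⟨v, hvpos, hvle⟩ := hbad
      set touch : (W ↪ V) → Prop :=
        fun f => ∃ e ∈ H.edgeFinset.image (Sym2.map (f : W → V)), v ∈ e with htouch
      set removed := E.filter (fun f => touch f) with hrem
      set kept := E.filter (fun f => ¬ touch f) with hkept
      have hsplit : removed.card + kept.card = E.card := by
        rw [hrem, hkept]
        exact Finset.card_filter_add_card_filter_not _
      -- the removed copies inject into the edges at v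
      have hremcard : removed.card ≤ degE H E v := by
        apply Finset.card_le_card_of_injOn
          (fun f => if h : touch f then h.choose else s(v, v))
        · intro f hf
          have hfE : f ∈ E := Finset.mem_of_mem_filter _ hf
          have htf : touch f := (Finset.mem_filter.1 hf).2
          beta_reduce
          rw [dif_pos htf]
          obtain ⟨hchoose1, hchoose2⟩ := htf.choose_spec
          exact Finset.mem_coe.2 (Finset.mem_filter.2
            ⟨Finset.mem_sup.2 ⟨f, hfE, hchoose1⟩, hchoose2⟩)
        · intro f hf g hg hfg
          simp only [Finset.mem_coe] at hf hg
          have htf : touch f := (Finset.mem_filter.1 hf).2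
          have htg : touch g := (Finset.mem_filter.1 hg).2
          beta_reduce at hfg
          rw [dif_pos htf, dif_pos htg] at hfg
          by_contra hne
          have hfD : f ∈ D := hED (Finset.mem_of_mem_filter _ hf)
          have hgD : g ∈ D := hED (Finset.mem_of_mem_filter _ hg)
          have hd := hdisj f hfD g hgD hne
          exact Finset.disjoint_left.1 hd htf.choose_spec.1
            (hfg ▸ htg.choose_spec.1)
      have hrempos : 0 < removed.card := by
        rw [Finset.card_pos]
        have : 0 < degE H E v := hvpos
        rw [degE, Finset.card_pos] at this
        obtain ⟨e, he⟩ := this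
        rw [Finset.mem_filter] at he
        obtain ⟨f, hfE, hef⟩ := Finset.mem_sup.1 he.1
        exact ⟨f, Finset.mem_filter.2 ⟨hfE, ⟨e, hef, he.2⟩⟩⟩
      have hkeptcard : kept.card ≤ n := by omega
      have hkeptsub : kept ⊆ D := fun f hf => hED (Finset.mem_of_mem_filter _ hf)
      obtain ⟨D', hD'sub, U', hgood, hbound, hUpos⟩ := IHn kept hkeptcard hkeptsub
      have hdegkept : degE H kept v = 0 := by
        rw [degE, Finset.card_eq_zero]
        rw [Finset.eq_empty_iff_forall_notMem]
        intro e he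
        rw [Finset.mem_filter] at he
        obtain ⟨f, hfk, hef⟩ := Finset.mem_sup.1 he.1
        exact (Finset.mem_filter.1 hfk).2 ⟨e, hef, he.2⟩
      have hvU' : v ∉ U' := by
        intro hv
        have := hUpos v hv
        omega
      refine ⟨D', hD'sub.trans (Finset.filter_subset _ _), insert v U', hgood, ?_, ?_⟩
      · rw [Finset.sum_insert hvU']
        have hcast : (removed.card : ℝ) ≤ α / 12 * G.degree v :=
          le_trans (by exact_mod_cast hremcard) hvle
        have hEcast : (E.card : ℝ) = (removed.card : ℝ) + (kept.card : ℝ) := by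
          exact_mod_cast hsplit.symm
        linarith
      · intro u hu
        rcases Finset.mem_insert.1 hu with rfl | hu'
        · exact hvpos
        · exact lt_of_lt_of_le (hUpos u hu') (degE_mono H (Finset.filter_subset _ _) u)
    · push_neg at hbad
      refine ⟨E, Finset.Subset.refl _, ∅, ?_, by simp, by simp⟩
      intro v
      by_cases h0 : degE H E v = 0
      · exact Or.inl h0
      · right
        exact hbad v (Nat.pos_of_ne_zero h0)

end PARTC
end ALL


/-- From any collection `D` of `α|V|` edge-disjoint copies of `H` in a simple
planar graph `G` one can select `D' ⊆ D` with `|D'| ≥ (α/2)|V|` such that in the graph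
induced by the edges of the copies in `D'` every vertex has degree `0` or degree greater
than `(α/12)·deg_G(v)`. -/
theorem stmt5 {V W : Type} [Fintype V] [Fintype W] [DecidableEq V] [DecidableEq W]
    (G : SimpleGraph V) [DecidableRel G.Adj] (H : SimpleGraph W) [DecidableRel H.Adj]
    (hplanar : GraphIsPlanar G) (α : ℝ) (hα : 0 < α)
    (D : Finset (W ↪ V))
    (hcopy : ∀ f ∈ D, ∀ a b, H.Adj a b → G.Adj (f a) (f b))
    (hdisj : ∀ f ∈ D, ∀ g ∈ D, f ≠ g →
      Disjoint (H.edgeFinset.image (Sym2.map (f : W → V)))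
               (H.edgeFinset.image (Sym2.map (g : W → V))))
    (hcard : (D.card : ℝ) = α * Fintype.card V) :
    ∃ D' ⊆ D, (α / 2 * Fintype.card V ≤ (D'.card : ℝ)) ∧
      ∀ v : V,
        ((D'.sup fun f => H.edgeFinset.image (Sym2.map (f : W → V))).filter
            (fun e => v ∈ e)).card = 0 ∨
        α / 12 * G.degree v <
          (((D'.sup fun f => H.edgeFinset.image (Sym2.map (f : W → V))).filter
            (fun e => v ∈ e)).card : ℝ) := by
  classical
  obtain ⟨h5, h33⟩ := hplanar
  have heq : eF G = G.edgeFinset := by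
    ext e
    rw [mem_eF, SimpleGraph.mem_edgeFinset]
  have hA : ¬ (3 * (suppF G).card + 1 ≤ (eF G).card) := by
    intro hcon
    rcases thmA ((suppF G).card) G le_rfl hcon with h | h
    · exact h5 h
    · exact h33 h
  push_neg at hA
  have hsuppuniv : (suppF G).card ≤ Fintype.card V := Finset.card_le_univ _
  have hEbound : G.edgeFinset.card ≤ 3 * Fintype.card V := by
    rw [← heq]
    omega
  have hsumdeg : ∑ v : V, G.degree v = 2 * G.edgeFinset.card :=
    G.sum_degrees_eq_twice_card_edges
  obtain ⟨D', hD'sub, U, hgood, hbound, -⟩ :=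
    select (H := H) G α D hdisj D.card D le_rfl (Finset.Subset.refl D)
  refine ⟨D', hD'sub, ?_, ?_⟩
  · have hUsum : ∑ v ∈ U, α / 12 * (G.degree v : ℝ) ≤
        ∑ v ∈ Finset.univ, α / 12 * (G.degree v : ℝ) := by
      apply Finset.sum_le_sum_of_subset_of_nonneg (Finset.subset_univ _)
      intro i _ _
      positivity
    have huniv : ∑ v ∈ Finset.univ, α / 12 * (G.degree v : ℝ) =
        α / 12 * (2 * (G.edgeFinset.card : ℝ)) := by
      rw [← Finset.mul_sum]
      congr 1
      rw [show (2 : ℝ) * (G.edgeFinset.card : ℝ) =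
        ((2 * G.edgeFinset.card : ℕ) : ℝ) by push_cast; ring, ← hsumdeg]
      push_cast
      rfl
    have hecast : (G.edgeFinset.card : ℝ) ≤ 3 * (Fintype.card V : ℝ) := by
      exact_mod_cast hEbound
    have hchain : (D.card : ℝ) ≤ (D'.card : ℝ) + α / 2 * (Fintype.card V : ℝ) := by
      have h1 : α / 12 * (2 * (G.edgeFinset.card : ℝ)) ≤
          α / 12 * (6 * (Fintype.card V : ℝ)) := by
        apply mul_le_mul_of_nonneg_left _ (by positivity)
        linarith
      have h2 : α / 12 * (6 * (Fintype.card V : ℝ)) =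
          α / 2 * (Fintype.card V : ℝ) := by ring
      linarith [hbound, hUsum]
    rw [hcard] at hchain
    have : α * (Fintype.card V : ℝ) - α / 2 * (Fintype.card V : ℝ) =
        α / 2 * (Fintype.card V : ℝ) := by ring
    linarith
  · intro v
    rcases hgood v with h | h
    · left
      exact h
    · right
      exact h
end

section
/- Let D be a finite collection of sets (copies), each of size exactly h, over a ground set V, and suppose an iterative process assigns each copy a level as follows: at step j, choose a vertex u_j contained in some remaining copy, assign level j to all remaining copies containing u_j, and remove them. Let A(j) be the copies at level j and, processing levels in decreasing order while maintaining a current family, let B(j) be the current copies containing u_j with level < j; keep A(j) and delete B(j) if |A(j)| ≥ |B(j)|/(2h), else delete A(j). Then the family D* of copies never deleted satisfies |D*| ≥ |D|/(4h+2). -/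
/-- The two-phase level-based pruning process.  Phase 1 assigns levels: at step `j`
a vertex `u j` lying in some remaining copy is chosen and all remaining copies containing it get
level `j` and are removed (so a copy `S` has `u (ℓ S) ∈ S` and `u j ∉ S` for `j < ℓ S`).
Phase 2 processes levels in decreasing order maintaining a current family `Cur`: with
`A(j)` the current copies of level `j` and `B(j)` the current copies containing `u j` of smaller
level, it keeps `A(j)` and deletes `B(j)` if `|A(j)| ≥ |B(j)|/(2h)`, and deletes `A(j)` otherwise.
The surviving family `Cur 0` satisfies `|Cur 0| ≥ |D|/(4h+2)`. -/
theorem stmt6 {V : Type} [DecidableEq V] (h J : ℕ) (hh : 1 ≤ h)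
    (D : Finset (Finset V)) (hcardh : ∀ S ∈ D, S.card = h)
    (u : ℕ → V) (lvl : Finset V → ℕ)
    (hlevel : ∀ S ∈ D, lvl S < J ∧ u (lvl S) ∈ S ∧ ∀ j < lvl S, u j ∉ S)
    (hsurj : ∀ j < J, ∃ S ∈ D, lvl S = j)
    (Cur : ℕ → Finset (Finset V))
    (hCurJ : Cur J = D)
    (hCurStep : ∀ j < J,
      Cur j =
        if ((Cur (j+1)).filter (fun S => lvl S < j ∧ u j ∈ S)).card
            ≤ 2 * h * ((Cur (j+1)).filter (fun S => lvl S = j)).card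
        then Cur (j+1) \ (Cur (j+1)).filter (fun S => lvl S < j ∧ u j ∈ S)
        else Cur (j+1) \ (Cur (j+1)).filter (fun S => lvl S = j)) :
    D.card ≤ (4 * h + 2) * (Cur 0).card := by
  classical
  set A : ℕ → Finset (Finset V) := fun j => (Cur (j+1)).filter (fun S => lvl S = j) with hAdef
  set B : ℕ → Finset (Finset V) := fun j => (Cur (j+1)).filter (fun S => lvl S < j ∧ u j ∈ S)
    with hBdef
  have hstep : ∀ j < J, Cur j =
      if (B j).card ≤ 2 * h * (A j).card then Cur (j+1) \ B j else Cur (j+1) \ A j :=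
    hCurStep
  have hAsub : ∀ j, A j ⊆ Cur (j+1) := fun j => Finset.filter_subset _ _
  have hBsub : ∀ j, B j ⊆ Cur (j+1) := fun j => Finset.filter_subset _ _
  -- monotonicity
  have hsub : ∀ j < J, Cur j ⊆ Cur (j+1) := by
    intro j hj
    rw [hstep j hj]
    split <;> exact Finset.sdiff_subset
  have hup : ∀ i k, i + k ≤ J → Cur i ⊆ Cur (i + k) := by
    intro i k
    induction k with
    | zero => intro _; exact subset_rfl
    | succ n ih =>
      intro hle
      exact (ih (by omega)).trans (hsub (i + n) (by omega))
  have hsubD : ∀ k ≤ J, Cur k ⊆ D := by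
    intro k hk
    have h2 := hup k (J - k) (by omega)
    rw [Nat.add_sub_cancel' hk, hCurJ] at h2
    exact h2
  -- cardinality of deleted set at each step
  have hd : ∀ j < J, (Cur (j+1)).card =
      (Cur j).card + (if (B j).card ≤ 2 * h * (A j).card then (B j).card else (A j).card) := by
    intro j hj
    rw [hstep j hj]
    split
    · rw [Finset.card_sdiff_of_subset (hBsub j)]
      have := Finset.card_le_card (hBsub j)
      omega
    · rw [Finset.card_sdiff_of_subset (hAsub j)]
      have := Finset.card_le_card (hAsub j)
      omega
  -- telescoping
  have htel : ∀ n ≤ J, (Cur n).card = (Cur 0).card +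
      ∑ j ∈ Finset.range n,
        (if (B j).card ≤ 2 * h * (A j).card then (B j).card else (A j).card) := by
    intro n hn
    induction n with
    | zero => simp
    | succ m ih =>
      rw [Finset.sum_range_succ, hd m (by omega), ih (by omega)]
      ring
  -- keep lemma: copies of larger level survive
  have hkeep : ∀ i < J, ∀ S ∈ Cur (i+1), i < lvl S → S ∈ Cur i := by
    intro i hi S hS hlv
    rw [hstep i hi]
    split
    · rw [Finset.mem_sdiff]
      refine ⟨hS, ?_⟩
      simp only [hBdef, Finset.mem_filter]
      rintro ⟨-, hc, -⟩
      omega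
    · rw [Finset.mem_sdiff]
      refine ⟨hS, ?_⟩
      simp only [hAdef, Finset.mem_filter]
      rintro ⟨-, hc⟩
      omega
  have hdesc : ∀ k, k ≤ J → ∀ S ∈ Cur k, k ≤ lvl S → S ∈ Cur 0 := by
    intro k
    induction k with
    | zero => intro _ S hS _; exact hS
    | succ m ih =>
      intro hk S hS hlv
      exact ih (by omega) S (hkeep m (by omega) S hS (by omega)) (by omega)
  -- kept A's are in Cur 0
  have hAkept : ∀ j < J, (B j).card ≤ 2 * h * (A j).card → A j ⊆ Cur 0 := by
    intro j hj hc S hS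
    have hS' : S ∈ Cur (j+1) ∧ lvl S = j := Finset.mem_filter.mp hS
    have hSj : S ∈ Cur j := by
      rw [hstep j hj, if_pos hc, Finset.mem_sdiff]
      refine ⟨hS'.1, ?_⟩
      simp only [hBdef, Finset.mem_filter]
      rintro ⟨-, hc', -⟩
      omega
    exact hdesc j (by omega) S hSj (by omega)
  -- injectivity of u on range J
  have huinj : ∀ i < J, ∀ j < J, u i = u j → i = j := by
    intro i hi j hj he
    by_contra hne
    wlog hij : i < j generalizing i j
    · exact this j hj i hi he.symm (fun hx => hne hx.symm) (by omega)
    obtain ⟨S, hSD, hSe⟩ := hsurj j hj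
    obtain ⟨-, hmem, hnotmem⟩ := hlevel S hSD
    have hj' : u j ∈ S := by rw [← hSe]; exact hmem
    exact hnotmem i (by omega) (by rw [he]; exact hj')
  -- each copy lies in few B's
  have hBcount : ∀ S ∈ D,
      ((Finset.range J).filter (fun j => lvl S < j ∧ u j ∈ S)).card ≤ h - 1 := by
    intro S hSD
    obtain ⟨hlJ, hmem, -⟩ := hlevel S hSD
    have hce : (S.erase (u (lvl S))).card = h - 1 := by
      rw [Finset.card_erase_of_mem hmem, hcardh S hSD]
    rw [← hce]
    apply Finset.card_le_card_of_injOn u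
    · intro j hj
      simp only [Finset.mem_coe, Finset.mem_filter, Finset.mem_range] at hj
      obtain ⟨hjJ, hlv, hu⟩ := hj
      refine Finset.mem_erase.mpr ⟨?_, hu⟩
      intro he
      have := huinj j hjJ (lvl S) hlJ he
      omega
    · intro a ha b hb he
      simp only [Finset.coe_filter, Set.mem_setOf_eq, Finset.mem_range] at ha hb
      exact huinj a ha.1 b hb.1 he
  -- sum of |B j| over all j
  have hBsum : ∑ j ∈ Finset.range J, (B j).card ≤ (h - 1) * D.card := by
    have h1 : ∀ j ∈ Finset.range J, (B j).card ≤
        (D.filter (fun S => lvl S < j ∧ u j ∈ S)).card := by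
      intro j hj
      apply Finset.card_le_card
      intro S hS
      rw [Finset.mem_filter] at hS ⊢
      exact ⟨hsubD (j+1) (Finset.mem_range.mp hj) hS.1, hS.2⟩
    calc ∑ j ∈ Finset.range J, (B j).card
        ≤ ∑ j ∈ Finset.range J, (D.filter (fun S => lvl S < j ∧ u j ∈ S)).card :=
          Finset.sum_le_sum h1
      _ = ∑ S ∈ D, ((Finset.range J).filter (fun j => lvl S < j ∧ u j ∈ S)).card := by
          simp only [Finset.card_filter]
          rw [Finset.sum_comm]
      _ ≤ ∑ S ∈ D, (h - 1) := Finset.sum_le_sum hBcount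
      _ = (h - 1) * D.card := by rw [Finset.sum_const, smul_eq_mul, mul_comm]
  -- split the deleted sum
  set T : Finset ℕ := (Finset.range J).filter (fun j => (B j).card ≤ 2 * h * (A j).card) with hT
  have hTsub : ∀ j ∈ T, j < J ∧ (B j).card ≤ 2 * h * (A j).card := by
    intro j hj
    have := Finset.mem_filter.mp hj
    exact ⟨Finset.mem_range.mp this.1, this.2⟩
  -- B-deletions bounded by 2h * |Cur 0|
  have hBdel : ∑ j ∈ T, (B j).card ≤ 2 * h * (Cur 0).card := by
    have hAdisj : ∀ i ∈ T, ∀ j ∈ T, i ≠ j → Disjoint (A i) (A j) := by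
      intro i _ j _ hne
      rw [Finset.disjoint_left]
      intro S hSi hSj
      have h1 := (Finset.mem_filter.mp hSi).2
      have h2 := (Finset.mem_filter.mp hSj).2
      exact hne (h1 ▸ h2 ▸ rfl)
    have hbi : T.biUnion A ⊆ Cur 0 := by
      intro S hS
      obtain ⟨j, hjT, hSA⟩ := Finset.mem_biUnion.mp hS
      exact hAkept j (hTsub j hjT).1 (hTsub j hjT).2 hSA
    calc ∑ j ∈ T, (B j).card
        ≤ ∑ j ∈ T, 2 * h * (A j).card := Finset.sum_le_sum (fun j hj => (hTsub j hj).2)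
      _ = 2 * h * ∑ j ∈ T, (A j).card := by rw [Finset.mul_sum]
      _ = 2 * h * (T.biUnion A).card := by rw [Finset.card_biUnion hAdisj]
      _ ≤ 2 * h * (Cur 0).card := Nat.mul_le_mul_left _ (Finset.card_le_card hbi)
  -- A-deletions bounded via B sums
  have hAdel : 2 * h * (∑ j ∈ (Finset.range J).filter (fun j => ¬ (B j).card ≤ 2 * h * (A j).card), (A j).card)
      ≤ (h - 1) * D.card := by
    calc 2 * h * ∑ j ∈ (Finset.range J).filter (fun j => ¬ (B j).card ≤ 2 * h * (A j).card), (A j).card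
        = ∑ j ∈ (Finset.range J).filter (fun j => ¬ (B j).card ≤ 2 * h * (A j).card), 2 * h * (A j).card := by
          rw [Finset.mul_sum]
      _ ≤ ∑ j ∈ (Finset.range J).filter (fun j => ¬ (B j).card ≤ 2 * h * (A j).card), (B j).card := by
          apply Finset.sum_le_sum
          intro j hj
          have := (Finset.mem_filter.mp hj).2
          omega
      _ ≤ ∑ j ∈ Finset.range J, (B j).card :=
          Finset.sum_le_sum_of_subset (Finset.filter_subset _ _)
      _ ≤ (h - 1) * D.card := hBsum
  -- put everything together
  have hDcard : D.card = (Cur 0).card + ∑ j ∈ T, (B j).card +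
      ∑ j ∈ (Finset.range J).filter (fun j => ¬ (B j).card ≤ 2 * h * (A j).card), (A j).card := by
    have := htel J le_rfl
    rw [hCurJ] at this
    rw [this]
    rw [← Finset.sum_filter_add_sum_filter_not (Finset.range J)
      (fun j => (B j).card ≤ 2 * h * (A j).card)]
    have e1 : ∑ j ∈ T, (if (B j).card ≤ 2 * h * (A j).card then (B j).card else (A j).card)
        = ∑ j ∈ T, (B j).card := by
      apply Finset.sum_congr rfl
      intro j hj
      rw [if_pos (hTsub j hj).2]
    have e2 : ∑ j ∈ (Finset.range J).filter (fun j => ¬ (B j).card ≤ 2 * h * (A j).card),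
        (if (B j).card ≤ 2 * h * (A j).card then (B j).card else (A j).card)
        = ∑ j ∈ (Finset.range J).filter (fun j => ¬ (B j).card ≤ 2 * h * (A j).card), (A j).card := by
      apply Finset.sum_congr rfl
      intro j hj
      rw [if_neg (Finset.mem_filter.mp hj).2]
    rw [hT, e1, e2]
    ring
  -- final arithmetic
  set c := (Cur 0).card
  set dB := ∑ j ∈ T, (B j).card
  set dA := ∑ j ∈ (Finset.range J).filter (fun j => ¬ (B j).card ≤ 2 * h * (A j).card), (A j).card
  obtain ⟨p, hp⟩ : ∃ p, h = p + 1 := ⟨h - 1, by omega⟩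
  subst hp
  simp only [Nat.add_sub_cancel] at hAdel
  have key : (p + 2) * D.card ≤ (p + 2) * ((4 * (p + 1) + 2) * c) := by
    nlinarith [hBdel, hAdel, hDcard]
  exact Nat.le_of_mul_le_mul_left key (by omega)
end

section
/- No one-sided error tester with finite query complexity in the random neighbor oracle model can test connectivity of planar graphs: for every q and every n ≥ 4 even, if a deterministic-or-randomized algorithm making at most q random-neighbor queries accepts the n-cycle C_n with probability 1, then it accepts the perfect matching M_n on n vertices with probability at least 2^{-q} > 0, even though M_n is (1/2 − 2/n)-far from connected. -/
/-- The matching partner of a vertex of `ZMod n` (for `n` even this is an involution and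
each matching edge is an edge of the cycle `v ↦ v ± 1`). -/
def mpartner (n : ℕ) (v : ZMod n) : ZMod n := if Even (ZMod.val v) then v + 1 else v - 1

/-- The (deterministic) transcript of `q` random-neighbor queries performed by the strategy `s`
on the perfect matching `M_n`: every query on vertex `v` is answered by `mpartner n v`. -/
def matchRun (n : ℕ) (s : List (ZMod n) → ZMod n) : ℕ → List (ZMod n)
  | 0 => []
  | q + 1 => matchRun n s q ++ [mpartner n (s (matchRun n s q))]

/-- The transcript of `q` random-neighbor queries performed by the strategy `s` on the cycle
`C_n`, where the random coin `b j` decides whether the `j`-th query on `v` returns `v+1` or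
`v-1` (each outcome having probability `1/2`). -/
def cycleRun (n : ℕ) (s : List (ZMod n) → ZMod n) (b : ℕ → Bool) : ℕ → List (ZMod n)
  | 0 => []
  | q + 1 => cycleRun n s b q ++
      [if b q then s (cycleRun n s b q) + 1 else s (cycleRun n s b q) - 1]

/-- The perfect matching graph `M_n` on `ZMod n`. -/
def matchingGraph (n : ℕ) : SimpleGraph (ZMod n) :=
  SimpleGraph.fromRel (fun v w => w = mpartner n v)

section aux

variable {n : ℕ} [NeZero n]

lemma val_succ_parity (hn : 2 ≤ n) (hev : 2 ∣ n) (v : ZMod n) :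
    Even (v + 1).val ↔ ¬ Even v.val := by
  have h1 : (1 : ZMod n).val = 1 := ZMod.val_one'' (by omega)
  have h2 : (v + 1).val = (v.val + 1) % n := by rw [ZMod.val_add, h1]
  have h3 : (v + 1).val % 2 = (v.val + 1) % 2 := by
    rw [h2, Nat.mod_mod_of_dvd _ hev]
  rw [Nat.even_iff, Nat.even_iff]
  omega

lemma val_pred_parity (hn : 2 ≤ n) (hev : 2 ∣ n) (v : ZMod n) :
    Even (v - 1).val ↔ ¬ Even v.val := by
  have h := val_succ_parity hn hev (v - 1)
  rw [sub_add_cancel] at h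
  tauto

lemma matching_edge_char (hn : 2 ≤ n) (hev : 2 ∣ n)
    {e : Sym2 (ZMod n)} (he : e ∈ (matchingGraph n).edgeSet)
    {v : ZMod n} (hv : v ∈ e) (hve : Even v.val) : e = s(v, v + 1) := by
  induction e with
  | _ a b =>
    rw [SimpleGraph.mem_edgeSet] at he
    rw [matchingGraph, SimpleGraph.fromRel_adj] at he
    obtain ⟨hne, hab⟩ := he
    rw [Sym2.mem_iff] at hv
    unfold mpartner at hab
    rcases hv with rfl | rfl
    · rcases hab with hb | ha
      · rw [if_pos hve] at hb; rw [hb]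
      · by_cases hbe : Even b.val
        · rw [if_pos hbe] at ha
          exact absurd (ha ▸ hve) ((val_succ_parity hn hev b).mp · hbe)
        · rw [if_neg hbe] at ha
          have : b = v + 1 := by rw [ha]; ring
          rw [this]
    · rcases hab with hb | ha
      · by_cases hae : Even a.val
        · rw [if_pos hae] at hb
          exact absurd (hb ▸ hve) ((val_succ_parity hn hev a).mp · hae)
        · rw [if_neg hae] at hb
          have : a = v + 1 := by rw [hb]; ring
          rw [this, Sym2.eq_swap]
      · rw [if_pos hve] at ha; rw [ha, Sym2.eq_swap]

lemma matching_edge_exists (hn : 2 ≤ n) (hev : 2 ∣ n)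
    {e : Sym2 (ZMod n)} (he : e ∈ (matchingGraph n).edgeSet) :
    ∃ v ∈ e, Even v.val := by
  induction e with
  | _ a b =>
    rw [SimpleGraph.mem_edgeSet] at he
    rw [matchingGraph, SimpleGraph.fromRel_adj] at he
    obtain ⟨hne, hab⟩ := he
    by_cases hae : Even a.val
    · exact ⟨a, by simp, hae⟩
    refine ⟨b, by simp, ?_⟩
    unfold mpartner at hab
    rcases hab with hb | ha
    · rw [if_neg hae] at hb; rw [hb]; exact (val_pred_parity hn hev a).mpr hae
    · by_cases hbe : Even b.val
      · exact hbe
      · rw [if_neg hbe] at ha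
        exact absurd ((val_pred_parity hn hev b).mpr hbe) (ha ▸ hae)

lemma matching_ncard_le (hn : 2 ≤ n) (hev : 2 ∣ n) :
    (matchingGraph n).edgeSet.ncard ≤ n / 2 := by
  classical
  set T : Set (ZMod n) := {v | Even v.val} with hT
  set F : Sym2 (ZMod n) → ZMod n :=
    fun e => if h : ∃ v ∈ e, Even v.val then h.choose else 0 with hF
  have hmem : ∀ e ∈ (matchingGraph n).edgeSet, (F e ∈ e ∧ Even (F e).val) := by
    intro e he
    have h := matching_edge_exists hn hev he
    simp only [hF]
    rw [dif_pos h]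
    exact ⟨h.choose_spec.1, h.choose_spec.2⟩
  have h1 : (matchingGraph n).edgeSet.ncard ≤ T.ncard := by
    apply Set.ncard_le_ncard_of_injOn F
    · intro e he; exact (hmem e he).2
    · intro e he e' he' heq
      obtain ⟨hm, hev1⟩ := hmem e he
      obtain ⟨hm', hev2⟩ := hmem e' he'
      rw [matching_edge_char hn hev he hm hev1, matching_edge_char hn hev he' hm' hev2, heq]
  have h2 : T ⊆ (fun k : ℕ => ((k + k : ℕ) : ZMod n)) '' ↑(Finset.range (n / 2)) := by
    intro v hv
    obtain ⟨m, hm⟩ := hv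
    refine ⟨m, ?_, ?_⟩
    · simp only [Finset.coe_range, Set.mem_Iio]
      have := v.val_lt
      omega
    · show ((m + m : ℕ) : ZMod n) = v
      rw [← hm]; exact ZMod.natCast_rightInverse v
  calc (matchingGraph n).edgeSet.ncard ≤ T.ncard := h1
    _ ≤ ((fun k : ℕ => ((k + k : ℕ) : ZMod n)) '' ↑(Finset.range (n / 2))).ncard :=
        Set.ncard_le_ncard h2 (Set.toFinite _)
    _ ≤ (↑(Finset.range (n / 2)) : Set ℕ).ncard := Set.ncard_image_le (Set.toFinite _)
    _ = n / 2 := by rw [Set.ncard_coe_finset, Finset.card_range]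

lemma connected_ncard_ge {V : Type*} [Fintype V] [Nonempty V]
    {G : SimpleGraph V} (h : G.Connected) :
    Fintype.card V - 1 ≤ G.edgeSet.ncard := by
  classical
  obtain ⟨v₀⟩ : Nonempty V := inferInstance
  have hex : ∀ v : V, v ≠ v₀ → ∃ w, G.Adj v w ∧ G.dist w v₀ < G.dist v v₀ := by
    intro v hv
    obtain ⟨p, hp⟩ := h.exists_walk_length_eq_dist v v₀
    cases p with
    | nil => exact absurd rfl hv
    | cons hadj q =>
        refine ⟨_, hadj, ?_⟩
        have h1 : G.dist _ v₀ ≤ q.length := SimpleGraph.dist_le q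
        rw [SimpleGraph.Walk.length_cons] at hp
        omega
  choose f hadj hdist using hex
  set F : V → Sym2 V := fun v => if hv : v = v₀ then s(v₀, v₀) else s(v, f v hv) with hF
  have key : ({v₀}ᶜ : Set V).ncard ≤ G.edgeSet.ncard := by
    apply Set.ncard_le_ncard_of_injOn F
    · intro v hv
      have hv' : v ≠ v₀ := hv
      simp only [hF, dif_neg hv']
      exact (hadj v hv')
    · intro u hu v hv heq
      have hu' : u ≠ v₀ := hu
      have hv' : v ≠ v₀ := hv
      simp only [hF, dif_neg hu', dif_neg hv', Sym2.eq_iff] at heq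
      rcases heq with ⟨h1, _⟩ | ⟨h1, h2⟩
      · exact h1
      · exfalso
        have d1 := hdist u hu'
        have d2 := hdist v hv'
        rw [h2] at d1
        rw [← h1] at d2
        omega
  have : ({v₀}ᶜ : Set V).ncard = Fintype.card V - 1 := by
    have : ({v₀}ᶜ : Set V) = ↑(Finset.univ.erase v₀) := by ext x; simp
    rw [this, Set.ncard_coe_finset, Finset.card_erase_of_mem (Finset.mem_univ _),
      Finset.card_univ]
  omega

end aux

/-- One-sided error connectivity testing is impossible in the random neighbor
oracle model: if an algorithm (query strategy `s`, decision `accept`) making `q` queries accepts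
the cycle `C_n` with probability `1` (i.e. on every coin sequence `b`), then it accepts the
perfect matching `M_n` with probability `1 ≥ 2^{-q} > 0`, although `M_n` is
`(1/2 − 2/n)`-far from connected. -/
theorem stmt8 (n q : ℕ) (hn : 4 ≤ n) (heven : Even n)
    (s : List (ZMod n) → ZMod n) (accept : List (ZMod n) → Bool)
    (hacc : ∀ b : ℕ → Bool, accept (cycleRun n s b q) = true) :
    ((if accept (matchRun n s q) then (1 : ℝ) else 0) ≥ ((1 : ℝ) / 2) ^ q ∧
      (0 : ℝ) < ((1 : ℝ) / 2) ^ q) ∧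
    (∀ G' : SimpleGraph (ZMod n), G'.Connected →
      (1 / 2 - 2 / (n : ℝ)) * n <
        ((symmDiff (matchingGraph n).edgeSet G'.edgeSet).ncard : ℝ)) := by
  haveI : NeZero n := ⟨by omega⟩
  constructor
  · have hrun : ∀ k, cycleRun n s
        (fun j => decide (Even (ZMod.val (s (matchRun n s j))))) k = matchRun n s k := by
      intro k
      induction k with
      | zero => rfl
      | succ k ih =>
        simp only [cycleRun, matchRun, ih, mpartner]
        by_cases h : Even (ZMod.val (s (matchRun n s k))) <;> simp [h]
    have hma : accept (matchRun n s q) = true := by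
      have h := hacc (fun j => decide (Even (ZMod.val (s (matchRun n s j)))))
      rwa [hrun] at h
    refine ⟨?_, by positivity⟩
    rw [if_pos hma]
    exact pow_le_one₀ (by norm_num) (by norm_num)
  · intro G' hG'
    have hev2 : 2 ∣ n := heven.two_dvd
    obtain ⟨m, hm⟩ := heven
    have hA : (matchingGraph n).edgeSet.ncard ≤ n / 2 := matching_ncard_le (by omega) hev2
    have hB : n - 1 ≤ G'.edgeSet.ncard := by
      have := connected_ncard_ge hG'
      rwa [ZMod.card n] at this
    set A := (matchingGraph n).edgeSet
    set B := G'.edgeSet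
    have hsub : B \ A ⊆ symmDiff A B := by
      rw [Set.symmDiff_def]
      exact Set.subset_union_right
    have h1 : (B \ A).ncard ≤ (symmDiff A B).ncard :=
      Set.ncard_le_ncard hsub (Set.toFinite _)
    have h2 : B.ncard ≤ (B \ A).ncard + A.ncard := by
      have hsub2 : B ⊆ (B \ A) ∪ A := by
        intro x hx
        by_cases h : x ∈ A <;> simp [hx, h]
      calc B.ncard ≤ ((B \ A) ∪ A).ncard := Set.ncard_le_ncard hsub2 (Set.toFinite _)
        _ ≤ (B \ A).ncard + A.ncard := Set.ncard_union_le _ _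
    have h5 : m - 1 ≤ (symmDiff A B).ncard := by
      have hnd : n / 2 = m := by omega
      omega
    have hc : (m : ℝ) - 1 ≤ ((symmDiff A B).ncard : ℝ) := by
      have h6 := (Nat.cast_le (α := ℝ)).mpr h5
      rwa [Nat.cast_sub (by omega), Nat.cast_one] at h6
    have hnr : (n : ℝ) = m + m := by exact_mod_cast hm
    have hn0 : (n : ℝ) ≠ 0 := by
      have : (0:ℝ) < n := by exact_mod_cast (by omega : 0 < n)
      linarith
    have hlhs : (1 / 2 - 2 / (n : ℝ)) * n = (n : ℝ) / 2 - 2 := by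
      field_simp
    rw [hlhs, hnr]
    have hm4 : (2 : ℝ) ≤ m := by exact_mod_cast (by omega : 2 ≤ m)
    linarith
end

section
/- Let D, d, k be positive integers with D ≤ hd for some integer h ≥ 1, and let s ≥ 1. Then 1 − (1 − s/D)^{hk} ≥ 1 − (1 − s/(hd))^{hk}, and moreover 1 − (1 − s/(hd))^{hk} ≥ (1/h)·(1 − (1 − s/d)^{k}) whenever s ≤ d. (Degree-comparison bound: sampling hk times from a set that is at most h times larger loses at most a factor h in the hitting probability.) -/
/-- Degree-comparison bound.  For `0 < s ≤ d ≤ D ≤ h·d` (with `h, k ≥ 1`):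
`1 − (1 − s/D)^{hk} ≥ 1 − (1 − s/(hd))^{hk}` and
`1 − (1 − s/(hd))^{hk} ≥ (1/h)·(1 − (1 − s/d)^k)`. -/
theorem stmt9 (D d k h : ℕ) (hD : 0 < D) (hd : 0 < d) (hk : 0 < k) (hh : 1 ≤ h)
    (s : ℝ) (hs : 1 ≤ s) (hsd : s ≤ (d : ℝ)) (hdD : (d : ℝ) ≤ D)
    (hDhd : (D : ℝ) ≤ (h : ℝ) * d) :
    (1 - (1 - s / D) ^ (h * k) ≥ 1 - (1 - s / ((h : ℝ) * d)) ^ (h * k)) ∧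
    (1 - (1 - s / ((h : ℝ) * d)) ^ (h * k) ≥ (1 / (h : ℝ)) * (1 - (1 - s / d) ^ k)) := by
  have hh' : (1:ℝ) ≤ h := by exact_mod_cast hh
  have hhpos : (0:ℝ) < h := by linarith
  have hdpos : (0:ℝ) < d := by exact_mod_cast hd
  have hDpos : (0:ℝ) < D := by exact_mod_cast hD
  have hhd : (0:ℝ) < (h:ℝ)*d := by positivity
  set a : ℝ := 1 - s/d with ha
  set b : ℝ := 1 - s/((h:ℝ)*d) with hb
  have hspos : (0:ℝ) < s := by linarith
  have ha0 : 0 ≤ a := by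
    have : s/d ≤ 1 := by rw [div_le_one hdpos]; exact hsd
    simp [ha]; linarith
  have hab : a ≤ b := by
    have : s/((h:ℝ)*d) ≤ s/d := by
      apply div_le_div_of_nonneg_left (le_of_lt hspos) hdpos
      nlinarith
    simp only [ha, hb]; linarith
  have hb1 : b ≤ 1 := by
    have : 0 ≤ s/((h:ℝ)*d) := by positivity
    simp only [hb]; linarith
  have hb0 : 0 ≤ b := le_trans ha0 hab
  have key : (h:ℝ) * (1 - b) = 1 - a := by
    simp only [ha, hb]
    field_simp
    ring
  have Sa := Finset.sum_le_sum (fun i (_ : i ∈ Finset.range k) => pow_le_pow_left₀ ha0 hab i)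
  have ga : (1-a) * ∑ i ∈ Finset.range k, a^i = 1 - a^k := by
    linear_combination -geom_sum_mul a k
  have gb : (1-b) * ∑ i ∈ Finset.range k, b^i = 1 - b^k := by
    linear_combination -geom_sum_mul b k
  have hSb0 : 0 ≤ ∑ i ∈ Finset.range k, b^i :=
    Finset.sum_nonneg (fun i _ => pow_nonneg hb0 i)
  have step2 : 1 - a^k ≤ (h:ℝ) * (1 - b^k) := by
    calc 1 - a^k = (1-a) * ∑ i ∈ Finset.range k, a^i := ga.symm
    _ ≤ (1-a) * ∑ i ∈ Finset.range k, b^i := by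
        apply mul_le_mul_of_nonneg_left Sa; nlinarith
    _ = (h:ℝ) * ((1-b) * ∑ i ∈ Finset.range k, b^i) := by rw [← key]; ring
    _ = (h:ℝ) * (1 - b^k) := by rw [gb]
  have hkk : k ≤ h * k := by nlinarith
  have step1 : b ^ (h*k) ≤ b ^ k := pow_le_pow_of_le_one hb0 hb1 hkk
  constructor
  · have h1 : 1 - s/D ≤ b := by
      have : s/((h:ℝ)*d) ≤ s/D := div_le_div_of_nonneg_left (le_of_lt hspos) hDpos hDhd
      simp only [hb]; linarith
    have h0 : 0 ≤ 1 - s/D := by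
      have : s/D ≤ 1 := by rw [div_le_one hDpos]; linarith
      linarith
    have := pow_le_pow_left₀ h0 h1 (h*k)
    linarith
  · rw [ge_iff_le, one_div, inv_mul_le_iff₀ hhpos]
    nlinarith
end

section
/- Let D be a finite family of edge-disjoint colored copies of H in a (hyper)graph, and suppose every copy in D contains a vertex of color c with at most Δ distinct neighbors in the hypergraph induced by D. Suppose the vertex of color c in H has ℓ neighbors in the shrunk representation. If, for each non-isolated vertex u of color c, one independently and uniformly selects one neighbor of each of the ℓ required neighbor-colors and discards all copies through u not using exactly the selected neighbors, then the expected number of surviving copies is at least |D|/Δ^ℓ; hence there exists a subfamily D' ⊆ D with |D'| ≥ |D|/Δ^ℓ in which every vertex of color c is 'safe' (all surviving copies through it use the same neighbor set). -/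
set_option linter.unusedVariables false

lemma sumA {U N : Type} [Fintype U] [Fintype N] [DecidableEq U] {l : ℕ}
    (g : U → Fin l → N → ℝ) :
    ∑ sel : U → Fin l → N, ∏ u, ∏ j, g u j (sel u j) = ∏ u, ∏ j, ∑ n, g u j n := by
  rw [show (∏ u, ∏ j, ∑ n, g u j n) = ∏ u, ∑ φ : Fin l → N, ∏ j, g u j (φ j) by
    refine Finset.prod_congr rfl fun u _ => ?_
    exact Fintype.prod_sum (fun j n => g u j n),
    Fintype.prod_sum (fun u (φ : Fin l → N) => ∏ j, g u j (φ j))]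


/-- Random pruning to make color-`c` vertices safe.  Each copy `S ∈ D` has a
designated (color-`c`) vertex `vtx S` and an `ℓ`-tuple `nb S` of required neighbors, each drawn
from a candidate set `Cand (vtx S) j` of size at most `Δ`.  If for each vertex `u` one selects,
independently and uniformly, one candidate of each of the `ℓ` coordinates and keeps exactly the
copies whose neighbor tuple matches the selection at their designated vertex, then the expected
number of surviving copies is at least `|D|/Δ^ℓ`; hence there is `D' ⊆ D` with
`|D'| ≥ |D|/Δ^ℓ` in which any two copies sharing a designated vertex have the same neighbor
tuple (i.e. every color-`c` vertex is safe). -/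
theorem stmt16 {ι U N : Type} [Fintype U] [Fintype N] [DecidableEq U] [DecidableEq N]
    (Δ l : ℕ) (hΔ : 1 ≤ Δ) (hl : 1 ≤ l)
    (D : Finset ι) (vtx : ι → U) (nb : ι → Fin l → N)
    (Cand : U → Fin l → Finset N)
    (hne : ∀ u j, (Cand u j).Nonempty)
    (hmem : ∀ S ∈ D, ∀ j, nb S j ∈ Cand (vtx S) j)
    (hΔb : ∀ S ∈ D, ∀ j, (Cand (vtx S) j).card ≤ Δ) :
    ((D.card : ℝ) / (Δ : ℝ) ^ l ≤
      ∑ sel : U → Fin l → N,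
        (∏ u : U, ∏ j : Fin l,
            if sel u j ∈ Cand u j then (1 : ℝ) / (Cand u j).card else 0) *
          ((D.filter fun S => ∀ j, sel (vtx S) j = nb S j).card : ℝ)) ∧
    ∃ D' ⊆ D, ((D.card : ℝ) / (Δ : ℝ) ^ l ≤ (D'.card : ℝ)) ∧
      ∀ S ∈ D', ∀ S' ∈ D', vtx S = vtx S' → nb S = nb S' := by
  set w : U → Fin l → N → ℝ :=
    fun u j n => if n ∈ Cand u j then (1 : ℝ) / (Cand u j).card else 0 with hw
  have hΔpos : (0 : ℝ) < (Δ : ℝ) := by exact_mod_cast hΔ.trans_lt' Nat.zero_lt_one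
  have hwnonneg : ∀ u j n, 0 ≤ w u j n := by
    intro u j n
    simp only [hw]
    split <;> positivity
  have hwsum : ∀ u j, ∑ n, w u j n = 1 := by
    intro u j
    simp only [hw]
    rw [Finset.sum_ite_mem, Finset.univ_inter, Finset.sum_const, nsmul_eq_mul]
    have hc : (0 : ℝ) < (Cand u j).card := by exact_mod_cast (hne u j).card_pos
    field_simp
  have hWnonneg : ∀ sel : U → Fin l → N, 0 ≤ ∏ u, ∏ j, w u j (sel u j) := by
    intro sel
    exact Finset.prod_nonneg fun u _ => Finset.prod_nonneg fun j _ => hwnonneg u j _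
  have hW1 : ∑ sel : U → Fin l → N, ∏ u, ∏ j, w u j (sel u j) = 1 := by
    rw [sumA w]
    simp [hwsum]
  -- key computation per copy
  have key : ∀ S ∈ D,
      ∑ sel : U → Fin l → N, (∏ u, ∏ j, w u j (sel u j)) *
        (if (∀ j, sel (vtx S) j = nb S j) then (1 : ℝ) else 0)
      = ∏ j, (1 : ℝ) / ((Cand (vtx S) j).card : ℝ) := by
    intro S hS
    have h1 : ∀ sel : U → Fin l → N,
        (∏ u, ∏ j, w u j (sel u j)) * (if (∀ j, sel (vtx S) j = nb S j) then (1 : ℝ) else 0)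
        = ∏ u, ∏ j, (if u = vtx S then (if sel u j = nb S j then w u j (sel u j) else 0)
            else w u j (sel u j)) := by
      intro sel
      by_cases h : ∀ j, sel (vtx S) j = nb S j
      · rw [if_pos h, mul_one]
        refine Finset.prod_congr rfl ?_
        intro u _
        refine Finset.prod_congr rfl ?_
        intro j _
        by_cases hu : u = vtx S
        · subst hu; simp [h j]
        · simp [hu]
      · simp only [h, if_false, mul_zero]
        symm
        push_neg at h; obtain ⟨j, hj⟩ := h
        refine Finset.prod_eq_zero (Finset.mem_univ (vtx S)) ?_
        refine Finset.prod_eq_zero (Finset.mem_univ j) ?_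
        simp [hj]
    rw [Finset.sum_congr rfl fun sel _ => h1 sel,
      sumA (fun u j n => if u = vtx S then (if n = nb S j then w u j n else 0) else w u j n)]
    rw [Finset.prod_eq_single (vtx S)
      (fun u _ hu => by simp [hu, hwsum]) (fun h => absurd (Finset.mem_univ _) h)]
    refine Finset.prod_congr rfl fun j _ => ?_
    simp only [if_true]
    rw [Finset.sum_ite_eq' Finset.univ (nb S j) (fun n => w (vtx S) j n)]
    simp [hw, hmem S hS j]
  -- the expectation bound
  have part1 : (D.card : ℝ) / (Δ : ℝ) ^ l ≤
      ∑ sel : U → Fin l → N, (∏ u, ∏ j, w u j (sel u j)) *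
        ((D.filter fun S => ∀ j, sel (vtx S) j = nb S j).card : ℝ) := by
    have hswap : ∑ sel : U → Fin l → N, (∏ u, ∏ j, w u j (sel u j)) *
        ((D.filter fun S => ∀ j, sel (vtx S) j = nb S j).card : ℝ)
        = ∑ S ∈ D, ∑ sel : U → Fin l → N, (∏ u, ∏ j, w u j (sel u j)) *
            (if (∀ j, sel (vtx S) j = nb S j) then (1 : ℝ) else 0) := by
      rw [Finset.sum_comm]
      refine Finset.sum_congr rfl fun sel _ => ?_
      rw [Finset.card_filter, ← Finset.mul_sum]
      push_cast [apply_ite (Nat.cast : ℕ → ℝ)]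
      rfl
    rw [hswap, Finset.sum_congr rfl key]
    have hterm : ∀ S ∈ D, (1 : ℝ) / (Δ : ℝ) ^ l ≤ ∏ j, (1 : ℝ) / ((Cand (vtx S) j).card : ℝ) := by
      intro S hS
      have : ∏ _j : Fin l, ((1 : ℝ) / Δ) ≤ ∏ j : Fin l, (1 : ℝ) / ((Cand (vtx S) j).card : ℝ) := by
        refine Finset.prod_le_prod (fun j _ => by positivity) fun j _ => ?_
        refine one_div_le_one_div_of_le ?_ ?_
        · exact_mod_cast (hne (vtx S) j).card_pos
        · exact_mod_cast hΔb S hS j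
      calc (1 : ℝ) / (Δ : ℝ) ^ l = ∏ _j : Fin l, ((1 : ℝ) / Δ) := by
            rw [Finset.prod_const, Finset.card_univ, Fintype.card_fin, div_pow, one_pow]
        _ ≤ _ := this
    calc (D.card : ℝ) / (Δ : ℝ) ^ l = ∑ _S ∈ D, (1 : ℝ) / (Δ : ℝ) ^ l := by
          rw [Finset.sum_const, nsmul_eq_mul]; ring
      _ ≤ _ := Finset.sum_le_sum hterm
  refine ⟨part1, ?_⟩
  -- averaging: some selection attains the bound
  have hex : ∃ sel : U → Fin l → N, (D.card : ℝ) / (Δ : ℝ) ^ l ≤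
      ((D.filter fun S => ∀ j, sel (vtx S) j = nb S j).card : ℝ) := by
    by_contra hcon
    push_neg at hcon
    obtain ⟨sel₀, -, hpos⟩ : ∃ sel ∈ (Finset.univ : Finset (U → Fin l → N)), (0 : ℝ) < ∏ u, ∏ j, w u j (sel u j) := by
      refine Finset.exists_lt_of_sum_lt ?_
      rw [hW1, Finset.sum_const_zero]; norm_num
    have hlt : ∑ sel : U → Fin l → N, (∏ u, ∏ j, w u j (sel u j)) *
        ((D.filter fun S => ∀ j, sel (vtx S) j = nb S j).card : ℝ)
        < ∑ sel : U → Fin l → N, (∏ u, ∏ j, w u j (sel u j)) * ((D.card : ℝ) / (Δ : ℝ) ^ l) := by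
      refine Finset.sum_lt_sum
        (fun sel _ => mul_le_mul_of_nonneg_left (hcon sel).le (hWnonneg sel))
        ⟨sel₀, Finset.mem_univ _, mul_lt_mul_of_pos_left (hcon sel₀) hpos⟩
    rw [← Finset.sum_mul, hW1, one_mul] at hlt
    exact absurd part1 (not_le.mpr hlt)
  obtain ⟨sel, hsel⟩ := hex
  refine ⟨D.filter fun S => ∀ j, sel (vtx S) j = nb S j, Finset.filter_subset _ _, hsel, ?_⟩
  intro S hS S' hS' hv
  funext j
  rw [← (Finset.mem_filter.mp hS).2 j, hv, (Finset.mem_filter.mp hS').2 j]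
end
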